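/- arXiv:2506.10473 — 7 statements merged into one kernel-verified Lean document; each statement's English description precedes it below -/
import Mathlib

section
/- Let m ≥ 1 be an integer and P a polynomial in N variables. If ξ ∈ ℝ^N \ {0} is such that Δ^m_ξ P = 0 identically on ℝ^N, then the m-th directional derivative ∂^m_ξ P vanishes identically. -/
open MeasureTheory

/-- The `m`-th iterated difference operator. -/
def deltaIter {E : Type*} [AddCommGroup E] (h : E) : ℕ → (E → ℝ) → E → ℝ
  | 0, f => f
  | m + 1, f => fun x => deltaIter h m f (x + h) - deltaIter h m f x

section Aux

open Polynomial

/-- The one-variable forward difference operator with step `1`. -/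
noncomputable def delta1 (p : ℝ[X]) : ℝ[X] := p.comp (X + C 1) - p

lemma delta1_eval (p : ℝ[X]) (t : ℝ) : (delta1 p).eval t = p.eval (t + 1) - p.eval t := by
  simp [delta1]

lemma delta1_comm (p : ℝ[X]) : delta1 (derivative p) = derivative (delta1 p) := by
  simp [delta1, Polynomial.derivative_comp]

lemma deriv_eq_zero_of_delta1 (p : ℝ[X]) (h : delta1 p = 0) : derivative p = 0 := by
  have hper : ∀ t : ℝ, p.eval (t + 1) = p.eval t := by
    intro t
    have := congrArg (Polynomial.eval t) h
    simp [delta1_eval] at this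
    linarith
  have hnat : ∀ n : ℕ, p.eval (n : ℝ) = p.eval 0 := by
    intro n
    induction n with
    | zero => simp
    | succ k ih => push_cast; rw [hper]; push_cast at ih; exact ih
  have hp : p - C (p.eval 0) = 0 := by
    apply Polynomial.eq_zero_of_infinite_isRoot
    apply Set.Infinite.mono (s := Set.range ((↑) : ℕ → ℝ))
    · rintro x ⟨n, rfl⟩
      simp [Polynomial.IsRoot, hnat n]
    · exact Set.infinite_range_of_injective Nat.cast_injective
  have : p = C (p.eval 0) := by linear_combination (norm := ring_nf) hp
  rw [this]; simp

lemma delta1_comm_iterate (k : ℕ) (p : ℝ[X]) :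
    derivative^[k] (delta1 p) = delta1 (derivative^[k] p) := by
  induction k with
  | zero => rfl
  | succ j ihj => rw [Function.iterate_succ_apply', ihj, Function.iterate_succ_apply', delta1_comm]

lemma iterate_deriv_eq_zero (m : ℕ) : ∀ p : ℝ[X], delta1^[m] p = 0 → derivative^[m] p = 0 := by
  induction m with
  | zero => intro p h; exact h
  | succ k ih =>
    intro p h
    rw [Function.iterate_succ_apply] at h
    have h2 := ih _ h
    rw [delta1_comm_iterate] at h2
    rw [Function.iterate_succ_apply']
    exact deriv_eq_zero_of_delta1 _ h2

variable {E : Type*} [NormedAddCommGroup E] [NormedSpace ℝ E]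

lemma deriv_line (f : E → ℝ) (hf : ContDiff ℝ (⊤ : ℕ∞) f) (y ξ : E) :
    deriv (fun t : ℝ => f (y + t • ξ)) = fun t => fderiv ℝ f (y + t • ξ) ξ := by
  funext t
  have hline : HasDerivAt (fun t : ℝ => y + t • ξ) ξ t := by
    simpa using ((hasDerivAt_id t).smul_const ξ).const_add y
  exact ((hf.differentiable (by simp) (y + t • ξ)).hasFDerivAt.comp_hasDerivAt t hline).deriv

lemma key (ξ : E) : ∀ (n : ℕ) (f : E → ℝ), ContDiff ℝ (⊤ : ℕ∞) f → ∀ (y : E) (t : ℝ),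
    iteratedFDeriv ℝ n f (y + t • ξ) (fun _ => ξ)
      = iteratedDeriv n (fun s : ℝ => f (y + s • ξ)) t := by
  intro n
  induction n with
  | zero => intro f hf y t; simp [iteratedFDeriv_zero_apply]
  | succ k ih =>
    intro f hf y t
    have hfd : ContDiff ℝ (⊤ : ℕ∞) (fderiv ℝ f) := hf.fderiv_right (by simp)
    have hstep : iteratedFDeriv ℝ (k+1) f (y + t • ξ) (fun _ => ξ)
        = iteratedFDeriv ℝ k (fun z => fderiv ℝ f z ξ) (y + t • ξ) (fun _ => ξ) := by
      rw [iteratedFDeriv_succ_apply_right]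
      have hcomp := (ContinuousLinearMap.apply ℝ ℝ ξ).iteratedFDeriv_comp_left
        (f := fderiv ℝ f) (hfd.contDiffAt (x := y + t • ξ)) (i := k) (by exact_mod_cast le_top)
      have : (fun z => fderiv ℝ f z ξ) = (ContinuousLinearMap.apply ℝ ℝ ξ) ∘ (fderiv ℝ f) := rfl
      rw [this, hcomp]
      congr 1
    rw [hstep, ih _ (hfd.clm_apply contDiff_const) y t, iteratedDeriv_succ']
    congr 1
    rw [deriv_line f hf]

lemma contDiff_mvpoly {N : ℕ} (P : MvPolynomial (Fin N) ℝ) :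
    ContDiff ℝ (⊤ : ℕ∞) (fun x : EuclideanSpace ℝ (Fin N) => MvPolynomial.eval (fun i => x i) P) := by
  induction P using MvPolynomial.induction_on with
  | C a => simpa using contDiff_const (c := a)
  | add p q hp hq => simpa [MvPolynomial.eval_add] using hp.add hq
  | mul_X p n hp =>
    have hc : ContDiff ℝ (⊤ : ℕ∞) (fun x : EuclideanSpace ℝ (Fin N) => x n) :=
      (EuclideanSpace.proj n : EuclideanSpace ℝ (Fin N) →L[ℝ] ℝ).contDiff
    simpa [MvPolynomial.eval_mul] using hp.mul hc

lemma line_eval {N : ℕ} (P : MvPolynomial (Fin N) ℝ) (x ξ : EuclideanSpace ℝ (Fin N)) (t : ℝ) :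
    Polynomial.eval t
      (MvPolynomial.aeval (fun i => Polynomial.C (x i) + Polynomial.C (ξ i) * Polynomial.X) P)
      = MvPolynomial.eval (fun i => (x + t • ξ) i) P := by
  induction P using MvPolynomial.induction_on with
  | C a => simp
  | add p q hp hq => simp [hp, hq]
  | mul_X p n hp =>
    simp only [map_mul, MvPolynomial.aeval_X, MvPolynomial.eval_mul, MvPolynomial.eval_X,
      Polynomial.eval_mul, Polynomial.eval_add, Polynomial.eval_C, Polynomial.eval_X, hp]
    have : (x + t • ξ) n = x n + t * ξ n := by
      simp [PiLp.add_apply, PiLp.smul_apply, smul_eq_mul]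
    rw [this]; ring

lemma dIter_eq {E : Type*} [AddCommGroup E] [Module ℝ E] (f : E → ℝ) (x ξ : E) (q : ℝ[X])
    (hq : ∀ s : ℝ, q.eval s = f (x + s • ξ)) :
    ∀ (m : ℕ) (t : ℝ), (delta1^[m] q).eval t = deltaIter ξ m f (x + t • ξ) := by
  intro m
  induction m with
  | zero => intro t; exact hq t
  | succ k ih =>
    intro t
    rw [Function.iterate_succ_apply', delta1_eval, ih, ih]
    show _ = deltaIter ξ k f ((x + t • ξ) + ξ) - deltaIter ξ k f (x + t • ξ)
    congr 2
    rw [add_smul, one_smul, add_assoc]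

lemma iteratedDeriv_polyeval (m : ℕ) : ∀ p : ℝ[X],
    iteratedDeriv m (fun t : ℝ => p.eval t) = fun t => ((derivative (R := ℝ))^[m] p).eval t := by
  induction m with
  | zero => intro p; simp
  | succ k ih =>
    intro p
    rw [iteratedDeriv_succ']
    have : deriv (fun t : ℝ => p.eval t) = fun t : ℝ => (derivative p).eval t := by
      funext t; exact Polynomial.deriv (p := p)
    rw [this, ih, Function.iterate_succ_apply]

end Aux

/-- If `Δ^m_ξ P ≡ 0` for a polynomial `P` and `ξ ≠ 0`, then the `m`-th directional
derivative `∂^m_ξ P` vanishes identically. -/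
theorem stmt7 {N : ℕ} (m : ℕ) (hm : 1 ≤ m) (P : MvPolynomial (Fin N) ℝ)
    (ξ : EuclideanSpace ℝ (Fin N)) (hξ : ξ ≠ 0)
    (hΔ : deltaIter ξ m (fun x => MvPolynomial.eval (fun i => x i) P) = 0) :
    ∀ x : EuclideanSpace ℝ (Fin N),
      iteratedFDeriv ℝ m (fun x => MvPolynomial.eval (fun i => x i) P) x (fun _ => ξ) = 0 := by
  intro x
  have hf : ContDiff ℝ (⊤ : ℕ∞) (fun x : EuclideanSpace ℝ (Fin N) => MvPolynomial.eval (fun i => x i) P) :=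
    contDiff_mvpoly P
  set q : Polynomial ℝ :=
    MvPolynomial.aeval (fun i => Polynomial.C (x i) + Polynomial.C (ξ i) * Polynomial.X) P with hq_def
  have hq : ∀ s : ℝ, q.eval s =
      (fun x : EuclideanSpace ℝ (Fin N) => MvPolynomial.eval (fun i => x i) P) (x + s • ξ) :=
    fun s => line_eval P x ξ s
  have hz : delta1^[m] q = 0 := by
    apply Polynomial.funext
    intro r
    rw [dIter_eq (fun x : EuclideanSpace ℝ (Fin N) => MvPolynomial.eval (fun i => x i) P)
      x ξ q hq m r, hΔ]
    simp
  have hder := iterate_deriv_eq_zero m q hz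
  have hkey := key ξ m _ hf x 0
  simp only [zero_smul, add_zero] at hkey
  rw [hkey]
  have heq : (fun s : ℝ =>
      (fun x : EuclideanSpace ℝ (Fin N) => MvPolynomial.eval (fun i => x i) P) (x + s • ξ))
      = fun s => q.eval s := funext fun s => (hq s).symm
  rw [heq, iteratedDeriv_polyeval, hder]
  simp
end

section
/- Let 1 ≤ p < ∞ and let f be a weakly differentiable function on ℝ^N with ∇f ∈ L^p. Suppose f minimizes the L^p norm of the gradient in its SL_N orbit, i.e. ‖∇f‖_{L^p} = min{‖∇(f∘T)‖_{L^p} : T ∈ SL_N(ℝ)}. Then for each coordinate direction e_i, (1/N) ∫_{ℝ^N} |∇f|^p dx = ∫_{ℝ^N} |∇f|^{p−2} |∂_i f|^2 dx. -/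
open MeasureTheory Classical Matrix
open scoped ENNReal

private lemma rpow_half_sq (x : ℝ) (p : ℝ) (hx : 0 ≤ x) : (x ^ (2:ℕ)) ^ (p/2) = x ^ p := by
  rw [← Real.rpow_natCast x 2, ← Real.rpow_mul hx]
  congr 1; push_cast; ring

private lemma eucl_sum_sq {N : ℕ} (i : Fin N) (v : EuclideanSpace ℝ (Fin N)) :
    (v i)^2 + ∑ j ∈ Finset.univ.erase i, (v j)^2 = ‖v‖^(2:ℕ) := by
  rw [EuclideanSpace.norm_eq, Real.sq_sqrt (by positivity),
    ← Finset.add_sum_erase _ _ (Finset.mem_univ i)]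
  simp [Real.norm_eq_abs, sq_abs]

private lemma eucl_eval_cont {N : ℕ} (j : Fin N) :
    Continuous fun v : EuclideanSpace ℝ (Fin N) => v j := by
  simpa using (EuclideanSpace.proj (𝕜 := ℝ) j).continuous

private lemma mp_of_det_one {N : ℕ} (M : Matrix (Fin N) (Fin N) ℝ) (h : M.det = 1) :
    MeasurePreserving (toEuclideanLin M) (volume : Measure (EuclideanSpace ℝ (Fin N))) volume := by
  have hd : LinearMap.det (toEuclideanLin M : EuclideanSpace ℝ (Fin N) →ₗ[ℝ] _) = 1 := by
    rw [toEuclideanLin_eq_toLin, LinearMap.det_toLin]; exact h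
  constructor
  · exact (LinearMap.continuous_of_finiteDimensional _).measurable
  · rw [Measure.map_linearMap_addHaar_eq_smul_addHaar _ (by rw [hd]; norm_num), hd]
    simp

private lemma norm_diag {N : ℕ} (dv : Fin N → ℝ) (v : EuclideanSpace ℝ (Fin N)) :
    ‖toEuclideanLin (Matrix.diagonal dv) v‖ = Real.sqrt (∑ j, (dv j)^2 * (v j)^2) := by
  rw [EuclideanSpace.norm_eq]
  congr 1
  apply Finset.sum_congr rfl
  intro j _
  have h : (toEuclideanLin (Matrix.diagonal dv) v) j = dv j * v j := by
    simp [toEuclideanLin_apply, Matrix.mulVec_diagonal]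
  rw [h, Real.norm_eq_abs, abs_mul, mul_pow, sq_abs, sq_abs]

private lemma int_rpow_eq {α : Type*} [MeasurableSpace α] (μ : Measure α) (p : ℝ) (hp : 0 < p)
    (u : α → ℝ) (hu : AEStronglyMeasurable u μ) (h0 : ∀ x, 0 ≤ u x) :
    ∫ x, u x ^ p ∂μ = (∫⁻ x, (‖u x‖₊ : ℝ≥0∞) ^ p ∂μ).toReal := by
  rw [integral_eq_lintegral_of_nonneg_ae (Filter.Eventually.of_forall fun x => Real.rpow_nonneg (h0 x) p)
    ((hu.aemeasurable.pow aemeasurable_const).aestronglyMeasurable)]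
  congr 1
  apply lintegral_congr
  intro x
  rw [show (‖u x‖₊ : ℝ≥0∞) = ENNReal.ofReal (u x) from Real.enorm_eq_ofReal (h0 x), ENNReal.ofReal_rpow_of_nonneg (h0 x) hp.le]

private lemma lint_lt_top {α : Type*} [MeasurableSpace α] {μ : Measure α} {p : ℝ} (hp : 0 < p)
    {u : α → ℝ} (hu : MemLp u (ENNReal.ofReal p) μ) :
    ∫⁻ x, (‖u x‖₊ : ℝ≥0∞) ^ p ∂μ < ⊤ := by
  have hq0 : (ENNReal.ofReal p) ≠ 0 := by
    simp only [ne_eq, ENNReal.ofReal_eq_zero, not_le]; linarith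
  have h1 := hu.eLpNorm_lt_top
  rw [eLpNorm_eq_lintegral_rpow_enorm_toReal hq0 ENNReal.ofReal_ne_top,
    ENNReal.toReal_ofReal hp.le] at h1
  change (∫⁻ x, (‖u x‖₊ : ℝ≥0∞) ^ p ∂μ) ^ (1/p) < ⊤ at h1
  by_contra h
  rw [not_lt, top_le_iff] at h
  rw [h, ENNReal.top_rpow_of_pos (by positivity)] at h1
  exact lt_irrefl _ h1

private lemma deriv_bound (p c A B E1 E2 W : ℝ) (hp : 1 ≤ p) (hc0 : 0 < c) (hc1 : c ≤ 1)
    (hA : 0 ≤ A) (hB : 0 ≤ B) (hE1 : 0 < E1) (hE2 : 0 < E2)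
    (he1 : E1 ≤ Real.exp 2) (he2 : E2 ≤ Real.exp 2)
    (hAB : (A + B)^(p/2) = W^p) (hS : 0 < A*E1 + B*E2) :
    |(p/2 * (A*E1+B*E2)^(p/2-1)) * (A*(E1*2) + B*(E2*(-(2*c))))| ≤ p * (Real.exp p * W^p) := by
  have hp0 : (0:ℝ) < p := lt_of_lt_of_le one_pos hp
  have hR : 0 ≤ (A*E1+B*E2)^(p/2-1) := Real.rpow_nonneg hS.le _
  have key1 : (A*E1+B*E2)^(p/2-1) * (A*E1+B*E2) = (A*E1+B*E2)^(p/2) := by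
    rw [← Real.rpow_add_one hS.ne']; congr 1; ring
  have hSle : A*E1+B*E2 ≤ Real.exp 2 * (A+B) := by
    nlinarith [mul_le_mul_of_nonneg_left he1 hA, mul_le_mul_of_nonneg_left he2 hB]
  have key2 : (A*E1+B*E2)^(p/2) ≤ Real.exp p * W^p := by
    calc (A*E1+B*E2)^(p/2) ≤ (Real.exp 2 * (A+B))^(p/2) :=
          Real.rpow_le_rpow hS.le hSle (by positivity)
      _ = (Real.exp 2)^(p/2) * (A+B)^(p/2) :=
          Real.mul_rpow (Real.exp_pos 2).le (by nlinarith)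
      _ = Real.exp p * W^p := by
          rw [hAB, ← Real.exp_mul]
          congr 2; ring
  have hDb : |A*(E1*2) + B*(E2*(-(2*c)))| ≤ 2*(A*E1+B*E2) := by
    have hae := mul_nonneg hA hE1.le
    have hbe := mul_nonneg hB hE2.le
    have hx1 := mul_nonneg (sub_nonneg.2 hc1) hbe
    have hx2 := mul_nonneg hc0.le hbe
    rw [abs_le]
    constructor <;> nlinarith [hae, hbe, hx1, hx2]
  have habs1 : |p/2 * (A*E1+B*E2)^(p/2-1)| = p/2 * (A*E1+B*E2)^(p/2-1) :=
    abs_of_nonneg (mul_nonneg (by positivity) hR)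
  rw [abs_mul, habs1]
  calc p/2 * (A*E1+B*E2)^(p/2-1) * |A*(E1*2) + B*(E2*(-(2*c)))|
      ≤ p/2 * (A*E1+B*E2)^(p/2-1) * (2*(A*E1+B*E2)) :=
        mul_le_mul_of_nonneg_left hDb (mul_nonneg (by positivity) hR)
    _ = p * ((A*E1+B*E2)^(p/2-1) * (A*E1+B*E2)) := by ring
    _ = p * (A*E1+B*E2)^(p/2) := by rw [key1]
    _ ≤ p * (Real.exp p * W^p) := mul_le_mul_of_nonneg_left key2 hp0.le

/-- If `f` is weakly differentiable with weak gradient `G ∈ L^p`, and `f` minimizes the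
`L^p` norm of the gradient in its `SL_N` orbit, then for each coordinate direction,
`(1/N) ∫ |∇f|^p = ∫ |∇f|^{p-2} |∂_i f|^2`. -/
theorem stmt11 {N : ℕ} (hN : 1 ≤ N) (p : ℝ) (hp : 1 ≤ p)
    (f : EuclideanSpace ℝ (Fin N) → ℝ)
    (G : EuclideanSpace ℝ (Fin N) → EuclideanSpace ℝ (Fin N))
    (hf : LocallyIntegrable f volume)
    (hG : MemLp G (ENNReal.ofReal p) volume)
    -- `G` is the weak gradient of `f`:
    (hweak : ∀ φ : EuclideanSpace ℝ (Fin N) → ℝ, ContDiff ℝ (⊤ : ℕ∞) φ → HasCompactSupport φ →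
      ∀ i : Fin N, ∫ x, f x * fderiv ℝ φ x (EuclideanSpace.single i 1) = - ∫ x, G x i * φ x)
    -- minimality of the gradient `L^p` norm in the `SL_N` orbit
    -- (`∇(f ∘ T)(x) = Tᵀ ∇f (T x)`):
    (hmin : ∀ T : Matrix.SpecialLinearGroup (Fin N) ℝ,
      eLpNorm (fun x => ‖G x‖) (ENNReal.ofReal p) volume ≤
        eLpNorm (fun x =>
          ‖Matrix.toEuclideanLin ((T : Matrix (Fin N) (Fin N) ℝ)ᵀ)
            (G (Matrix.toEuclideanLin (T : Matrix (Fin N) (Fin N) ℝ) x))‖)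
          (ENNReal.ofReal p) volume) :
    ∀ i : Fin N,
      (1 / N : ℝ) * ∫ x, ‖G x‖ ^ p =
        ∫ x, (if G x = 0 then 0 else ‖G x‖ ^ (p - 2) * (G x i) ^ 2) := by
  intro i
  have hp0 : (0:ℝ) < p := lt_of_lt_of_le one_pos hp
  have hq0 : (ENNReal.ofReal p) ≠ 0 := by
    simp only [ne_eq, ENNReal.ofReal_eq_zero, not_le]; linarith
  have hqtop : (ENNReal.ofReal p) ≠ ⊤ := ENNReal.ofReal_ne_top
  have hqp : (ENNReal.ofReal p).toReal = p := ENNReal.toReal_ofReal hp0.le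
  rcases eq_or_lt_of_le hN with h1 | h2
  · -- N = 1 : pointwise identity
    have hN1 : N = 1 := h1.symm
    subst hN1
    have hval : ∀ x, (if G x = 0 then (0:ℝ) else ‖G x‖ ^ (p-2) * (G x i)^2) = ‖G x‖ ^ p := by
      intro x
      by_cases h : G x = 0
      · simp [h, Real.zero_rpow hp0.ne']
      · have hi : i = 0 := Subsingleton.elim _ _
        have hnorm : ‖G x‖ = |G x 0| := by
          rw [EuclideanSpace.norm_eq, Fin.sum_univ_one, Real.norm_eq_abs, sq_abs]
          exact Real.sqrt_sq_eq_abs _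
        have hx0 : G x 0 ≠ 0 := by
          intro h0
          apply h
          ext j
          have hj : j = 0 := Subsingleton.elim _ _
          rw [hj]; exact h0
        rw [if_neg h, hi, hnorm, ← sq_abs (G x 0), ← Real.rpow_natCast |G x 0| 2,
          ← Real.rpow_add (abs_pos.2 hx0)]
        congr 1; push_cast; ring
    simp only [hval]
    norm_num
  · -- main case : 2 ≤ N
    have hn2 : (2:ℝ) ≤ (N:ℝ) := by exact_mod_cast h2
    have hn1 : (0:ℝ) < (N:ℝ) - 1 := by linarith
    set c : ℝ := 1 / ((N:ℝ) - 1) with hc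
    have hc0 : 0 < c := by positivity
    have hc1 : c ≤ 1 := by rw [hc, div_le_one hn1]; linarith
    have hNc : c * ((N:ℝ) - 1) = 1 := by rw [hc]; field_simp
    set a : EuclideanSpace ℝ (Fin N) → ℝ := fun v => (v i)^2 with ha
    set b : EuclideanSpace ℝ (Fin N) → ℝ :=
      fun v => ∑ j ∈ Finset.univ.erase i, (v j)^2 with hb
    set s : ℝ → EuclideanSpace ℝ (Fin N) → ℝ :=
      fun t v => a v * Real.exp (2*t) + b v * Real.exp (-(2*c)*t) with hs
    have ha0 : ∀ v : EuclideanSpace ℝ (Fin N), 0 ≤ a v := fun v => sq_nonneg _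
    have hb0 : ∀ v : EuclideanSpace ℝ (Fin N), 0 ≤ b v := fun v =>
      Finset.sum_nonneg fun j _ => sq_nonneg _
    have hab : ∀ v : EuclideanSpace ℝ (Fin N), a v + b v = ‖v‖^(2:ℕ) := fun v => eucl_sum_sq i v
    have habp : ∀ v : EuclideanSpace ℝ (Fin N), (a v + b v)^(p/2) = ‖v‖^p := fun v => by
      rw [hab v, rpow_half_sq _ _ (norm_nonneg v)]
    have hs0 : ∀ (t : ℝ) (v : EuclideanSpace ℝ (Fin N)), 0 ≤ s t v := fun t v => by
      have e1 := (Real.exp_pos (2*t)).le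
      have e2 := (Real.exp_pos (-(2*c)*t)).le
      simp only [hs]
      nlinarith [mul_nonneg (ha0 v) e1, mul_nonneg (hb0 v) e2]
    have hspos : ∀ (t : ℝ) (v : EuclideanSpace ℝ (Fin N)), v ≠ 0 → 0 < s t v := by
      intro t v hv
      have hsum : 0 < a v + b v := by
        rw [hab v]; exact pow_pos (norm_pos_iff.2 hv) 2
      have e1 := Real.exp_pos (2*t)
      have e2 := Real.exp_pos (-(2*c)*t)
      simp only [hs]
      rcases lt_or_eq_of_le (ha0 v) with h | h
      · nlinarith [mul_nonneg (hb0 v) e2.le]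
      · nlinarith [mul_pos (show (0:ℝ) < b v by nlinarith) e2, mul_nonneg (ha0 v) e1.le]
    have hs0G : ∀ v : EuclideanSpace ℝ (Fin N), s 0 v = a v + b v := fun v => by
      simp [hs]
    have hΦ0 : ∀ v : EuclideanSpace ℝ (Fin N), (s 0 v)^(p/2) = ‖v‖^p := fun v => by
      rw [hs0G v, habp v]
    -- derivative of s
    have hSd : ∀ (v : EuclideanSpace ℝ (Fin N)) (t : ℝ), HasDerivAt (fun r => s r v)
        (a v * (Real.exp (2*t) * 2) + b v * (Real.exp (-(2*c)*t) * -(2*c))) t := by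
      intro v t
      have h1 : HasDerivAt (fun r : ℝ => Real.exp (2*r)) (Real.exp (2*t) * 2) t := by
        simpa using ((hasDerivAt_id t).const_mul (2:ℝ)).exp
      have h2 : HasDerivAt (fun r : ℝ => Real.exp (-(2*c)*r)) (Real.exp (-(2*c)*t) * -(2*c)) t := by
        simpa using ((hasDerivAt_id t).const_mul (-(2*c))).exp
      exact (h1.const_mul (a v)).add (h2.const_mul (b v))
    -- full derivative
    have hΦd : ∀ (v : EuclideanSpace ℝ (Fin N)) (t : ℝ),
        HasDerivAt (fun r => (s r v)^(p/2))
          (if v = 0 then 0 else (p/2 * (s t v)^(p/2-1)) *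
            (a v * (Real.exp (2*t) * 2) + b v * (Real.exp (-(2*c)*t) * -(2*c)))) t := by
      intro v t
      by_cases hv : v = 0
      · rw [if_pos hv]
        have hz : ∀ r : ℝ, s r v = 0 := by
          intro r
          have hva : a v = 0 := by
            simp only [ha, hv]
            have : (0 : EuclideanSpace ℝ (Fin N)) i = 0 := rfl
            rw [this]; ring
          have hvb : b v = 0 := by
            simp only [hb, hv]
            apply Finset.sum_eq_zero
            intro j _
            have : (0 : EuclideanSpace ℝ (Fin N)) j = 0 := rfl
            rw [this]; ring
          simp only [hs]; rw [hva, hvb]; ring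
        have hfun : (fun r => (s r v)^(p/2)) = fun _ => (0:ℝ) := by
          funext r; rw [hz r, Real.zero_rpow (by positivity : (p/2 : ℝ) ≠ 0)]
        rw [hfun]
        exact hasDerivAt_const t 0
      · rw [if_neg hv]
        have hrpow := Real.hasDerivAt_rpow_const (x := s t v) (p := p/2)
          (Or.inl (hspos t v hv).ne')
        exact hrpow.comp t (hSd v t)
    -- uniform bound
    have hbound : ∀ (v : EuclideanSpace ℝ (Fin N)), ∀ t ∈ Metric.ball (0:ℝ) 1,
        ‖(if v = 0 then (0:ℝ) else (p/2 * (s t v)^(p/2-1)) *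
          (a v * (Real.exp (2*t) * 2) + b v * (Real.exp (-(2*c)*t) * -(2*c))))‖
          ≤ p * (Real.exp p * ‖v‖^p) := by
      intro v t ht
      by_cases hv : v = 0
      · rw [if_pos hv, hv]
        simp [Real.zero_rpow hp0.ne']
      · rw [if_neg hv]
        have htt : |t| < 1 := by rwa [Metric.mem_ball, Real.dist_eq, sub_zero] at ht
        have ht1 := abs_lt.1 htt
        have he1 : Real.exp (2*t) ≤ Real.exp 2 := Real.exp_le_exp.2 (by linarith)
        have he2 : Real.exp (-(2*c)*t) ≤ Real.exp 2 := Real.exp_le_exp.2 (by nlinarith)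
        have hS : 0 < a v * Real.exp (2*t) + b v * Real.exp (-(2*c)*t) := by
          have := hspos t v hv; simpa only [hs] using this
        rw [Real.norm_eq_abs]
        simp only [hs]
        have := deriv_bound p c (a v) (b v) (Real.exp (2*t)) (Real.exp (-(2*c)*t)) ‖v‖
          hp hc0 hc1 (ha0 v) (hb0 v) (Real.exp_pos _) (Real.exp_pos _) he1 he2 (habp v) hS
        convert this using 3 <;> ring
    -- measurability
    have hGsm : AEStronglyMeasurable G volume := hG.aestronglyMeasurable
    have hconta : Continuous (fun v : EuclideanSpace ℝ (Fin N) => a v) := by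
      simp only [ha]; exact (eucl_eval_cont i).pow 2
    have hcontb : Continuous (fun v : EuclideanSpace ℝ (Fin N) => b v) := by
      simp only [hb]
      exact continuous_finset_sum _ fun j _ => (eucl_eval_cont j).pow 2
    have hconts : ∀ t : ℝ, Continuous (fun v : EuclideanSpace ℝ (Fin N) => s t v) := by
      intro t
      simp only [hs]
      exact (hconta.mul continuous_const).add (hcontb.mul continuous_const)
    have hcontΦ : ∀ t : ℝ, Continuous (fun v : EuclideanSpace ℝ (Fin N) => (s t v)^(p/2)) :=
      fun t => (hconts t).rpow_const (fun v => Or.inr (by positivity))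
    have hFmeas : ∀ t : ℝ, AEStronglyMeasurable (fun y => (s t (G y))^(p/2)) volume :=
      fun t => (hcontΦ t).comp_aestronglyMeasurable hGsm
    have hmeasΦ' : AEStronglyMeasurable
        (fun y => if G y = 0 then (0:ℝ) else (p/2 * (s 0 (G y))^(p/2-1)) *
          (a (G y) * (Real.exp (2*0) * 2) + b (G y) * (Real.exp (-(2*c)*0) * -(2*c)))) volume := by
      have hψ : Measurable (fun v : EuclideanSpace ℝ (Fin N) => if v = 0 then (0:ℝ) else
          (p/2 * (s 0 v)^(p/2-1)) *
            (a v * (Real.exp (2*0) * 2) + b v * (Real.exp (-(2*c)*0) * -(2*c)))) := by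
        apply Measurable.ite (measurableSet_eq) measurable_const
        exact (measurable_const.mul ((hconts 0).measurable.pow measurable_const)).mul
          ((hconta.measurable.mul measurable_const).add
            (hcontb.measurable.mul measurable_const))
      exact (hψ.comp_aemeasurable hGsm.aemeasurable).aestronglyMeasurable
    -- integrability of |G|^p and bound
    have hZint : Integrable (fun x => ‖G x‖^p) volume := by
      have := hG.integrable_norm_rpow hq0 hqtop
      rwa [hqp] at this
    have hbint : Integrable (fun y => p * (Real.exp p * ‖G y‖^p)) volume :=
      (hZint.const_mul (Real.exp p)).const_mul p
    have hF0int : Integrable (fun y => (s 0 (G y))^(p/2)) volume :=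
      hZint.congr (Filter.Eventually.of_forall fun y => (hΦ0 (G y)).symm)
    -- parametric differentiation
    have hkey := hasDerivAt_integral_of_dominated_loc_of_deriv_le
      (F := fun t y => (s t (G y))^(p/2))
      (F' := fun t y => if G y = 0 then (0:ℝ) else (p/2 * (s t (G y))^(p/2-1)) *
          (a (G y) * (Real.exp (2*t) * 2) + b (G y) * (Real.exp (-(2*c)*t) * -(2*c))))
      (μ := volume) (x₀ := (0:ℝ)) (s := Metric.ball (0:ℝ) 1)
      (bound := fun y => p * (Real.exp p * ‖G y‖^p)) (Metric.ball_mem_nhds _ one_pos)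
      (Filter.Eventually.of_forall fun t => hFmeas t) hF0int hmeasΦ'
      (Filter.Eventually.of_forall fun y t ht => hbound (G y) t ht) hbint
      (Filter.Eventually.of_forall fun y t _ => hΦd (G y) t)
    -- minimality gives monotonicity
    have hmono : ∀ t : ℝ, (∫ y, (s 0 (G y))^(p/2)) ≤ ∫ y, (s t (G y))^(p/2) := by
      intro t
      set dv : Fin N → ℝ := fun j => if j = i then Real.exp t else Real.exp (-(c*t)) with hdv
      have hdi : dv i = Real.exp t := by rw [hdv]; exact if_pos rfl
      have hdet : (Matrix.diagonal dv).det = 1 := by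
        rw [Matrix.det_diagonal, ← Finset.mul_prod_erase _ _ (Finset.mem_univ i)]
        have hprod : ∏ j ∈ Finset.univ.erase i, dv j = Real.exp (-(c*t)) ^ (N-1) := by
          have h1 : ∀ j ∈ Finset.univ.erase i, dv j = Real.exp (-(c*t)) := by
            intro j hj
            rw [hdv]; exact if_neg (Finset.ne_of_mem_erase hj)
          rw [Finset.prod_congr rfl h1, Finset.prod_const,
            Finset.card_erase_of_mem (Finset.mem_univ i), Finset.card_univ, Fintype.card_fin]
        rw [hprod, hdi, ← Real.exp_nat_mul, ← Real.exp_add]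
        have hcast : ((N-1 : ℕ) : ℝ) = (N:ℝ) - 1 := by
          rw [Nat.cast_sub hN]; norm_num
        have hzero : t + ((N-1 : ℕ) : ℝ) * (-(c*t)) = 0 := by
          rw [hcast]
          have hr : t + ((N:ℝ) - 1) * -(c*t) = t * (1 - c * ((N:ℝ)-1)) := by ring
          rw [hr, hNc]; ring
        rw [hzero, Real.exp_zero]
      have hmp := mp_of_det_one (Matrix.diagonal dv) hdet
      have hnormv : ∀ v : EuclideanSpace ℝ (Fin N),
          ‖toEuclideanLin (Matrix.diagonal dv) v‖ = Real.sqrt (s t v) := by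
        intro v
        rw [norm_diag]
        congr 1
        rw [← Finset.add_sum_erase _ _ (Finset.mem_univ i)]
        have h1 : ∀ j ∈ Finset.univ.erase i,
            (dv j)^2 * (v j)^2 = Real.exp (-(2*c)*t) * (v j)^2 := by
          intro j hj
          rw [show dv j = Real.exp (-(c*t)) from by
            rw [hdv]; exact if_neg (Finset.ne_of_mem_erase hj)]
          congr 1
          rw [sq, ← Real.exp_add]
          congr 1; ring
        rw [Finset.sum_congr rfl h1, ← Finset.mul_sum, hdi]
        have h2 : (Real.exp t)^2 = Real.exp (2*t) := by
          rw [sq, ← Real.exp_add]; congr 1; ring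
        rw [h2]
        simp only [hs, ha, hb]
        ring
      have hΦnorm : ∀ v : EuclideanSpace ℝ (Fin N),
          (s t v)^(p/2) = ‖toEuclideanLin (Matrix.diagonal dv) v‖^p := by
        intro v
        rw [hnormv v, Real.sqrt_eq_rpow, ← Real.rpow_mul (hs0 t v)]
        congr 1; ring
      have hMem : MemLp (fun y => toEuclideanLin (Matrix.diagonal dv) (G y))
          (ENNReal.ofReal p) volume := by
        have hL := (LinearMap.toContinuousLinearMap
          (toEuclideanLin (Matrix.diagonal dv) :
            EuclideanSpace ℝ (Fin N) →ₗ[ℝ] EuclideanSpace ℝ (Fin N))).comp_memLp' hG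
        exact hL
      have hkey2 := hmin ⟨Matrix.diagonal dv, hdet⟩
      have hcoe : (((⟨Matrix.diagonal dv, hdet⟩ : Matrix.SpecialLinearGroup (Fin N) ℝ)) :
          Matrix (Fin N) (Fin N) ℝ) = Matrix.diagonal dv := rfl
      rw [hcoe, Matrix.diagonal_transpose] at hkey2
      have hcomp : (fun x => ‖toEuclideanLin (Matrix.diagonal dv)
            (G (toEuclideanLin (Matrix.diagonal dv) x))‖)
          = (fun y => ‖toEuclideanLin (Matrix.diagonal dv) (G y)‖) ∘
            (toEuclideanLin (Matrix.diagonal dv)) := rfl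
      rw [hcomp, eLpNorm_comp_measurePreserving hMem.aestronglyMeasurable.norm hmp] at hkey2
      rw [eLpNorm_eq_lintegral_rpow_enorm_toReal hq0 hqtop,
        eLpNorm_eq_lintegral_rpow_enorm_toReal hq0 hqtop, hqp] at hkey2
      have hkey3 : (∫⁻ x, (‖‖G x‖‖₊ : ℝ≥0∞)^p) ≤
          ∫⁻ x, (‖‖toEuclideanLin (Matrix.diagonal dv) (G x)‖‖₊ : ℝ≥0∞)^p := by
        have h5 := ENNReal.rpow_le_rpow hkey2 hp0.le
        rw [← ENNReal.rpow_mul, ← ENNReal.rpow_mul, one_div,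
          inv_mul_cancel₀ (ne_of_gt hp0), ENNReal.rpow_one, ENNReal.rpow_one] at h5
        exact h5
      have hI0 : (∫ y, (s 0 (G y))^(p/2)) = (∫⁻ x, (‖‖G x‖‖₊ : ℝ≥0∞)^p).toReal := by
        rw [← int_rpow_eq volume p hp0 (fun x => ‖G x‖) hGsm.norm (fun x => norm_nonneg _)]
        exact integral_congr_ae (Filter.Eventually.of_forall fun y => hΦ0 (G y))
      have hIt : (∫ y, (s t (G y))^(p/2)) =
          (∫⁻ x, (‖‖toEuclideanLin (Matrix.diagonal dv) (G x)‖‖₊ : ℝ≥0∞)^p).toReal := by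
        rw [← int_rpow_eq volume p hp0 (fun x => ‖toEuclideanLin (Matrix.diagonal dv) (G x)‖)
          hMem.aestronglyMeasurable.norm (fun x => norm_nonneg _)]
        exact integral_congr_ae (Filter.Eventually.of_forall fun y => hΦnorm (G y))
      rw [hI0, hIt]
      exact ENNReal.toReal_mono (lint_lt_top hp0 hMem.norm).ne hkey3
    have hloc : IsLocalMin (fun t => ∫ y, (s t (G y))^(p/2)) 0 :=
      Filter.Eventually.of_forall fun t => hmono t
    have hzero : (∫ y, (if G y = 0 then (0:ℝ) else (p/2 * (s 0 (G y))^(p/2-1)) *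
        (a (G y) * (Real.exp (2*0) * 2) + b (G y) * (Real.exp (-(2*c)*0) * -(2*c))))) = 0 :=
      hloc.hasDerivAt_eq_zero hkey.2
    -- pointwise decomposition of the derivative at 0
    have hptw : ∀ v : EuclideanSpace ℝ (Fin N),
        (if v = 0 then (0:ℝ) else (p/2 * (s 0 v)^(p/2-1)) *
          (a v * (Real.exp (2*0) * 2) + b v * (Real.exp (-(2*c)*0) * -(2*c))))
        = (p*(1+c)) * (if v = 0 then (0:ℝ) else ‖v‖^(p-2) * (v i)^2) - (p*c) * ‖v‖^p := by
      intro v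
      by_cases hv : v = 0
      · rw [if_pos hv, if_pos hv, hv]
        simp [Real.zero_rpow hp0.ne']
      · rw [if_neg hv, if_neg hv]
        have hn0 : (0:ℝ) < ‖v‖ := norm_pos_iff.2 hv
        have h1 : (s 0 v)^(p/2-1) = ‖v‖^(p-2) := by
          rw [hs0G v, hab v, ← Real.rpow_natCast ‖v‖ 2, ← Real.rpow_mul (norm_nonneg v)]
          congr 1; push_cast; ring
        have h2 : ‖v‖^p = ‖v‖^(p-2) * (a v + b v) := by
          rw [hab v, ← Real.rpow_natCast ‖v‖ 2, ← Real.rpow_add hn0]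
          congr 1; push_cast; ring
        have hav : a v = (v i)^2 := by simp only [ha]
        rw [h1, h2, ← hav]
        have e0 : Real.exp (2*0) = 1 := by norm_num
        have e0' : Real.exp (-(2*c)*0) = 1 := by norm_num
        rw [e0, e0']
        ring
    -- integrability of the RHS integrand
    have hXsm : AEStronglyMeasurable
        (fun x => if G x = 0 then (0:ℝ) else ‖G x‖^(p-2) * (G x i)^2) volume := by
      have hψ : Measurable (fun v : EuclideanSpace ℝ (Fin N) =>
          if v = 0 then (0:ℝ) else ‖v‖^(p-2) * (v i)^2) := by
        apply Measurable.ite (measurableSet_eq) measurable_const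
        exact (continuous_norm.measurable.pow measurable_const).mul
          ((eucl_eval_cont i).pow 2).measurable
      exact (hψ.comp_aemeasurable hGsm.aemeasurable).aestronglyMeasurable
    have hXle : ∀ x, ‖(if G x = 0 then (0:ℝ) else ‖G x‖^(p-2) * (G x i)^2)‖ ≤ ‖G x‖^p := by
      intro x
      by_cases h : G x = 0
      · simp [h, Real.zero_rpow hp0.ne']
      · rw [if_neg h, Real.norm_eq_abs]
        have hn0 : (0:ℝ) < ‖G x‖ := norm_pos_iff.2 h
        have hle : (G x i)^2 ≤ ‖G x‖^(2:ℕ) := by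
          rw [← eucl_sum_sq i (G x)]
          nlinarith [Finset.sum_nonneg
            (fun j (_ : j ∈ Finset.univ.erase i) => sq_nonneg (G x j))]
        have h2 : ‖G x‖^p = ‖G x‖^(p-2) * ‖G x‖^(2:ℕ) := by
          rw [← Real.rpow_natCast ‖G x‖ 2, ← Real.rpow_add hn0]
          congr 1; push_cast; ring
        rw [abs_of_nonneg (mul_nonneg (Real.rpow_nonneg hn0.le _) (sq_nonneg _)), h2]
        exact mul_le_mul_of_nonneg_left hle (Real.rpow_nonneg hn0.le _)
    have hXint : Integrable (fun x => if G x = 0 then (0:ℝ) else ‖G x‖^(p-2) * (G x i)^2)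
        volume := hZint.mono' hXsm (Filter.Eventually.of_forall hXle)
    -- split the vanishing integral
    have hsplit : (∫ y, (if G y = 0 then (0:ℝ) else (p/2 * (s 0 (G y))^(p/2-1)) *
        (a (G y) * (Real.exp (2*0) * 2) + b (G y) * (Real.exp (-(2*c)*0) * -(2*c)))))
        = (p*(1+c)) * (∫ x, (if G x = 0 then (0:ℝ) else ‖G x‖^(p-2) * (G x i)^2))
          - (p*c) * ∫ x, ‖G x‖^p := by
      rw [← integral_const_mul, ← integral_const_mul,
        ← integral_sub (hXint.const_mul _) (hZint.const_mul _)]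
      exact integral_congr_ae (Filter.Eventually.of_forall fun y => hptw (G y))
    rw [hsplit] at hzero
    -- final arithmetic
    set IX := ∫ x, (if G x = 0 then (0:ℝ) else ‖G x‖^(p-2) * (G x i)^2) with hIX
    set IZ := ∫ x, ‖G x‖^p with hIZ
    have hNne : ((N:ℝ)) ≠ 0 := by positivity
    have key : (N:ℝ) * IX = IZ := by
      have h1 : p * ((1+c) * IX) = p * (c * IZ) := by linear_combination hzero
      have h2 : (1+c) * IX = c * IZ := mul_left_cancel₀ (ne_of_gt hp0) h1
      have h3 : (1:ℝ) + c = c * (N:ℝ) := by linear_combination -hNc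
      have h4 : c * ((N:ℝ) * IX) = c * IZ := by rw [← h2, h3]; ring
      exact mul_left_cancel₀ (ne_of_gt hc0) h4
    rw [← key, one_div, inv_mul_cancel_left₀ hNne]
end

section
/- Let 2 ≤ p < ∞ and f ∈ Ẇ^{1,p}(ℝ^N) satisfy ‖∇f‖_{L^p} = min{‖∇(f∘T)‖_{L^p} : T ∈ SL_N(ℝ)}. Then for every unit vector ξ ∈ S^{N-1}, (1/√N) ‖∇f‖_{L^p} ≤ ‖∇f · ξ‖_{L^p}. -/
open MeasureTheory Classical Matrix
open scoped ENNReal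

open MeasureTheory Real Filter Set Topology Matrix
open scoped ENNReal NNReal

private lemma rpow_pred_mul' {y q : ℝ} (hy : 0 ≤ y) (hq : 0 < q) :
    y ^ (q - 1) * y = y ^ q := by
  rcases eq_or_lt_of_le hy with h | h
  · rw [← h, Real.zero_rpow hq.ne', mul_zero]
  · rw [← Real.rpow_add_one h.ne', sub_add_cancel]

private lemma core {α : Type*} [MeasurableSpace α] {μ : Measure α} {p s : ℝ}
    (hp : 2 ≤ p) (hs : 0 < s) {a b : α → ℝ}
    (ha : AEStronglyMeasurable a μ) (hb : AEStronglyMeasurable b μ)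
    (hb0 : ∀ x, 0 ≤ b x)
    (hint : Integrable (fun x => (a x ^ 2 + b x) ^ (p/2)) μ)
    (hmin : ∀ t : ℝ, ∫ x, (a x ^ 2 + b x) ^ (p/2) ∂μ ≤
      ∫ x, (Real.exp (2*t) * a x ^ 2 + Real.exp ((-2*s)*t) * b x) ^ (p/2) ∂μ) :
    s / (1+s) * ∫ x, (a x ^ 2 + b x) ^ (p/2) ∂μ ≤
      ∫ x, (a x ^ 2 + b x) ^ (p/2 - 1) * a x ^ 2 ∂μ := by
  have hq1 : (1:ℝ) ≤ p/2 := by linarith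
  have hq0 : (0:ℝ) < p/2 := by linarith
  set u : ℝ → α → ℝ := fun t x => Real.exp (2*t) * a x ^ 2 + Real.exp ((-2*s)*t) * b x with hu
  have hu0 : ∀ t x, 0 ≤ u t x := fun t x =>
    add_nonneg (mul_nonneg (Real.exp_pos _).le (sq_nonneg _))
      (mul_nonneg (Real.exp_pos _).le (hb0 x))
  set g : ℝ → α → ℝ := fun t x => (u t x) ^ (p/2) with hg
  set D : ℝ → α → ℝ := fun t x =>
    (Real.exp (2*t) * 2 * a x ^ 2 + Real.exp ((-2*s)*t) * (-2*s) * b x) * (p/2)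
      * u t x ^ (p/2 - 1) with hD
  -- derivative
  have hderiv : ∀ x t, HasDerivAt (fun t => g t x) (D t x) t := by
    intro x t
    have h01 : HasDerivAt (fun t : ℝ => 2*t) 2 t := by
      simpa using (hasDerivAt_id t).const_mul (2:ℝ)
    have h02 : HasDerivAt (fun t : ℝ => (-2*s)*t) (-2*s) t := by
      simpa using (hasDerivAt_id t).const_mul (-2*s)
    have h1 := (h01.exp).mul_const (a x ^ 2)
    have h2 := (h02.exp).mul_const (b x)
    have h3 := (h1.add h2).rpow_const (p := p/2) (Or.inr hq1)
    exact h3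
  -- uniform bound on the derivative for t ∈ [0,1]
  set C : ℝ := (Real.exp 2 * 2 + 2*s) * (p/2) * Real.exp 2 ^ (p/2 - 1) with hC
  set K : α → ℝ := fun x => C * (a x ^ 2 + b x) ^ (p/2) with hK
  have habm : AEStronglyMeasurable (fun x => a x ^ 2) μ := by
    exact (ha.mul ha).congr (Filter.Eventually.of_forall fun x => by simp [sq])
  have huabm : ∀ t, AEStronglyMeasurable (fun x => u t x) μ := fun t =>
    (habm.const_mul _).add (hb.const_mul _)
  have hrpow_cont : ∀ q : ℝ, 0 ≤ q → Continuous (fun y : ℝ => y ^ q) := by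
    intro q hq
    exact continuous_iff_continuousAt.2 fun y => Real.continuousAt_rpow_const y q (Or.inr hq)
  have hgm : ∀ t, AEStronglyMeasurable (fun x => g t x) μ := fun t =>
    (hrpow_cont _ hq0.le).comp_aestronglyMeasurable (huabm t)
  have hub : ∀ x, ∀ t ∈ Set.Icc (0:ℝ) 1, u t x ≤ Real.exp 2 * (a x ^ 2 + b x) := by
    intro x t ht
    have h1 : Real.exp (2*t) ≤ Real.exp 2 := Real.exp_le_exp.2 (by nlinarith [ht.1, ht.2])
    have h2 : Real.exp ((-2*s)*t) ≤ 1 := Real.exp_le_one_iff.2 (by nlinarith [ht.1, ht.2, hs])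
    have he1 : (1:ℝ) ≤ Real.exp 2 := Real.one_le_exp (by norm_num)
    have f1 := mul_le_mul_of_nonneg_right h1 (sq_nonneg (a x))
    have f2 := mul_le_mul_of_nonneg_right h2 (hb0 x)
    have f3 := mul_le_mul_of_nonneg_right he1 (hb0 x)
    simp only [hu]
    nlinarith [f1, f2, f3]
  have hDbound : ∀ x, ∀ t ∈ Set.Icc (0:ℝ) 1, |D t x| ≤ K x := by
    intro x t ht
    have hy0 : 0 ≤ a x ^ 2 + b x := add_nonneg (sq_nonneg _) (hb0 x)
    have h1 : Real.exp (2*t) ≤ Real.exp 2 := Real.exp_le_exp.2 (by nlinarith [ht.1, ht.2])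
    have h2 : Real.exp ((-2*s)*t) ≤ 1 := Real.exp_le_one_iff.2 (by nlinarith [ht.1, ht.2, hs])
    have hpow : u t x ^ (p/2 - 1) ≤ (Real.exp 2) ^ (p/2 - 1) * (a x ^ 2 + b x) ^ (p/2 - 1) := by
      rw [← Real.mul_rpow (Real.exp_pos 2).le hy0]
      exact Real.rpow_le_rpow (hu0 t x) (hub x t ht) (by linarith)
    have habs : |Real.exp (2*t) * 2 * a x ^ 2 + Real.exp ((-2*s)*t) * (-2*s) * b x|
        ≤ (Real.exp 2 * 2 + 2*s) * (a x ^ 2 + b x) := by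
      have h1' := mul_le_mul_of_nonneg_right h1 (sq_nonneg (a x))
      have h2' := mul_le_mul_of_nonneg_right h2 (hb0 x)
      have h3' : 0 ≤ Real.exp ((-2*s)*t) * b x := mul_nonneg (Real.exp_pos _).le (hb0 x)
      have h4' : (0:ℝ) ≤ Real.exp 2 := (Real.exp_pos _).le
      have h5' := sq_nonneg (a x)
      have h6' := hb0 x
      have h7' : 0 ≤ s * b x := mul_nonneg hs.le h6'
      have h8' : 0 ≤ Real.exp (2*t) * a x ^ 2 := mul_nonneg (Real.exp_pos _).le h5'
      rw [abs_le]
      constructor <;> nlinarith [hs.le]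
    have hprod : |D t x| = |Real.exp (2*t) * 2 * a x ^ 2 + Real.exp ((-2*s)*t) * (-2*s) * b x|
        * (p/2) * u t x ^ (p/2 - 1) := by
      rw [hD]
      rw [abs_mul, abs_mul]
      rw [abs_of_nonneg hq0.le, abs_of_nonneg (Real.rpow_nonneg (hu0 t x) _)]
    rw [hprod]
    have h3 : |Real.exp (2*t) * 2 * a x ^ 2 + Real.exp ((-2*s)*t) * (-2*s) * b x| * (p/2)
        * u t x ^ (p/2 - 1)
        ≤ ((Real.exp 2 * 2 + 2*s) * (a x ^ 2 + b x)) * (p/2)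
          * ((Real.exp 2) ^ (p/2 - 1) * (a x ^ 2 + b x) ^ (p/2 - 1)) := by
      apply mul_le_mul
      · exact mul_le_mul_of_nonneg_right habs hq0.le
      · exact hpow
      · exact Real.rpow_nonneg (hu0 t x) _
      · positivity
    refine h3.trans (le_of_eq ?_)
    have hsplit : (a x ^ 2 + b x) ^ (p/2 - 1) * (a x ^ 2 + b x) = (a x ^ 2 + b x) ^ (p/2) :=
      rpow_pred_mul' hy0 hq0
    simp only [hK, hC]
    rw [← hsplit]; ring
  have hg0 : ∀ x, g 0 x = (a x ^ 2 + b x) ^ (p/2) := by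
    intro x; simp [hg, hu]
  have hMVT : ∀ x, ∀ r ∈ Set.Icc (0:ℝ) 1, |g r x - g 0 x| ≤ K x * r := by
    intro x r hr
    have := Convex.norm_image_sub_le_of_norm_hasDerivWithin_le
      (f := fun t => g t x) (f' := fun t => D t x) (C := K x) (s := Set.Icc (0:ℝ) 1)
      (fun y hy => (hderiv x y).hasDerivWithinAt)
      (fun y hy => by rw [Real.norm_eq_abs]; exact hDbound x y hy)
      (convex_Icc 0 1) (Set.mem_Icc.2 ⟨le_refl 0, zero_le_one⟩) hr
    simpa [Real.norm_eq_abs, abs_of_nonneg hr.1] using this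
  set tn : ℕ → ℝ := fun n => 1 / (n + 1) with htn
  have htn_pos : ∀ n, 0 < tn n := fun n => by positivity
  have htn_le : ∀ n, tn n ≤ 1 := by
    intro n
    rw [htn]
    rw [div_le_one (by positivity)]
    linarith [Nat.cast_nonneg (α := ℝ) n]
  set F : ℕ → α → ℝ := fun n x => (g (tn n) x - g 0 x) / tn n with hF
  have hK0 : ∀ x, 0 ≤ K x := by
    intro x
    have := hDbound x 0 (Set.mem_Icc.2 ⟨le_refl 0, zero_le_one⟩)
    exact (abs_nonneg _).trans this
  have hKint : Integrable K μ := hint.const_mul C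
  have hFbound : ∀ n, ∀ x, |F n x| ≤ K x := by
    intro n x
    rw [hF]
    rw [abs_div, abs_of_pos (htn_pos n), div_le_iff₀ (htn_pos n)]
    exact hMVT x (tn n) (Set.mem_Icc.2 ⟨(htn_pos n).le, htn_le n⟩)
  have hFmeas : ∀ n, AEStronglyMeasurable (F n) μ := by
    intro n
    have he : F n = fun x => (g (tn n) x - g 0 x) * (tn n)⁻¹ := by
      funext x; simp only [hF, div_eq_mul_inv]
    rw [he]
    exact ((hgm (tn n)).sub (hgm 0)).mul_const _
  have hFlim : ∀ x, Filter.Tendsto (fun n => F n x) Filter.atTop (𝓝 (D 0 x)) := by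
    intro x
    have hsl := hasDerivAt_iff_tendsto_slope.1 (hderiv x 0)
    have htn0 : Filter.Tendsto tn Filter.atTop (𝓝[≠] (0:ℝ)) := by
      apply tendsto_nhdsWithin_of_tendsto_nhds_of_eventually_within
      · exact tendsto_one_div_add_atTop_nhds_zero_nat
      · exact Filter.Eventually.of_forall fun n => (htn_pos n).ne'
    have := hsl.comp htn0
    refine this.congr fun n => ?_
    simp [Function.comp, slope_def_field, hF]
  have hDCT := tendsto_integral_of_dominated_convergence K hFmeas hKint
    (fun n => Filter.Eventually.of_forall fun x => by
      rw [Real.norm_eq_abs]; exact hFbound n x)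
    (Filter.Eventually.of_forall hFlim)
  have hgtint : ∀ n, Integrable (fun x => g (tn n) x) μ := by
    intro n
    refine Integrable.mono (hint.add (hKint.const_mul (tn n))) (hgm (tn n))
      (Filter.Eventually.of_forall fun x => ?_)
    rw [Real.norm_eq_abs, Real.norm_eq_abs, abs_of_nonneg (Real.rpow_nonneg (hu0 _ x) _)]
    have h1 := hMVT x (tn n) (Set.mem_Icc.2 ⟨(htn_pos n).le, htn_le n⟩)
    have h2 := abs_le.1 h1
    have h3 : g (tn n) x ≤ g 0 x + K x * tn n := by linarith [h2.2]
    have h4 : (0:ℝ) ≤ (a x ^ 2 + b x) ^ (p/2) := Real.rpow_nonneg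
      (add_nonneg (sq_nonneg _) (hb0 x)) _
    have h5 : 0 ≤ tn n * K x := mul_nonneg (htn_pos n).le (hK0 x)
    calc g (tn n) x ≤ g 0 x + K x * tn n := h3
      _ ≤ |(a x ^ 2 + b x) ^ (p/2) + tn n * K x| := by
          rw [hg0 x]
          rw [abs_of_nonneg (by linarith)]
          linarith
  have hFint_nonneg : ∀ n, 0 ≤ ∫ x, F n x ∂μ := by
    intro n
    have hg0int : Integrable (fun x => g 0 x) μ := by
      refine hint.congr (Filter.Eventually.of_forall fun x => (hg0 x).symm)
    have : ∫ x, F n x ∂μ = ((∫ x, g (tn n) x ∂μ) - ∫ x, g 0 x ∂μ) / tn n := by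
      rw [hF]
      rw [integral_div, integral_sub (hgtint n) hg0int]
    rw [this]
    apply div_nonneg _ (htn_pos n).le
    have hm := hmin (tn n)
    have e0 : ∫ x, g 0 x ∂μ = ∫ x, (a x ^ 2 + b x) ^ (p/2) ∂μ :=
      integral_congr_ae (Filter.Eventually.of_forall fun x => hg0 x)
    rw [e0]
    linarith [hm]
  have hD0_nonneg : 0 ≤ ∫ x, D 0 x ∂μ := ge_of_tendsto hDCT
    (Filter.Eventually.of_forall hFint_nonneg)
  -- rearrange
  set h : α → ℝ := fun x => (a x ^ 2 + b x) ^ (p/2 - 1) * a x ^ 2 with hh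
  set k : α → ℝ := fun x => (a x ^ 2 + b x) ^ (p/2) with hk
  have hid : ∀ x, D 0 x = p * (1+s) * h x - p * s * k x := by
    intro x
    have hy0 : 0 ≤ a x ^ 2 + b x := add_nonneg (sq_nonneg _) (hb0 x)
    have hsplit : (a x ^ 2 + b x) ^ (p/2 - 1) * (a x ^ 2 + b x) = (a x ^ 2 + b x) ^ (p/2) :=
      rpow_pred_mul' hy0 hq0
    simp only [hD, hh, hk, hu]
    rw [← hsplit]
    simp [Real.exp_zero]
    ring
  have hhm : AEStronglyMeasurable h μ :=
    ((hrpow_cont _ (by linarith)).comp_aestronglyMeasurable (habm.add hb)).mul habm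
  have hhint : Integrable h μ := by
    refine Integrable.mono hint hhm (Filter.Eventually.of_forall fun x => ?_)
    have hy0 : 0 ≤ a x ^ 2 + b x := add_nonneg (sq_nonneg _) (hb0 x)
    have hw0 : 0 ≤ (a x ^ 2 + b x) ^ (p/2 - 1) := Real.rpow_nonneg hy0 _
    have h1 : h x ≤ k x := by
      simp only [hh, hk]
      rw [← rpow_pred_mul' hy0 hq0]
      exact mul_le_mul_of_nonneg_left (by nlinarith [hb0 x, sq_nonneg (a x)]) hw0
    rw [Real.norm_eq_abs, Real.norm_eq_abs, abs_of_nonneg (mul_nonneg hw0 (sq_nonneg _)),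
      abs_of_nonneg (Real.rpow_nonneg hy0 _)]
    exact h1
  have hDint : ∫ x, D 0 x ∂μ = p * (1+s) * (∫ x, h x ∂μ) - p * s * (∫ x, k x ∂μ) := by
    rw [integral_congr_ae (Filter.Eventually.of_forall hid)]
    rw [integral_sub ((hhint.const_mul _)) (hint.const_mul _),
      integral_const_mul, integral_const_mul]
  rw [hDint] at hD0_nonneg
  have hH := hD0_nonneg
  have hp0 : (0:ℝ) < p := by linarith
  rw [div_mul_eq_mul_div, div_le_iff₀ (by linarith : (0:ℝ) < 1 + s)]
  nlinarith [hH]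


private lemma exists_SL {N : ℕ} (hN2 : 2 ≤ N) (ξ : EuclideanSpace ℝ (Fin N)) (hξ : ‖ξ‖ = 1)
    (c1 c2 : ℝ) (hdet : (c1 + c2) * c1 ^ (N - 1) = 1) :
    ∃ T : Matrix.SpecialLinearGroup (Fin N) ℝ,
      ((T : Matrix (Fin N) (Fin N) ℝ)ᵀ = (T : Matrix (Fin N) (Fin N) ℝ)) ∧
      ∀ v : EuclideanSpace ℝ (Fin N),
        Matrix.toEuclideanLin (T : Matrix (Fin N) (Fin N) ℝ) v
          = c1 • v + (c2 * (inner ℝ v ξ : ℝ)) • ξ := by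
  classical
  set P : EuclideanSpace ℝ (Fin N) →ₗ[ℝ] EuclideanSpace ℝ (Fin N) :=
    { toFun := fun v => (inner ℝ v ξ : ℝ) • ξ
      map_add' := fun x y => by simp only [inner_add_left, add_smul]
      map_smul' := fun c x => by
        simp only [real_inner_smul_left, RingHom.id_apply, smul_smul] }
  set L : EuclideanSpace ℝ (Fin N) →ₗ[ℝ] EuclideanSpace ℝ (Fin N) :=
    c1 • (LinearMap.id : EuclideanSpace ℝ (Fin N) →ₗ[ℝ] EuclideanSpace ℝ (Fin N)) + c2 • P
    with hLdef
  have hLapp : ∀ v, L v = c1 • v + (c2 * (inner ℝ v ξ : ℝ)) • ξ := by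
    intro v
    simp only [hLdef, LinearMap.add_apply, LinearMap.smul_apply, LinearMap.id_apply,
      LinearMap.coe_mk, AddHom.coe_mk, smul_smul, P]
  set b := (EuclideanSpace.basisFun (Fin N) ℝ).toBasis with hbdef
  set M := LinearMap.toMatrix b b L with hMdef
  have hML : Matrix.toEuclideanLin M = L := by
    rw [hMdef, Matrix.toEuclideanLin_eq_toLin_orthonormal]
    exact Matrix.toLin_toMatrix _ _ _
  -- entries
  have hentry : ∀ i j, M i j = (if i = j then c1 else 0) + c2 * ξ j * ξ i := by
    intro i j
    rw [hMdef, LinearMap.toMatrix_apply]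
    rw [hbdef]
    rw [OrthonormalBasis.coe_toBasis_repr_apply]
    rw [OrthonormalBasis.coe_toBasis]
    rw [EuclideanSpace.basisFun_apply, EuclideanSpace.basisFun_repr, hLapp]
    have h1 : (inner ℝ (EuclideanSpace.single j (1:ℝ)) ξ : ℝ) = ξ j := by
      rw [EuclideanSpace.inner_single_left]; simp
    rw [h1]
    simp only [PiLp.add_apply, PiLp.smul_apply, EuclideanSpace.single_apply, smul_eq_mul]
    by_cases h : i = j <;> simp [h, mul_comm]
  have hsym : Mᵀ = M := by
    ext i j
    rw [Matrix.transpose_apply, hentry, hentry]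
    by_cases h : i = j
    · subst h; ring
    · rw [if_neg h, if_neg (Ne.symm h)]; ring
  -- determinant
  set i0 : Fin N := ⟨0, by omega⟩ with hi0
  have hcard : Module.finrank ℝ (EuclideanSpace ℝ (Fin N)) = Fintype.card (Fin N) := by
    rw [finrank_euclideanSpace_fin, Fintype.card_fin]
  have hortho : Orthonormal ℝ (Set.restrict {i0} (fun _ : Fin N => ξ)) := by
    constructor
    · intro i; exact hξ
    · intro i j hij
      exfalso
      apply hij
      rcases i with ⟨i, hi⟩
      rcases j with ⟨j, hj⟩
      simp only [Set.mem_singleton_iff] at hi hj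
      subst hi; subst hj; rfl
  obtain ⟨o, ho⟩ := hortho.exists_orthonormalBasis_extension_of_card_eq hcard
  have hoi0 : o i0 = ξ := ho i0 (Set.mem_singleton _)
  have hdiag : LinearMap.toMatrix o.toBasis o.toBasis L
      = Matrix.diagonal (fun j => if j = i0 then c1 + c2 else c1) := by
    ext i j
    rw [LinearMap.toMatrix_apply]
    rw [OrthonormalBasis.coe_toBasis]
    have hinner : (inner ℝ (o j) ξ : ℝ) = if j = i0 then 1 else 0 := by
      rw [← hoi0]
      rcases orthonormal_iff_ite.1 o.orthonormal j i0 with h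
      simpa using h
    rw [hLapp, hinner]
    by_cases h : j = i0
    · subst h
      rw [if_pos rfl, hoi0]
      have : c1 • ξ + (c2 * 1) • ξ = (c1 + c2) • o i0 := by rw [hoi0]; module
      rw [this]
      rw [_root_.map_smul]
      rw [Finsupp.smul_apply, OrthonormalBasis.coe_toBasis_repr_apply,
        OrthonormalBasis.repr_self]
      simp only [EuclideanSpace.single_apply, smul_eq_mul, Matrix.diagonal_apply]
      by_cases hij : i = i0 <;> simp [hij]
    · rw [if_neg h]
      have : c1 • o j + (c2 * 0) • ξ = c1 • o j := by module
      rw [this, _root_.map_smul]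
      rw [Finsupp.smul_apply, OrthonormalBasis.coe_toBasis_repr_apply,
        OrthonormalBasis.repr_self]
      simp only [EuclideanSpace.single_apply, smul_eq_mul, Matrix.diagonal_apply]
      by_cases hij : i = j <;> simp [hij, h, Ne.symm h]
  have hdetM : M.det = 1 := by
    have h1 : M.det = LinearMap.det L := by rw [hMdef]; exact LinearMap.det_toMatrix b L
    have h2 : LinearMap.det L = (LinearMap.toMatrix o.toBasis o.toBasis L).det :=
      (LinearMap.det_toMatrix _ _).symm
    rw [h1, h2, hdiag, Matrix.det_diagonal]
    rw [← Finset.mul_prod_erase Finset.univ _ (Finset.mem_univ i0)]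
    rw [if_pos rfl]
    have hconst : ∀ i ∈ Finset.univ.erase i0,
        (if i = i0 then c1 + c2 else c1) = c1 := fun i hi =>
      if_neg (Finset.ne_of_mem_erase hi)
    rw [Finset.prod_congr rfl hconst, Finset.prod_const,
      Finset.card_erase_of_mem (Finset.mem_univ _), Finset.card_univ, Fintype.card_fin]
    exact hdet
  exact ⟨⟨M, hdetM⟩, hsym, fun v => by rw [hML, hLapp]⟩

private lemma sq_rpow' {y : ℝ} (hy : 0 ≤ y) (r : ℝ) : (y^2) ^ r = y ^ (2*r) := by
  rw [← Real.rpow_natCast y 2, ← Real.rpow_mul hy]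
  norm_num

private lemma rpow_sub_two_mul_sq {y c : ℝ} (hy : 0 ≤ y) (hc : 2 < c) :
    y ^ (c-2) * y ^ 2 = y ^ c := by
  rcases eq_or_lt_of_le hy with h | h
  · rw [← h, Real.zero_rpow (by linarith), Real.zero_rpow (by linarith), zero_mul]
  · rw [← Real.rpow_natCast y 2, ← Real.rpow_add h]
    norm_num

private lemma norm_sq_map {N : ℕ} (ξ v : EuclideanSpace ℝ (Fin N)) (hξ : ‖ξ‖ = 1) (α β : ℝ) :
    ‖β • v + ((α - β) * (inner ℝ v ξ : ℝ)) • ξ‖ ^ 2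
      = α^2 * (inner ℝ v ξ : ℝ)^2 + β^2 * (‖v‖^2 - (inner ℝ v ξ : ℝ)^2) := by
  have h := norm_add_sq_real (β • v) (((α - β) * (inner ℝ v ξ : ℝ)) • ξ)
  rw [norm_smul, norm_smul] at h
  rw [real_inner_smul_left, real_inner_smul_right] at h
  rw [h, Real.norm_eq_abs, Real.norm_eq_abs, hξ]
  rw [mul_pow, mul_pow, sq_abs, sq_abs]
  ring

private lemma mp_toEuclideanLin {N : ℕ} (M : Matrix (Fin N) (Fin N) ℝ) (hdet : M.det = 1) :
    MeasurePreserving (fun x => Matrix.toEuclideanLin M x) volume volume := by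
  have hdet' : LinearMap.det (Matrix.toEuclideanLin M) = 1 := by
    rw [Matrix.toEuclideanLin_eq_toLin_orthonormal, LinearMap.det_toLin]
    exact hdet
  refine ⟨(LinearMap.continuous_of_finiteDimensional _).measurable, ?_⟩
  have h := Measure.map_linearMap_addHaar_eq_smul_addHaar
    (volume : Measure (EuclideanSpace ℝ (Fin N)))
    (f := Matrix.toEuclideanLin M) (by rw [hdet']; norm_num)
  rw [hdet'] at h
  norm_num at h
  exact h

private lemma eLpNorm_eq_ofReal {α : Type*} [MeasurableSpace α] {μ : Measure α} {p : ℝ}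
    (hp : 0 < p) {h : α → ℝ} (hint : Integrable (fun x => |h x| ^ p) μ) :
    eLpNorm h (ENNReal.ofReal p) μ = ENNReal.ofReal ((∫ x, |h x| ^ p ∂μ) ^ (1/p)) := by
  rw [eLpNorm_eq_lintegral_rpow_enorm_toReal
    (by simp [ENNReal.ofReal_eq_zero, not_le, hp]) ENNReal.ofReal_ne_top]
  rw [ENNReal.toReal_ofReal hp.le]
  have h1 : ∀ x, ‖h x‖ₑ ^ p = ENNReal.ofReal (|h x| ^ p) := by
    intro x
    rw [Real.enorm_eq_ofReal_abs, ENNReal.ofReal_rpow_of_nonneg (abs_nonneg _) hp.le]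
  rw [lintegral_congr h1]
  rw [← ofReal_integral_eq_lintegral_ofReal hint
    (Filter.Eventually.of_forall fun x => by positivity)]
  rw [← ENNReal.ofReal_rpow_of_nonneg (integral_nonneg fun x => by positivity) (by positivity)]


set_option maxHeartbeats 1000000 in
/-- If `f ∈ Ẇ^{1,p}(ℝ^N)` (with `2 ≤ p < ∞`) minimizes the `L^p` norm of the gradient in
its `SL_N` orbit, then `(1/√N) ‖∇f‖_{L^p} ≤ ‖∇f · ξ‖_{L^p}` for every unit vector `ξ`. -/
theorem stmt12 {N : ℕ} (hN : 1 ≤ N) (p : ℝ) (hp : 2 ≤ p)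
    (f : EuclideanSpace ℝ (Fin N) → ℝ)
    (G : EuclideanSpace ℝ (Fin N) → EuclideanSpace ℝ (Fin N))
    (hf : LocallyIntegrable f volume)
    (hG : MemLp G (ENNReal.ofReal p) volume)
    -- `G` is the weak gradient of `f`:
    (hweak : ∀ φ : EuclideanSpace ℝ (Fin N) → ℝ, ContDiff ℝ (⊤ : ℕ∞) φ → HasCompactSupport φ →
      ∀ i : Fin N, ∫ x, f x * fderiv ℝ φ x (EuclideanSpace.single i 1) = - ∫ x, G x i * φ x)
    -- minimality of the gradient `L^p` norm in the `SL_N` orbit: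
    (hmin : ∀ T : Matrix.SpecialLinearGroup (Fin N) ℝ,
      eLpNorm (fun x => ‖G x‖) (ENNReal.ofReal p) volume ≤
        eLpNorm (fun x =>
          ‖Matrix.toEuclideanLin ((T : Matrix (Fin N) (Fin N) ℝ)ᵀ)
            (G (Matrix.toEuclideanLin (T : Matrix (Fin N) (Fin N) ℝ) x))‖)
          (ENNReal.ofReal p) volume) :
    ∀ ξ : EuclideanSpace ℝ (Fin N), ‖ξ‖ = 1 →
      ENNReal.ofReal (1 / Real.sqrt N) * eLpNorm (fun x => ‖G x‖) (ENNReal.ofReal p) volume ≤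
        eLpNorm (fun x => (inner ℝ (G x) ξ : ℝ)) (ENNReal.ofReal p) volume := by
  intro ξ hξ
  classical
  have hp0 : (0:ℝ) < p := by linarith
  have hGm : AEStronglyMeasurable G volume := hG.1
  have ham : AEStronglyMeasurable (fun x => (inner ℝ (G x) ξ : ℝ)) volume :=
    AEStronglyMeasurable.inner hGm aestronglyMeasurable_const
  have hnormm : AEStronglyMeasurable (fun x => ‖G x‖) volume := hGm.norm
  have haG : ∀ x, |(inner ℝ (G x) ξ : ℝ)| ≤ ‖G x‖ := fun x => by
    have h := abs_real_inner_le_norm (G x) ξ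
    simpa [hξ] using h
  rcases Nat.lt_or_ge N 2 with hN1 | hN2
  · -- N = 1
    have hNeq : N = 1 := by omega
    subst hNeq
    have hone : ∀ y : EuclideanSpace ℝ (Fin 1), ‖y‖ = |y 0| := by
      intro y
      rw [EuclideanSpace.norm_eq, Fin.sum_univ_one, Real.norm_eq_abs, Real.sqrt_sq_eq_abs,
        abs_abs]
    have hinner1 : ∀ x, (inner ℝ (G x) ξ : ℝ) = G x 0 * ξ 0 := by
      intro x
      rw [PiLp.inner_apply, Fin.sum_univ_one]
      simp [RCLike.inner_apply, mul_comm]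
    have hxi : |ξ 0| = 1 := by rw [← hone ξ, hξ]
    have heq : eLpNorm (fun x => ‖G x‖) (ENNReal.ofReal p) volume
        = eLpNorm (fun x => (inner ℝ (G x) ξ : ℝ)) (ENNReal.ofReal p) volume := by
      apply eLpNorm_congr_norm_ae
      apply Filter.Eventually.of_forall
      intro x
      rw [Real.norm_eq_abs, Real.norm_eq_abs, abs_norm, hinner1, abs_mul, hxi, mul_one, hone]
    rw [heq]
    have h1 : ENNReal.ofReal (1 / Real.sqrt 1) = 1 := by
      norm_num
    rw [show ((1:ℕ):ℝ) = (1:ℝ) by norm_num, h1, one_mul]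
  · -- main case N ≥ 2
    have hN1R : (0:ℝ) < (N:ℝ) - 1 := by
      have h2 : (2:ℝ) ≤ (N:ℝ) := by exact_mod_cast hN2
      linarith
    have hNR : (0:ℝ) < (N:ℝ) := by linarith
    have hp0' : p ≠ 0 := hp0.ne'
    have hrc : ∀ r : ℝ, 0 ≤ r → Continuous (fun y : ℝ => y ^ r) := fun r hr =>
      continuous_iff_continuousAt.2 fun y => Real.continuousAt_rpow_const y r (Or.inr hr)
    set s : ℝ := 1 / ((N:ℝ) - 1) with hsdef
    have hs : 0 < s := by rw [hsdef]; positivity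
    set bf : EuclideanSpace ℝ (Fin N) → ℝ :=
      fun x => ‖G x‖^2 - (inner ℝ (G x) ξ : ℝ)^2 with hbfdef
    have hbf0 : ∀ x, 0 ≤ bf x := by
      intro x
      have h := haG x
      have h2 : (inner ℝ (G x) ξ : ℝ)^2 ≤ ‖G x‖^2 := by
        rw [← sq_abs]
        exact pow_le_pow_left₀ (abs_nonneg _) h 2
      simp only [hbfdef]
      linarith
    have hbfm : AEStronglyMeasurable bf volume := by
      have h1 : AEStronglyMeasurable
          (fun x => ‖G x‖ * ‖G x‖ - (inner ℝ (G x) ξ : ℝ) * (inner ℝ (G x) ξ : ℝ)) volume :=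
        (hnormm.mul hnormm).sub (ham.mul ham)
      exact h1.congr (Filter.Eventually.of_forall fun x => by simp only [hbfdef]; ring)
    have hsum : ∀ x, (inner ℝ (G x) ξ : ℝ)^2 + bf x = ‖G x‖^2 := by
      intro x; simp only [hbfdef]; ring
    have hIint : Integrable (fun x => ‖G x‖ ^ p) volume := by
      have h := hG.integrable_norm_rpow
        (by simp [ENNReal.ofReal_eq_zero, not_le, hp0]) ENNReal.ofReal_ne_top
      simpa [ENNReal.toReal_ofReal hp0.le] using h
    have hIint' : Integrable (fun x => |‖G x‖| ^ p) volume :=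
      hIint.congr (Filter.Eventually.of_forall fun x => by beta_reduce; rw [abs_norm])
    have hJint : Integrable (fun x => |(inner ℝ (G x) ξ : ℝ)| ^ p) volume := by
      refine Integrable.mono hIint
        ((continuous_abs.rpow_const fun y => Or.inr hp0.le).comp_aestronglyMeasurable ham)
        (Filter.Eventually.of_forall fun x => ?_)
      beta_reduce
      rw [Real.norm_eq_abs, Real.norm_eq_abs,
        abs_of_nonneg (Real.rpow_nonneg (abs_nonneg _) _),
        abs_of_nonneg (Real.rpow_nonneg (norm_nonneg _) _)]
      exact Real.rpow_le_rpow (abs_nonneg _) (haG x) hp0.le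
    have hptwise : ∀ x, ((inner ℝ (G x) ξ : ℝ)^2 + bf x)^(p/2) = ‖G x‖^p := by
      intro x
      rw [hsum x, sq_rpow' (norm_nonneg _), show (2:ℝ)*(p/2) = p by ring]
    have hcore_int : Integrable (fun x => ((inner ℝ (G x) ξ : ℝ)^2 + bf x)^(p/2)) volume :=
      hIint.congr (Filter.Eventually.of_forall fun x => (hptwise x).symm)
    -- minimality in integral form
    have hmin' : ∀ t : ℝ, (∫ x, ((inner ℝ (G x) ξ : ℝ)^2 + bf x)^(p/2)) ≤
        ∫ x, (Real.exp (2*t) * (inner ℝ (G x) ξ : ℝ)^2 + Real.exp ((-2*s)*t) * bf x)^(p/2) := by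
      intro t
      set α := Real.exp t with hα
      set β := Real.exp ((-s)*t) with hβ
      have hα2 : α^2 = Real.exp (2*t) := by
        rw [hα, ← Real.exp_nat_mul]; norm_num
      have hβ2 : β^2 = Real.exp ((-2*s)*t) := by
        rw [hβ, ← Real.exp_nat_mul]; congr 1; push_cast; ring
      have hdet2 : (β + (α - β)) * β ^ (N-1) = 1 := by
        have hpow : β ^ (N-1) = Real.exp (((N:ℝ)-1) * ((-s)*t)) := by
          rw [hβ, ← Real.exp_nat_mul]
          congr 1
          rw [Nat.cast_sub (by omega : 1 ≤ N)]
          push_cast; ring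
        have hba : β + (α - β) = α := by ring
        rw [hba, hpow, hα, ← Real.exp_add]
        rw [show t + ((N:ℝ)-1) * ((-s)*t) = t * (1 - ((N:ℝ)-1) * s) by ring]
        have hs1 : ((N:ℝ)-1) * s = 1 := by
          rw [hsdef]; field_simp
        rw [hs1]
        norm_num
      obtain ⟨T, hTsym, hTapp⟩ := exists_SL hN2 ξ hξ β (α - β) hdet2
      have hm := hmin T
      rw [hTsym] at hm
      have hmp := mp_toEuclideanLin (T : Matrix (Fin N) (Fin N) ℝ) T.2
      have hw : AEStronglyMeasurable
          (fun y => ‖Matrix.toEuclideanLin (T : Matrix (Fin N) (Fin N) ℝ) (G y)‖) volume :=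
        (((Matrix.toEuclideanLin
          (T : Matrix (Fin N) (Fin N) ℝ)).continuous_of_finiteDimensional).comp_aestronglyMeasurable
            hGm).norm
      have hcomp := eLpNorm_comp_measurePreserving (p := ENNReal.ofReal p) hw hmp
      have hm2 : eLpNorm (fun x => ‖G x‖) (ENNReal.ofReal p) volume ≤
          eLpNorm (fun y => ‖Matrix.toEuclideanLin (T : Matrix (Fin N) (Fin N) ℝ) (G y)‖)
            (ENNReal.ofReal p) volume := by
        refine le_trans ?_ (le_of_eq hcomp)
        exact hm
      -- pointwise formula
      have hLp : ∀ v : EuclideanSpace ℝ (Fin N),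
          |‖Matrix.toEuclideanLin (T : Matrix (Fin N) (Fin N) ℝ) v‖| ^ p
          = (α^2 * (inner ℝ v ξ : ℝ)^2 + β^2 * (‖v‖^2 - (inner ℝ v ξ : ℝ)^2)) ^ (p/2) := by
        intro v
        rw [abs_norm, hTapp v, ← norm_sq_map ξ v hξ α β,
          sq_rpow' (norm_nonneg _) (p/2), show (2:ℝ)*(p/2) = p by ring]
      have hRint : Integrable
          (fun y => |‖Matrix.toEuclideanLin (T : Matrix (Fin N) (Fin N) ℝ) (G y)‖| ^ p)
          volume := by
        refine Integrable.mono (hIint.const_mul ((α^2+β^2)^(p/2)))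
          ((continuous_abs.rpow_const fun y => Or.inr hp0.le).comp_aestronglyMeasurable hw)
          (Filter.Eventually.of_forall fun y => ?_)
        beta_reduce
        rw [Real.norm_eq_abs, Real.norm_eq_abs,
          abs_of_nonneg (Real.rpow_nonneg (abs_nonneg _) _), hLp (G y)]
        have h1 : α^2 * (inner ℝ (G y) ξ : ℝ)^2 + β^2 * (‖G y‖^2 - (inner ℝ (G y) ξ : ℝ)^2)
            ≤ (α^2+β^2) * ‖G y‖^2 := by
          have h2 : (inner ℝ (G y) ξ : ℝ)^2 ≤ ‖G y‖^2 := by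
            rw [← sq_abs]
            exact pow_le_pow_left₀ (abs_nonneg _) (haG y) 2
          nlinarith [sq_nonneg α, sq_nonneg β, sq_nonneg (‖G y‖)]
        have h3 : (α^2 * (inner ℝ (G y) ξ : ℝ)^2 + β^2 * (‖G y‖^2 - (inner ℝ (G y) ξ : ℝ)^2)) ^ (p/2)
            ≤ ((α^2+β^2) * ‖G y‖^2) ^ (p/2) := by
          apply Real.rpow_le_rpow _ h1 (by positivity)
          have h2 : (inner ℝ (G y) ξ : ℝ)^2 ≤ ‖G y‖^2 := by
            rw [← sq_abs]
            exact pow_le_pow_left₀ (abs_nonneg _) (haG y) 2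
          nlinarith [sq_nonneg α, sq_nonneg β]
        refine h3.trans (le_of_eq ?_)
        rw [Real.mul_rpow (by positivity) (by positivity),
          sq_rpow' (norm_nonneg _) (p/2), show (2:ℝ)*(p/2) = p by ring]
        rw [abs_of_nonneg (by positivity : (0:ℝ) ≤ (α^2+β^2)^(p/2) * ‖G y‖^p)]
      rw [eLpNorm_eq_ofReal hp0 hIint', eLpNorm_eq_ofReal hp0 hRint] at hm2
      have hm3 : (∫ x, |‖G x‖| ^ p) ^ (1/p) ≤
          (∫ y, |‖Matrix.toEuclideanLin (T : Matrix (Fin N) (Fin N) ℝ) (G y)‖| ^ p) ^ (1/p) := by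
        refine (ENNReal.ofReal_le_ofReal_iff ?_).1 hm2
        exact Real.rpow_nonneg (integral_nonneg fun y => Real.rpow_nonneg (abs_nonneg _) _) _
      have hXnn : (0:ℝ) ≤ ∫ x, |‖G x‖| ^ p :=
        integral_nonneg fun x => Real.rpow_nonneg (abs_nonneg _) _
      have hYnn : (0:ℝ) ≤ ∫ y,
          |‖Matrix.toEuclideanLin (T : Matrix (Fin N) (Fin N) ℝ) (G y)‖| ^ p :=
        integral_nonneg fun y => Real.rpow_nonneg (abs_nonneg _) _
      have hm4 : (∫ x, |‖G x‖| ^ p) ≤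
          ∫ y, |‖Matrix.toEuclideanLin (T : Matrix (Fin N) (Fin N) ℝ) (G y)‖| ^ p := by
        have h5 := Real.rpow_le_rpow (Real.rpow_nonneg hXnn _) hm3 hp0.le
        rw [← Real.rpow_mul hXnn, ← Real.rpow_mul hYnn,
          one_div_mul_cancel hp0', Real.rpow_one, Real.rpow_one] at h5
        exact h5
      calc (∫ x, ((inner ℝ (G x) ξ : ℝ)^2 + bf x)^(p/2))
          = ∫ x, |‖G x‖| ^ p := by
            refine integral_congr_ae (Filter.Eventually.of_forall fun x => ?_)
            beta_reduce
            rw [hptwise x, abs_norm]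
        _ ≤ ∫ y, |‖Matrix.toEuclideanLin (T : Matrix (Fin N) (Fin N) ℝ) (G y)‖| ^ p := hm4
        _ = ∫ x, (Real.exp (2*t) * (inner ℝ (G x) ξ : ℝ)^2 + Real.exp ((-2*s)*t) * bf x)^(p/2) := by
            refine integral_congr_ae (Filter.Eventually.of_forall fun x => ?_)
            beta_reduce
            rw [hLp (G x), hα2, hβ2]
    -- apply the core lemma
    have hcore := core hp hs ham hbfm hbf0 hcore_int hmin'
    beta_reduce at hcore
    have hsN : s/(1+s) = 1/(N:ℝ) := by
      rw [hsdef]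
      field_simp
      ring
    have hIeq : (∫ x, ((inner ℝ (G x) ξ : ℝ)^2 + bf x)^(p/2)) = ∫ x, ‖G x‖^p :=
      integral_congr_ae (Filter.Eventually.of_forall fun x => by beta_reduce; rw [hptwise x])
    have hHeq : (∫ x, ((inner ℝ (G x) ξ : ℝ)^2 + bf x)^(p/2 - 1) * (inner ℝ (G x) ξ : ℝ)^2)
        = ∫ x, ‖G x‖^(p-2) * (inner ℝ (G x) ξ : ℝ)^2 := by
      refine integral_congr_ae (Filter.Eventually.of_forall fun x => ?_)
      beta_reduce
      rw [hsum x, sq_rpow' (norm_nonneg _) _, show (2:ℝ)*(p/2 - 1) = p - 2 by ring]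
    rw [hsN, hIeq, hHeq] at hcore
    have hInn : (0:ℝ) ≤ ∫ x, ‖G x‖^p :=
      integral_nonneg fun x => Real.rpow_nonneg (norm_nonneg _) _
    have hJnn : (0:ℝ) ≤ ∫ x, |(inner ℝ (G x) ξ : ℝ)|^p :=
      integral_nonneg fun x => Real.rpow_nonneg (abs_nonneg _) _
    -- Hölder inequality
    have hHolder : (∫ x, ‖G x‖^(p-2) * (inner ℝ (G x) ξ : ℝ)^2)
        ≤ (∫ x, ‖G x‖^p) ^ ((p-2)/p) * (∫ x, |(inner ℝ (G x) ξ : ℝ)|^p) ^ (2/p) := by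
      rcases eq_or_lt_of_le hp with hp2 | hp2
      · -- p = 2
        subst hp2
        simp only [show (2:ℝ)-2 = 0 by norm_num, Real.rpow_zero, one_mul, zero_div,
          show (2:ℝ)/2 = 1 by norm_num, Real.rpow_one]
        refine le_of_eq (integral_congr_ae (Filter.Eventually.of_forall fun x => ?_))
        beta_reduce
        rw [show ((2:ℝ)) = ((2:ℕ):ℝ) by norm_num, Real.rpow_natCast, sq_abs]
      · -- 2 < p
        have hp2' : (0:ℝ) < p - 2 := by linarith
        have hconj : Real.HolderConjugate (p/(p-2)) (p/2) := by
          rw [Real.holderConjugate_iff]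
          constructor
          · rw [lt_div_iff₀ hp2']; linarith
          · rw [inv_div, inv_div]
            field_simp
            try ring
        have hfm : AEMeasurable (fun x => ENNReal.ofReal (‖G x‖^(p-2))) volume :=
          (ENNReal.continuous_ofReal.comp (hrc _ (by linarith))).measurable.comp_aemeasurable
            hnormm.aemeasurable
        have hgm2 : AEMeasurable (fun x => ENNReal.ofReal ((inner ℝ (G x) ξ : ℝ)^2)) volume := by
          have hc : Continuous (fun y : ℝ => ENNReal.ofReal (y^2)) :=
            ENNReal.continuous_ofReal.comp (continuous_pow 2)
          exact hc.measurable.comp_aemeasurable ham.aemeasurable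
        have hHold := ENNReal.lintegral_mul_le_Lp_mul_Lq volume hconj hfm hgm2
        have hHint : Integrable (fun x => ‖G x‖^(p-2) * (inner ℝ (G x) ξ : ℝ)^2) volume := by
          refine Integrable.mono hIint
            (((hrc _ (by linarith)).comp_aestronglyMeasurable hnormm).mul
              ((ham.mul ham).congr (Filter.Eventually.of_forall fun x => by
                simp [Pi.pow_apply, sq])))
            (Filter.Eventually.of_forall fun x => ?_)
          beta_reduce
          rw [Real.norm_eq_abs, Real.norm_eq_abs,
            abs_of_nonneg (mul_nonneg (Real.rpow_nonneg (norm_nonneg _) _) (sq_nonneg _)),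
            abs_of_nonneg (Real.rpow_nonneg (norm_nonneg _) _)]
          calc ‖G x‖^(p-2) * (inner ℝ (G x) ξ : ℝ)^2
              ≤ ‖G x‖^(p-2) * ‖G x‖^2 := by
                apply mul_le_mul_of_nonneg_left _ (Real.rpow_nonneg (norm_nonneg _) _)
                rw [← sq_abs]
                exact pow_le_pow_left₀ (abs_nonneg _) (haG x) 2
            _ = ‖G x‖^p := rpow_sub_two_mul_sq (norm_nonneg _) hp2
        have e1 : ENNReal.ofReal (∫ x, ‖G x‖^(p-2) * (inner ℝ (G x) ξ : ℝ)^2)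
            = ∫⁻ x, ENNReal.ofReal (‖G x‖^(p-2)) * ENNReal.ofReal ((inner ℝ (G x) ξ : ℝ)^2) := by
          rw [ofReal_integral_eq_lintegral_ofReal hHint
            (Filter.Eventually.of_forall fun x => by positivity)]
          refine lintegral_congr fun x => ?_
          beta_reduce
          rw [ENNReal.ofReal_mul (Real.rpow_nonneg (norm_nonneg _) _)]
        have e2 : (∫⁻ x, (ENNReal.ofReal (‖G x‖^(p-2)))^(p/(p-2)))
            = ENNReal.ofReal (∫ x, ‖G x‖^p) := by
          have hpt : ∀ x, (ENNReal.ofReal (‖G x‖^(p-2)))^(p/(p-2))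
              = ENNReal.ofReal (‖G x‖^p) := by
            intro x
            rw [ENNReal.ofReal_rpow_of_nonneg (Real.rpow_nonneg (norm_nonneg _) _)
              (by positivity)]
            congr 1
            rw [← Real.rpow_mul (norm_nonneg _)]
            rw [show (p-2)*(p/(p-2)) = p by field_simp]
          rw [lintegral_congr hpt,
            ← ofReal_integral_eq_lintegral_ofReal hIint
              (Filter.Eventually.of_forall fun x => by positivity)]
        have e3 : (∫⁻ x, (ENNReal.ofReal ((inner ℝ (G x) ξ : ℝ)^2))^(p/2))
            = ENNReal.ofReal (∫ x, |(inner ℝ (G x) ξ : ℝ)|^p) := by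
          have hpt : ∀ x, (ENNReal.ofReal ((inner ℝ (G x) ξ : ℝ)^2))^(p/2)
              = ENNReal.ofReal (|(inner ℝ (G x) ξ : ℝ)|^p) := by
            intro x
            rw [ENNReal.ofReal_rpow_of_nonneg (sq_nonneg _) (by positivity)]
            congr 1
            rw [← sq_abs, sq_rpow' (abs_nonneg _), show (2:ℝ)*(p/2) = p by ring]
          rw [lintegral_congr hpt,
            ← ofReal_integral_eq_lintegral_ofReal hJint
              (Filter.Eventually.of_forall fun x => by positivity)]
        have hHold2 : ENNReal.ofReal (∫ x, ‖G x‖^(p-2) * (inner ℝ (G x) ξ : ℝ)^2)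
            ≤ ENNReal.ofReal ((∫ x, ‖G x‖^p) ^ ((p-2)/p)
                * (∫ x, |(inner ℝ (G x) ξ : ℝ)|^p) ^ (2/p)) := by
          rw [e1]
          calc (∫⁻ x, ENNReal.ofReal (‖G x‖^(p-2)) * ENNReal.ofReal ((inner ℝ (G x) ξ : ℝ)^2))
              = ∫⁻ x, ((fun x => ENNReal.ofReal (‖G x‖^(p-2)))
                  * (fun x => ENNReal.ofReal ((inner ℝ (G x) ξ : ℝ)^2))) x := by
                refine lintegral_congr fun x => ?_
                simp [Pi.mul_apply]
            _ ≤ (∫⁻ x, (ENNReal.ofReal (‖G x‖^(p-2)))^(p/(p-2))) ^ (1/(p/(p-2)))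
                * (∫⁻ x, (ENNReal.ofReal ((inner ℝ (G x) ξ : ℝ)^2))^(p/2)) ^ (1/(p/2)) := hHold
            _ = ENNReal.ofReal ((∫ x, ‖G x‖^p) ^ ((p-2)/p)
                * (∫ x, |(inner ℝ (G x) ξ : ℝ)|^p) ^ (2/p)) := by
                rw [e2, e3, one_div (p/(p-2)), inv_div, one_div (p/2), inv_div]
                rw [ENNReal.ofReal_rpow_of_nonneg hInn (by positivity),
                  ENNReal.ofReal_rpow_of_nonneg hJnn (by positivity),
                  ← ENNReal.ofReal_mul (Real.rpow_nonneg hInn _)]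
        exact (ENNReal.ofReal_le_ofReal_iff
          (mul_nonneg (Real.rpow_nonneg hInn _) (Real.rpow_nonneg hJnn _))).1 hHold2
    -- final numeric step
    have hfinal : (1/Real.sqrt N) * (∫ x, ‖G x‖^p) ^ (1/p)
        ≤ (∫ x, |(inner ℝ (G x) ξ : ℝ)|^p) ^ (1/p) := by
      rcases eq_or_lt_of_le hInn with hI0 | hIpos
      · rw [← hI0, Real.zero_rpow (one_div_ne_zero hp0'), mul_zero]
        exact Real.rpow_nonneg hJnn _
      · have hIsplit : (∫ x, ‖G x‖^p)
            = (∫ x, ‖G x‖^p)^((p-2)/p) * (∫ x, ‖G x‖^p)^(2/p) := by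
          rw [← Real.rpow_add hIpos, show (p-2)/p + 2/p = 1 by field_simp; ring, Real.rpow_one]
        have hIpow_pos : (0:ℝ) < (∫ x, ‖G x‖^p)^((p-2)/p) :=
          Real.rpow_pos_of_pos hIpos _
        have h2 : (1/(N:ℝ)) * (∫ x, ‖G x‖^p)^(2/p)
            ≤ (∫ x, |(inner ℝ (G x) ξ : ℝ)|^p)^(2/p) := by
          have h3 : (∫ x, ‖G x‖^p)^((p-2)/p) * ((1/(N:ℝ)) * (∫ x, ‖G x‖^p)^(2/p))
              ≤ (∫ x, ‖G x‖^p)^((p-2)/p) * (∫ x, |(inner ℝ (G x) ξ : ℝ)|^p)^(2/p) := by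
            calc (∫ x, ‖G x‖^p)^((p-2)/p) * ((1/(N:ℝ)) * (∫ x, ‖G x‖^p)^(2/p))
                = (1/(N:ℝ)) * ((∫ x, ‖G x‖^p)^((p-2)/p) * (∫ x, ‖G x‖^p)^(2/p)) := by
                  ring
              _ = (1/(N:ℝ)) * (∫ x, ‖G x‖^p) := by rw [← hIsplit]
              _ ≤ (∫ x, ‖G x‖^(p-2) * (inner ℝ (G x) ξ : ℝ)^2) := hcore
              _ ≤ (∫ x, ‖G x‖^p)^((p-2)/p) * (∫ x, |(inner ℝ (G x) ξ : ℝ)|^p)^(2/p) := hHolder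
          exact le_of_mul_le_mul_left h3 hIpow_pos
        have h4 := Real.rpow_le_rpow
          (mul_nonneg (by positivity) (Real.rpow_nonneg hInn _)) h2
          (by norm_num : (0:ℝ) ≤ 1/2)
        rw [Real.mul_rpow (by positivity) (Real.rpow_nonneg hInn _)] at h4
        rw [← Real.rpow_mul hInn, ← Real.rpow_mul hJnn] at h4
        rw [show (2/p)*((1:ℝ)/2) = 1/p by ring] at h4
        rw [show ((1:ℝ)/(N:ℝ))^((1:ℝ)/2) = 1/Real.sqrt N by
          rw [← Real.sqrt_eq_rpow, one_div, Real.sqrt_inv, one_div]] at h4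
        exact h4
    -- conclude
    rw [eLpNorm_eq_ofReal hp0 hIint', eLpNorm_eq_ofReal hp0 hJint]
    rw [← ENNReal.ofReal_mul (by positivity : (0:ℝ) ≤ 1/Real.sqrt N)]
    apply ENNReal.ofReal_le_ofReal
    have hXeq : (∫ x, |‖G x‖|^p) = ∫ x, ‖G x‖^p :=
      integral_congr_ae (Filter.Eventually.of_forall fun x => by beta_reduce; rw [abs_norm])
    rw [hXeq]
    exact hfinal
end

section
/- Let 1 ≤ p < 2 and f ∈ Ẇ^{1,p}(ℝ^N) satisfy ‖∇f‖_{L^p} = min{‖∇(f∘T)‖_{L^p} : T ∈ SL_N(ℝ)}. Then for every unit vector ξ ∈ S^{N-1}, N^{−1/p} ‖∇f‖_{L^p} ≤ ‖∇f · ξ‖_{L^p}. -/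
open MeasureTheory Classical Matrix
open scoped ENNReal

section Aux

-- Bernoulli tangent-line inequality for concave rpow
lemma stmt13_tangent {u v s : ℝ} (hu : 0 < u) (hv : 0 ≤ v) (hs : 0 < s) (hs1 : s ≤ 1) :
    v ^ s ≤ u ^ s + s * u ^ (s - 1) * (v - u) := by
  have h1 : (1 + (v/u - 1)) ^ s ≤ 1 + s * (v/u - 1) :=
    rpow_one_add_le_one_add_mul_self (by nlinarith [div_nonneg hv hu.le]) hs.le hs1
  have h2 : v ^ s = u ^ s * (v/u) ^ s := by
    rw [← Real.mul_rpow hu.le (div_nonneg hv hu.le), mul_div_cancel₀ _ hu.ne']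
  have h3 : u ^ (s-1) = u ^ s / u := by
    rw [Real.rpow_sub hu, Real.rpow_one]
  have hus : 0 < u ^ s := Real.rpow_pos_of_pos hu s
  calc v ^ s = u ^ s * (1 + (v/u - 1)) ^ s := by rw [h2]; ring_nf
    _ ≤ u ^ s * (1 + s * (v/u - 1)) := by nlinarith
    _ = u ^ s + s * u ^ (s-1) * (v - u) := by
        rw [h3]; field_simp

lemma stmt13_sq_rpow {x : ℝ} (hx : 0 ≤ x) (s : ℝ) : (x ^ 2) ^ s = x ^ (2 * s) := by
  rw [← Real.rpow_natCast x 2, ← Real.rpow_mul hx]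
  norm_num

variable {N : ℕ}

noncomputable def stmt13Bmat (c d : ℝ) (v : Fin N → ℝ) : Matrix (Fin N) (Fin N) ℝ :=
  d • (1 : Matrix (Fin N) (Fin N) ℝ) + (c - d) • Matrix.vecMulVec v v

lemma stmt13Bmat_transpose (c d : ℝ) (v : Fin N → ℝ) :
    (stmt13Bmat c d v)ᵀ = stmt13Bmat c d v := by
  unfold stmt13Bmat
  rw [transpose_add, transpose_smul, transpose_smul, transpose_one]
  congr 1
  ext i j
  simp [vecMulVec_apply, mul_comm]

lemma stmt13Bmat_mulVec (c d : ℝ) (v : Fin N → ℝ) (y : Fin N → ℝ) :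
    (stmt13Bmat c d v) *ᵥ y = d • y + ((c - d) * (v ⬝ᵥ y)) • v := by
  unfold stmt13Bmat
  rw [add_mulVec, smul_mulVec, smul_mulVec, one_mulVec]
  congr 1
  ext i
  simp [vecMulVec, mulVec, dotProduct, Finset.mul_sum, mul_assoc, mul_comm, mul_left_comm]

lemma stmt13Bmat_det (c : ℝ) {d : ℝ} (hd : d ≠ 0) {v : Fin N → ℝ} (hv : v ⬝ᵥ v = 1) :
    (stmt13Bmat c d v).det = d ^ N * c / d := by
  have h1 : stmt13Bmat c d v = d • ((1 : Matrix (Fin N) (Fin N) ℝ) +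
      Matrix.replicateCol Unit (((c - d)/d) • v) * Matrix.replicateRow Unit v) := by
    rw [← vecMulVec_eq (ι := Unit), smul_add]
    unfold stmt13Bmat
    congr 1
    ext i j
    simp [vecMulVec_apply]
    field_simp
  rw [h1, det_smul, det_one_add_replicateCol_mul_replicateRow]
  have : v ⬝ᵥ ((c - d)/d) • v = (c - d)/d := by
    rw [dotProduct_smul, hv, smul_eq_mul, mul_one]
  rw [this]
  field_simp
  rw [Fintype.card_fin]; ring

lemma stmt13Bmat_apply (c d : ℝ) (ξ : EuclideanSpace ℝ (Fin N)) (y : EuclideanSpace ℝ (Fin N)) :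
    toEuclideanLin (stmt13Bmat c d (WithLp.equiv 2 (Fin N → ℝ) ξ)) y
      = d • y + ((c - d) * (inner ℝ y ξ : ℝ)) • ξ := by
  ext i
  rw [toEuclideanLin_apply, stmt13Bmat_mulVec]
  have hdot : (inner ℝ y ξ : ℝ) = ∑ x : Fin N, ξ x * y x := by
    simp [PiLp.inner_apply, RCLike.inner_apply, mul_comm]
  rw [hdot]
  rfl

lemma stmt13Bmat_norm_sq (c d : ℝ) {ξ : EuclideanSpace ℝ (Fin N)} (hξ : ‖ξ‖ = 1)
    (y : EuclideanSpace ℝ (Fin N)) :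
    ‖toEuclideanLin (stmt13Bmat c d (WithLp.equiv 2 (Fin N → ℝ) ξ)) y‖ ^ 2
      = c ^ 2 * (inner ℝ y ξ : ℝ) ^ 2 + d ^ 2 * (‖y‖ ^ 2 - (inner ℝ y ξ : ℝ) ^ 2) := by
  rw [stmt13Bmat_apply]
  set a : ℝ := inner ℝ y ξ
  rw [norm_add_sq_real]
  rw [norm_smul, norm_smul, real_inner_smul_left, real_inner_smul_right]
  simp only [Real.norm_eq_abs, mul_pow, sq_abs, hξ]
  have : (inner ℝ y ξ : ℝ) = a := rfl
  rw [this]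
  ring

lemma stmt13_measurePreserving {A : Matrix (Fin N) (Fin N) ℝ} (hA : A.det = 1) :
    MeasurePreserving (fun x => toEuclideanLin A x)
      (volume : Measure (EuclideanSpace ℝ (Fin N))) volume := by
  have hdet : LinearMap.det (toEuclideanLin A) = 1 := by
    rw [Matrix.toEuclideanLin_eq_toLin, LinearMap.det_toLin]; exact hA
  constructor
  · exact (LinearMap.continuous_of_finiteDimensional _).measurable
  · have := Measure.map_linearMap_addHaar_eq_smul_addHaar
      (volume : Measure (EuclideanSpace ℝ (Fin N))) (f := toEuclideanLin A)
      (by rw [hdet]; norm_num)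
    rw [hdet] at this
    simpa using this

-- Bridging: eLpNorm in terms of a real integral
lemma stmt13_elp_eq {α : Type*} [MeasurableSpace α] {μ : Measure α} {p : ℝ} (hp : 0 < p)
    {h : α → ℝ} (hint : Integrable (fun x => |h x| ^ p) μ) :
    eLpNorm h (ENNReal.ofReal p) μ = ENNReal.ofReal (∫ x, |h x| ^ p ∂μ) ^ (1/p) := by
  have hq0 : ENNReal.ofReal p ≠ 0 := (ENNReal.ofReal_pos.mpr hp).ne'
  rw [eLpNorm_eq_lintegral_rpow_enorm_toReal hq0 ENNReal.ofReal_ne_top, ENNReal.toReal_ofReal hp.le]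
  congr 1
  have heq : ∀ x, ‖h x‖ₑ ^ p = ENNReal.ofReal (|h x| ^ p) := fun x => by
    rw [← ofReal_norm, ENNReal.ofReal_rpow_of_nonneg (norm_nonneg _) hp.le,
      Real.norm_eq_abs]
  rw [lintegral_congr heq,
    ← ofReal_integral_eq_lintegral_ofReal hint
      (Filter.Eventually.of_forall fun x => by positivity)]

lemma stmt13_elp_le {α : Type*} [MeasurableSpace α] {μ : Measure α} {p : ℝ} (hp : 0 < p)
    {h1 h2 : α → ℝ} (hi1 : Integrable (fun x => |h1 x| ^ p) μ)
    (hi2 : Integrable (fun x => |h2 x| ^ p) μ)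
    (hle : eLpNorm h1 (ENNReal.ofReal p) μ ≤ eLpNorm h2 (ENNReal.ofReal p) μ) :
    ∫ x, |h1 x| ^ p ∂μ ≤ ∫ x, |h2 x| ^ p ∂μ := by
  rw [stmt13_elp_eq hp hi1, stmt13_elp_eq hp hi2] at hle
  have h2' := (ENNReal.rpow_le_rpow_iff (by positivity : (0:ℝ) < 1/p)).mp hle
  have hnn : 0 ≤ ∫ x, |h2 x| ^ p ∂μ := integral_nonneg fun x => by positivity
  exact (ENNReal.ofReal_le_ofReal_iff hnn).mp h2'

end Aux

set_option maxHeartbeats 1000000 in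
/-- If `f ∈ Ẇ^{1,p}(ℝ^N)` (with `1 ≤ p < 2`) minimizes the `L^p` norm of the gradient in
its `SL_N` orbit, then `N^{-1/p} ‖∇f‖_{L^p} ≤ ‖∇f · ξ‖_{L^p}` for every unit vector `ξ`. -/
theorem stmt13 {N : ℕ} (hN : 1 ≤ N) (p : ℝ) (hp1 : 1 ≤ p) (hp2 : p < 2)
    (f : EuclideanSpace ℝ (Fin N) → ℝ)
    (G : EuclideanSpace ℝ (Fin N) → EuclideanSpace ℝ (Fin N))
    (hf : LocallyIntegrable f volume)
    (hG : MemLp G (ENNReal.ofReal p) volume)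
    -- `G` is the weak gradient of `f`:
    (hweak : ∀ φ : EuclideanSpace ℝ (Fin N) → ℝ, ContDiff ℝ (⊤ : ℕ∞) φ → HasCompactSupport φ →
      ∀ i : Fin N, ∫ x, f x * fderiv ℝ φ x (EuclideanSpace.single i 1) = - ∫ x, G x i * φ x)
    -- minimality of the gradient `L^p` norm in the `SL_N` orbit:
    (hmin : ∀ T : Matrix.SpecialLinearGroup (Fin N) ℝ,
      eLpNorm (fun x => ‖G x‖) (ENNReal.ofReal p) volume ≤
        eLpNorm (fun x =>
          ‖Matrix.toEuclideanLin ((T : Matrix (Fin N) (Fin N) ℝ)ᵀ)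
            (G (Matrix.toEuclideanLin (T : Matrix (Fin N) (Fin N) ℝ) x))‖)
          (ENNReal.ofReal p) volume) :
    ∀ ξ : EuclideanSpace ℝ (Fin N), ‖ξ‖ = 1 →
      ENNReal.ofReal ((N : ℝ) ^ (-1 / p)) * eLpNorm (fun x => ‖G x‖) (ENNReal.ofReal p) volume ≤
        eLpNorm (fun x => (inner ℝ (G x) ξ : ℝ)) (ENNReal.ofReal p) volume := by
  intro ξ hξ
  have hp0 : 0 < p := lt_of_lt_of_le one_pos hp1
  set q : ℝ≥0∞ := ENNReal.ofReal p with hqdef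
  have hq : q.toReal = p := ENNReal.toReal_ofReal hp0.le
  have hq0 : q ≠ 0 := (ENNReal.ofReal_pos.mpr hp0).ne'
  have hqt : q ≠ ∞ := ENNReal.ofReal_ne_top
  set ξ' : Fin N → ℝ := WithLp.equiv 2 (Fin N → ℝ) ξ with hξ'def
  have hξd : ξ' ⬝ᵥ ξ' = 1 := by
    have h1 : (inner ℝ ξ ξ : ℝ) = ‖ξ‖ ^ 2 := real_inner_self_eq_norm_sq ξ
    have h2 : (inner ℝ ξ ξ : ℝ) = ξ' ⬝ᵥ ξ' := by
      simp only [PiLp.inner_apply, RCLike.inner_apply, conj_trivial]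
      rfl
    rw [← h2, h1, hξ, one_pow]
  set a : EuclideanSpace ℝ (Fin N) → ℝ := fun x => inner ℝ (G x) ξ with hadef
  have haGm : AEStronglyMeasurable a volume := by
    have : a = fun x => (innerSL ℝ ξ) (G x) := by
      funext x; simp only [innerSL_apply_apply]; exact real_inner_comm _ _
    rw [this]
    exact (innerSL ℝ ξ).continuous.comp_aestronglyMeasurable hG.1
  have hCS : ∀ x, |a x| ≤ ‖G x‖ := fun x => by
    calc |a x| ≤ ‖G x‖ * ‖ξ‖ := abs_real_inner_le_norm _ _
    _ = ‖G x‖ := by rw [hξ, mul_one]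
  -- integrability of |G|^p
  have hMint : Integrable (fun x => ‖G x‖ ^ p) volume := by
    have := hG.integrable_norm_rpow hq0 hqt
    rwa [hq] at this
  set r : EuclideanSpace ℝ (Fin N) → ℝ := fun x => ‖G x‖ ^ (p - 2) with hrdef
  have hrnn : ∀ x, 0 ≤ r x := fun x => Real.rpow_nonneg (norm_nonneg _) _
  have hrG : ∀ x, r x * ‖G x‖ ^ 2 = ‖G x‖ ^ p := fun x => by
    rcases eq_or_lt_of_le (norm_nonneg (G x)) with h0 | h0
    · rw [hrdef]
      simp only [← h0]
      rw [Real.zero_rpow (by intro h; linarith), Real.zero_rpow hp0.ne', zero_mul]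
    · rw [hrdef, ← Real.rpow_natCast ‖G x‖ 2, ← Real.rpow_add h0]
      norm_num
  set w1 : EuclideanSpace ℝ (Fin N) → ℝ := fun x => r x * (a x) ^ 2 with hw1def
  set w2 : EuclideanSpace ℝ (Fin N) → ℝ := fun x => r x * (‖G x‖ ^ 2 - (a x) ^ 2) with hw2def
  have hw1nn : ∀ x, 0 ≤ w1 x := fun x => mul_nonneg (hrnn x) (sq_nonneg _)
  have hw2nn : ∀ x, 0 ≤ w2 x := fun x => mul_nonneg (hrnn x)
    (by nlinarith [hCS x, abs_nonneg (a x), sq_abs (a x)])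
  have hw1le : ∀ x, w1 x ≤ ‖G x‖ ^ p := fun x => by
    have hb : w1 x = r x * (a x) ^ 2 := rfl
    rw [hb, ← hrG x]
    have : (a x) ^ 2 ≤ ‖G x‖ ^ 2 := by nlinarith [hCS x, abs_nonneg (a x), sq_abs (a x)]
    nlinarith [hrnn x]
  have hw2le : ∀ x, w2 x ≤ ‖G x‖ ^ p := fun x => by
    have hb : w2 x = r x * (‖G x‖ ^ 2 - (a x) ^ 2) := rfl
    rw [hb, ← hrG x]
    nlinarith [hrnn x, sq_nonneg (a x)]
  have hrm : AEMeasurable r volume := (hG.1.norm.aemeasurable).pow_const (p - 2)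
  have hw1m : AEStronglyMeasurable w1 volume :=
    (hrm.mul ((haGm.aemeasurable).pow_const 2)).aestronglyMeasurable
  have hw2m : AEStronglyMeasurable w2 volume :=
    (hrm.mul (((hG.1.norm.aemeasurable).pow_const 2).sub
      ((haGm.aemeasurable).pow_const 2))).aestronglyMeasurable
  have hw1int : Integrable w1 volume := by
    refine Integrable.mono' hMint hw1m (Filter.Eventually.of_forall fun x => ?_)
    rw [Real.norm_eq_abs, abs_of_nonneg (hw1nn x)]; exact hw1le x
  have hw2int : Integrable w2 volume := by
    refine Integrable.mono' hMint hw2m (Filter.Eventually.of_forall fun x => ?_)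
    rw [Real.norm_eq_abs, abs_of_nonneg (hw2nn x)]; exact hw2le x
  set M : ℝ := ∫ x, ‖G x‖ ^ p with hMdef
  set P : ℝ := ∫ x, w1 x with hPdef
  set Q : ℝ := ∫ x, w2 x with hQdef
  have hPnn : 0 ≤ P := integral_nonneg hw1nn
  have hQnn : 0 ≤ Q := integral_nonneg hw2nn
  have hPQ : P + Q = M := by
    rw [hPdef, hQdef, ← integral_add hw1int hw2int]
    apply integral_congr_ae
    filter_upwards with x
    show r x * (a x) ^ 2 + r x * (‖G x‖ ^ 2 - (a x) ^ 2) = ‖G x‖ ^ p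
    rw [← hrG x]
    ring
  -- Step 1: the variational inequality from minimality
  have key : ∀ t : ℝ, 0 ≤ P * (Real.exp (2*((N:ℝ)-1)*t) - 1) + Q * (Real.exp ((-2)*t) - 1) := by
    intro t
    set c : ℝ := Real.exp (((N:ℝ)-1)*t) with hcdef
    set d : ℝ := Real.exp (-t) with hddef
    have hcpos : 0 < c := Real.exp_pos _
    have hdpos : 0 < d := Real.exp_pos _
    have hdet : (stmt13Bmat c d ξ').det = 1 := by
      have hdc : d ^ N * c = d := by
        rw [hcdef, hddef, ← Real.exp_nat_mul, ← Real.exp_add]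
        congr 1
        push_cast
        ring
      rw [stmt13Bmat_det c hdpos.ne' hξd, hdc, div_self hdpos.ne']
    set T : Matrix.SpecialLinearGroup (Fin N) ℝ := ⟨stmt13Bmat c d ξ', hdet⟩ with hTdef
    have h1 := hmin T
    have hcoe : (T : Matrix (Fin N) (Fin N) ℝ) = stmt13Bmat c d ξ' := rfl
    rw [hcoe, stmt13Bmat_transpose] at h1
    have hg : AEStronglyMeasurable
        (fun y => ‖toEuclideanLin (stmt13Bmat c d ξ') (G y)‖) volume :=
      ((LinearMap.continuous_of_finiteDimensional _).comp_aestronglyMeasurable hG.1).norm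
    have h2 := eLpNorm_comp_measurePreserving (p := q) hg (stmt13_measurePreserving hdet)
    have h2' : (fun x => ‖toEuclideanLin (stmt13Bmat c d ξ')
          (G (toEuclideanLin (stmt13Bmat c d ξ') x))‖)
        = ((fun y => ‖toEuclideanLin (stmt13Bmat c d ξ') (G y)‖)
            ∘ (fun x => toEuclideanLin (stmt13Bmat c d ξ') x)) := rfl
    rw [h2', h2] at h1
    set F : EuclideanSpace ℝ (Fin N) → ℝ :=
      fun y => c^2 * (a y)^2 + d^2 * (‖G y‖^2 - (a y)^2) with hFdef
    have hb2 : ∀ y, (a y)^2 ≤ ‖G y‖^2 := fun y => by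
      nlinarith [hCS y, abs_nonneg (a y), sq_abs (a y)]
    have hFnn : ∀ y, 0 ≤ F y := fun y => by
      have := hb2 y
      show 0 ≤ c^2 * (a y)^2 + d^2 * (‖G y‖^2 - (a y)^2)
      nlinarith [sq_nonneg (a y), sq_nonneg c, sq_nonneg d]
    have hnormF : ∀ y, ‖toEuclideanLin (stmt13Bmat c d ξ') (G y)‖ ^ p = F y ^ (p/2) := by
      intro y
      have h3 := stmt13Bmat_norm_sq c d hξ (G y)
      rw [← hξ'def] at h3
      have h4 : ‖toEuclideanLin (stmt13Bmat c d ξ') (G y)‖ ^ p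
          = (‖toEuclideanLin (stmt13Bmat c d ξ') (G y)‖ ^ 2) ^ (p/2) := by
        rw [stmt13_sq_rpow (norm_nonneg _) (p/2)]
        congr 1
        ring
      rw [h4, h3]
    have hFle : ∀ y, F y ≤ (c^2 + d^2) * ‖G y‖^2 := fun y => by
      have := hb2 y
      show c^2 * (a y)^2 + d^2 * (‖G y‖^2 - (a y)^2) ≤ _
      nlinarith [sq_nonneg (a y), sq_nonneg c, sq_nonneg d]
    have hFp_le : ∀ y, F y ^ (p/2) ≤ ((c^2+d^2) ^ (p/2)) * ‖G y‖ ^ p := by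
      intro y
      calc F y ^ (p/2) ≤ ((c^2+d^2) * ‖G y‖^2) ^ (p/2) :=
            Real.rpow_le_rpow (hFnn y) (hFle y) (by positivity)
        _ = (c^2+d^2)^(p/2) * (‖G y‖^2)^(p/2) := Real.mul_rpow (by positivity) (sq_nonneg _)
        _ = ((c^2+d^2) ^ (p/2)) * ‖G y‖ ^ p := by
            rw [stmt13_sq_rpow (norm_nonneg _) (p/2)]
            congr 2
            ring
    have hFm0 : AEMeasurable F volume := by
      exact (aemeasurable_const.mul ((haGm.aemeasurable).pow_const 2)).add
        (aemeasurable_const.mul (((hG.1.norm.aemeasurable).pow_const 2).sub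
          ((haGm.aemeasurable).pow_const 2)))
    have hFint : Integrable (fun y => F y ^ (p/2)) volume := by
      refine Integrable.mono' (hMint.const_mul ((c^2+d^2) ^ (p/2)))
        ((hFm0.pow_const (p/2)).aestronglyMeasurable)
        (Filter.Eventually.of_forall fun y => ?_)
      rw [Real.norm_eq_abs, abs_of_nonneg (Real.rpow_nonneg (hFnn y) _)]
      exact hFp_le y
    have hint1 : Integrable (fun x => |‖G x‖| ^ p) volume := by
      have he : (fun x => |‖G x‖| ^ p) = fun x => ‖G x‖ ^ p := by
        funext x; rw [abs_norm]
      rw [he]; exact hMint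
    have hint2 : Integrable
        (fun x => |‖toEuclideanLin (stmt13Bmat c d ξ') (G x)‖| ^ p) volume := by
      have he : (fun x => |‖toEuclideanLin (stmt13Bmat c d ξ') (G x)‖| ^ p)
          = fun y => F y ^ (p/2) := by
        funext x; rw [abs_norm, hnormF]
      rw [he]; exact hFint
    have h5 := stmt13_elp_le hp0 hint1 hint2 h1
    have h6 : M ≤ ∫ x, F x ^ (p/2) := by
      calc M = ∫ x, |‖G x‖| ^ p := by
            apply integral_congr_ae
            filter_upwards with x
            rw [abs_norm]
        _ ≤ ∫ x, |‖toEuclideanLin (stmt13Bmat c d ξ') (G x)‖| ^ p := h5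
        _ = ∫ x, F x ^ (p/2) := by
            apply integral_congr_ae
            filter_upwards with x
            rw [abs_norm, hnormF]
    have htan : ∀ x, F x ^ (p/2) ≤ ‖G x‖^p + (p/2) * ((c^2-1) * w1 x + (d^2-1) * w2 x) := by
      intro x
      rcases eq_or_lt_of_le (norm_nonneg (G x)) with h0 | h0
      · have ha0 : a x = 0 := by
          have h01 := hCS x
          rw [← h0] at h01
          have h02 := abs_nonneg (a x)
          have : |a x| = 0 := le_antisymm h01 h02
          exact abs_eq_zero.mp this
        have hw10 : w1 x = 0 := by show r x * (a x)^2 = 0; rw [ha0]; ring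
        have hw20 : w2 x = 0 := by
          show r x * (‖G x‖^2 - (a x)^2) = 0
          rw [ha0, ← h0]; ring
        have hF0 : F x = 0 := by
          show c^2 * (a x)^2 + d^2 * (‖G x‖^2 - (a x)^2) = 0
          rw [ha0, ← h0]; ring
        rw [hF0, hw10, hw20, ← h0, Real.zero_rpow (by positivity : p/2 ≠ 0),
          Real.zero_rpow hp0.ne']
        ring_nf
        linarith
      · have hu : (0:ℝ) < ‖G x‖^2 := by positivity
        have htg := stmt13_tangent (v := F x) (s := p/2) hu (hFnn x)
          (by positivity) (by linarith)
        have e1 : ((‖G x‖^2 : ℝ))^(p/2) = ‖G x‖^p := by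
          rw [stmt13_sq_rpow (norm_nonneg _) (p/2)]
          congr 1
          ring
        have e2 : ((‖G x‖^2 : ℝ))^(p/2 - 1) = r x := by
          rw [stmt13_sq_rpow (norm_nonneg _) (p/2 - 1)]
          show _ = ‖G x‖ ^ (p-2)
          congr 1
          ring
        have e3 : F x - ‖G x‖^2 = (c^2-1)*(a x)^2 + (d^2-1)*(‖G x‖^2 - (a x)^2) := by
          show c^2 * (a x)^2 + d^2 * (‖G x‖^2 - (a x)^2) - ‖G x‖^2 = _
          ring
        rw [e1, e2, e3] at htg
        calc F x ^ (p/2) ≤ ‖G x‖^p + p/2 * r x *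
              ((c^2-1)*(a x)^2 + (d^2-1)*(‖G x‖^2 - (a x)^2)) := htg
          _ = ‖G x‖^p + (p/2) * ((c^2-1) * w1 x + (d^2-1) * w2 x) := by
              show _ = ‖G x‖^p + (p/2) * ((c^2-1) * (r x * (a x)^2)
                + (d^2-1) * (r x * (‖G x‖^2 - (a x)^2)))
              ring
    have hsum2 : Integrable (fun x => (p/2) * ((c^2-1) * w1 x + (d^2-1) * w2 x)) volume :=
      ((hw1int.const_mul (c^2-1)).add (hw2int.const_mul (d^2-1))).const_mul (p/2)
    have hcomb : Integrable
        (fun x => ‖G x‖^p + (p/2) * ((c^2-1) * w1 x + (d^2-1) * w2 x)) volume :=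
      hMint.add hsum2
    have h7 := integral_mono hFint hcomb htan
    have h8 : ∫ x, (‖G x‖^p + (p/2) * ((c^2-1) * w1 x + (d^2-1) * w2 x))
        = M + (p/2) * ((c^2-1) * P + (d^2-1) * Q) := by
      rw [integral_add hMint hsum2, integral_const_mul,
        integral_add (hw1int.const_mul (c^2-1)) (hw2int.const_mul (d^2-1)),
        integral_const_mul, integral_const_mul]
    rw [h8] at h7
    have h10 : 0 ≤ (c^2-1) * P + (d^2-1) * Q := by nlinarith [h6, h7]
    have hc2 : c^2 = Real.exp (2*((N:ℝ)-1)*t) := by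
      rw [sq, hcdef, ← Real.exp_add]
      congr 1
      ring
    have hd2 : d^2 = Real.exp ((-2)*t) := by
      rw [sq, hddef, ← Real.exp_add]
      congr 1
      ring
    rw [hc2, hd2] at h10
    linarith [h10]
  -- Step 2: vanishing derivative at t = 0 gives Q = (N-1) P
  have hQP : Q = ((N:ℝ) - 1) * P := by
    set g : ℝ → ℝ := fun t =>
      P * (Real.exp (2*((N:ℝ)-1)*t) - 1) + Q * (Real.exp ((-2)*t) - 1) with hgdef
    have hg0 : g 0 = 0 := by simp [hgdef]
    have hmin0 : IsLocalMin g 0 := by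
      apply Filter.Eventually.of_forall
      intro t
      rw [hg0]
      exact key t
    have hd : HasDerivAt g (P * (2*((N:ℝ)-1)) + Q * (-2)) 0 := by
      have h1 : HasDerivAt (fun t : ℝ => Real.exp (2*((N:ℝ)-1)*t) - 1) (2*((N:ℝ)-1)) 0 := by
        have h1' := (((hasDerivAt_id (0:ℝ)).const_mul (2*((N:ℝ)-1))).exp).sub_const 1
        simpa using h1'
      have h2 : HasDerivAt (fun t : ℝ => Real.exp ((-2)*t) - 1) (-2 : ℝ) 0 := by
        have h2' := (((hasDerivAt_id (0:ℝ)).const_mul (-2:ℝ)).exp).sub_const 1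
        simpa using h2'
      exact (h1.const_mul P).add (h2.const_mul Q)
    have hderiv0 : P * (2*((N:ℝ)-1)) + Q * (-2) = 0 := hmin0.hasDerivAt_eq_zero hd
    linarith
  have hMnn : 0 ≤ M := integral_nonneg fun x => Real.rpow_nonneg (norm_nonneg _) _
  have hMNP : M = (N:ℝ) * P := by rw [← hPQ, hQP]; ring
  -- Step 3: P ≤ ∫ |a|^p
  have hapm : AEStronglyMeasurable (fun x => |a x| ^ p) volume := by
    have h' := ((haGm.norm.aemeasurable).pow_const p).aestronglyMeasurable
    have he : (fun x => ‖a x‖ ^ p) = fun x => |a x| ^ p := by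
      funext x; rw [Real.norm_eq_abs]
    rwa [he] at h'
  have hapint : Integrable (fun x => |a x| ^ p) volume := by
    refine Integrable.mono' hMint hapm (Filter.Eventually.of_forall fun x => ?_)
    rw [Real.norm_eq_abs, abs_of_nonneg (Real.rpow_nonneg (abs_nonneg _) _)]
    exact Real.rpow_le_rpow (abs_nonneg _) (hCS x) hp0.le
  have hPA : P ≤ ∫ x, |a x| ^ p := by
    apply integral_mono hw1int hapint
    intro x
    show r x * (a x)^2 ≤ |a x| ^ p
    rcases eq_or_ne (a x) 0 with h0 | h0
    · rw [h0]
      have : |(0:ℝ)| ^ p = 0 := by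
        rw [abs_zero, Real.zero_rpow hp0.ne']
      rw [this]
      simp
    · have hapos : 0 < |a x| := abs_pos.mpr h0
      have h1 : r x ≤ |a x| ^ (p-2) :=
        Real.rpow_le_rpow_of_nonpos hapos (hCS x) (by linarith)
      have h2 : |a x| ^ (p-2) * (a x)^2 = |a x| ^ p := by
        rw [← sq_abs, ← Real.rpow_natCast |a x| 2, ← Real.rpow_add hapos]
        congr 1
        push_cast
        ring
      calc r x * (a x)^2 ≤ |a x|^(p-2) * (a x)^2 := by nlinarith [sq_nonneg (a x)]
        _ = |a x| ^ p := h2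
  -- Step 4: conclusion
  set A : ℝ := ∫ x, |a x| ^ p with hAdef
  have hAnn : 0 ≤ A := integral_nonneg fun x => Real.rpow_nonneg (abs_nonneg _) _
  have hNpos : (0:ℝ) < (N:ℝ) := by exact_mod_cast Nat.lt_of_lt_of_le Nat.zero_lt_one hN
  have hMA : M ≤ (N:ℝ) * A := by
    rw [hMNP]
    nlinarith [hPA, hNpos]
  have hint1g : Integrable (fun x => |‖G x‖| ^ p) volume := by
    have he : (fun x => |‖G x‖| ^ p) = fun x => ‖G x‖ ^ p := by
      funext x; rw [abs_norm]
    rw [he]; exact hMint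
  have hG_elp : eLpNorm (fun x => ‖G x‖) q volume = ENNReal.ofReal M ^ (1/p) := by
    rw [stmt13_elp_eq hp0 hint1g]
    congr 2
    apply integral_congr_ae
    filter_upwards with x
    rw [abs_norm]
  have hA_elp : eLpNorm (fun x => a x) q volume = ENNReal.ofReal A ^ (1/p) :=
    stmt13_elp_eq hp0 hapint
  have hgoal : ENNReal.ofReal ((N : ℝ) ^ (-1 / p)) * eLpNorm (fun x => ‖G x‖) q volume ≤
      eLpNorm (fun x => a x) q volume := by
    rw [hG_elp, hA_elp]
    have hreal : (N : ℝ) ^ (-1 / p) * M ^ (1/p) ≤ A ^ (1/p) := by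
      have e1 : (N : ℝ) ^ (-1 / p) = ((N:ℝ)⁻¹) ^ (1/p) := by
        rw [← Real.rpow_neg_one ((N:ℝ)), ← Real.rpow_mul hNpos.le]
        congr 1
        ring
      rw [e1, ← Real.mul_rpow (inv_nonneg.mpr hNpos.le) hMnn]
      apply Real.rpow_le_rpow (mul_nonneg (inv_nonneg.mpr hNpos.le) hMnn) ?_
        (one_div_nonneg.mpr hp0.le)
      have h3 : (N:ℝ)⁻¹ * M ≤ (N:ℝ)⁻¹ * ((N:ℝ)*A) :=
        mul_le_mul_of_nonneg_left hMA (inv_nonneg.mpr hNpos.le)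
      have h4 : (N:ℝ)⁻¹ * ((N:ℝ)*A) = A := by field_simp
      linarith
    calc ENNReal.ofReal ((N : ℝ) ^ (-1 / p)) * ENNReal.ofReal M ^ (1/p)
        = ENNReal.ofReal ((N : ℝ) ^ (-1 / p)) * ENNReal.ofReal (M ^ (1/p)) := by
          rw [ENNReal.ofReal_rpow_of_nonneg hMnn (one_div_nonneg.mpr hp0.le)]
      _ = ENNReal.ofReal ((N : ℝ) ^ (-1 / p) * M ^ (1/p)) := by
          rw [ENNReal.ofReal_mul (Real.rpow_nonneg hNpos.le _)]
      _ ≤ ENNReal.ofReal (A ^ (1/p)) := ENNReal.ofReal_le_ofReal hreal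
      _ = ENNReal.ofReal A ^ (1/p) := by
          rw [ENNReal.ofReal_rpow_of_nonneg hAnn (one_div_nonneg.mpr hp0.le)]
  exact hgoal
end

section
/- Let m ≥ 1 be an integer and 1 ≤ p, q < ∞. Suppose f ∈ L^q(ℝ^N) is nonzero (as an element of L^q). Then there exist δ > 0 and C > 0 such that ‖Δ^m_{tξ} f‖_{L^p} ≥ C t^m for all 0 < t < δ and all ξ ∈ S^{N-1}. -/
open MeasureTheory
open scoped ENNReal

open MeasureTheory Filter Topology Finset
open scoped ENNReal

namespace Stmt15

variable {E : Type*} [AddCommGroup E]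

lemma deltaIter_eq_fwdDiff (h : E) (m : ℕ) (f : E → ℝ) :
    deltaIter h m f = (fwdDiff h)^[m] f := by
  induction m with
  | zero => rfl
  | succ m ih =>
    funext x
    show deltaIter h m f (x + h) - deltaIter h m f x = _
    rw [Function.iterate_succ_apply', ih]
    rfl

lemma deltaIter_eq_sum (h : E) (m : ℕ) (f : E → ℝ) (x : E) :
    deltaIter h m f x
      = ∑ k ∈ Finset.range (m+1), ((-1:ℝ)^(m-k) * (m.choose k : ℝ)) * f (x + k • h) := by
  rw [deltaIter_eq_fwdDiff, fwdDiff_iter_eq_sum_shift]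
  refine Finset.sum_congr rfl fun k _ => ?_
  rw [zsmul_eq_mul]
  push_cast
  ring

lemma deltaIter_succ' (h : E) (m : ℕ) (f : E → ℝ) :
    deltaIter h (m+1) f = deltaIter h 1 (deltaIter h m f) := rfl

/-- sum of shifted copies -/
def shiftSum (k : ℕ) (h : E) (g : E → ℝ) : E → ℝ := fun x => ∑ i ∈ Finset.range k, g (x + i • h)

lemma deltaIter_one_nsmul (k : ℕ) (h : E) (g : E → ℝ) :
    deltaIter (k • h) 1 g = shiftSum k h (deltaIter h 1 g) := by
  funext x
  show g (x + k • h) - g x = _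
  induction k with
  | zero => simp [shiftSum]
  | succ k ih =>
    rw [shiftSum, Finset.sum_range_succ]
    show g (x + (k+1) • h) - g x = (∑ i ∈ Finset.range k, deltaIter h 1 g (x + i • h)) + _
    rw [← shiftSum, ← ih]
    show _ = g (x + k • h) - g x + (g (x + k • h + h) - g (x + k • h))
    rw [succ_nsmul, ← add_assoc]
    ring

lemma deltaIter_one_shiftSum (h h' : E) (k : ℕ) (g : E → ℝ) :
    deltaIter h 1 (shiftSum k h' g) = shiftSum k h' (deltaIter h 1 g) := by
  funext x
  show (∑ i ∈ Finset.range k, g (x + h + i • h')) - ∑ i ∈ Finset.range k, g (x + i • h') = _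
  rw [← Finset.sum_sub_distrib]
  refine Finset.sum_congr rfl fun i _ => ?_
  show _ = g (x + i • h' + h) - g (x + i • h')
  rw [add_right_comm]

lemma deltaIter_shiftSum_iter (h h' : E) (k n : ℕ) (g : E → ℝ) :
    deltaIter h 1 ((shiftSum k h')^[n] g) = (shiftSum k h')^[n] (deltaIter h 1 g) := by
  induction n with
  | zero => rfl
  | succ n ih =>
    rw [Function.iterate_succ_apply', Function.iterate_succ_apply',
      deltaIter_one_shiftSum, ih]

lemma deltaIter_nsmul_rep (k : ℕ) (h : E) (m : ℕ) (f : E → ℝ) :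
    deltaIter (k • h) m f = (shiftSum k h)^[m] (deltaIter h m f) := by
  induction m with
  | zero => rfl
  | succ m ih =>
    rw [deltaIter_succ', ih, deltaIter_one_nsmul, deltaIter_shiftSum_iter,
      Function.iterate_succ_apply', ← deltaIter_succ']

end Stmt15
section MeasureAux
open MeasureTheory Filter Topology Finset
open scoped ENNReal
variable {N : ℕ}
local notation "E" => EuclideanSpace ℝ (Fin N)

namespace Stmt15

lemma aesm_shift {f : E → ℝ} (hf : AEStronglyMeasurable f (volume : Measure E)) (v : E) :
    AEStronglyMeasurable (fun x : E => f (x + v)) volume :=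
  hf.comp_quasiMeasurePreserving (measurePreserving_add_right volume v).quasiMeasurePreserving

lemma eLpNorm_shift (f : E → ℝ) (hf : AEStronglyMeasurable f (volume : Measure E)) (v : E)
    (P : ℝ≥0∞) :
    eLpNorm (fun x : E => f (x + v)) P volume = eLpNorm f P volume :=
  eLpNorm_comp_measurePreserving hf (measurePreserving_add_right volume v)

lemma aesm_deltaIter {f : E → ℝ} (hf : AEStronglyMeasurable f (volume : Measure E)) (h : E)
    (m : ℕ) : AEStronglyMeasurable (deltaIter h m f) volume := by
  induction m with
  | zero => exact hf
  | succ m ih => exact (aesm_shift ih h).sub ih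

lemma shiftSum_rep (k : ℕ) (h : E) (g : E → ℝ) :
    shiftSum k h g = ∑ i ∈ Finset.range k, (fun y : E => g (y + i • h)) := by
  funext x
  simp [shiftSum, Finset.sum_apply]

lemma aesm_shiftSum {g : E → ℝ} (hg : AEStronglyMeasurable g (volume : Measure E)) (k : ℕ)
    (h : E) : AEStronglyMeasurable (shiftSum k h g) volume := by
  rw [shiftSum_rep]
  exact Finset.aestronglyMeasurable_sum _ fun i _ => aesm_shift hg _

lemma aesm_shiftSum_iter {g : E → ℝ} (hg : AEStronglyMeasurable g (volume : Measure E)) (k : ℕ)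
    (h : E) (n : ℕ) : AEStronglyMeasurable ((shiftSum k h)^[n] g) volume := by
  induction n with
  | zero => exact hg
  | succ n ih => rw [Function.iterate_succ_apply']; exact aesm_shiftSum ih k h

lemma eLpNorm_shiftSum_le {g : E → ℝ} (hg : AEStronglyMeasurable g (volume : Measure E))
    (k : ℕ) (h : E) {P : ℝ≥0∞} (hP : 1 ≤ P) :
    eLpNorm (shiftSum k h g) P volume ≤ (k : ℝ≥0∞) * eLpNorm g P volume := by
  rw [shiftSum_rep]
  refine (eLpNorm_sum_le (fun i _ => aesm_shift hg _) hP).trans ?_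
  have : ∀ i ∈ Finset.range k, eLpNorm (fun y : E => g (y + i • h)) P volume
      = eLpNorm g P volume := fun i _ => eLpNorm_shift g hg _ P
  rw [Finset.sum_congr rfl this, Finset.sum_const, Finset.card_range, nsmul_eq_mul]

lemma eLpNorm_shiftSum_iter_le {g : E → ℝ} (hg : AEStronglyMeasurable g (volume : Measure E))
    (k : ℕ) (h : E) (n : ℕ) {P : ℝ≥0∞} (hP : 1 ≤ P) :
    eLpNorm ((shiftSum k h)^[n] g) P volume ≤ (k : ℝ≥0∞) ^ n * eLpNorm g P volume := by
  induction n with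
  | zero => simp
  | succ n ih =>
    rw [Function.iterate_succ_apply']
    refine (eLpNorm_shiftSum_le (aesm_shiftSum_iter hg k h n) k h hP).trans ?_
    calc (k : ℝ≥0∞) * eLpNorm ((shiftSum k h)^[n] g) P volume
        ≤ (k : ℝ≥0∞) * ((k : ℝ≥0∞) ^ n * eLpNorm g P volume) := by
          exact mul_le_mul_right ih _
      _ = (k : ℝ≥0∞) ^ (n+1) * eLpNorm g P volume := by ring

lemma eLpNorm_deltaIter_nsmul_le {f : E → ℝ}
    (hf : AEStronglyMeasurable f (volume : Measure E)) (k : ℕ) (h : E) (m : ℕ) {P : ℝ≥0∞}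
    (hP : 1 ≤ P) :
    eLpNorm (deltaIter (k • h) m f) P volume
      ≤ (k : ℝ≥0∞) ^ m * eLpNorm (deltaIter h m f) P volume := by
  rw [deltaIter_nsmul_rep]
  exact eLpNorm_shiftSum_iter_le (aesm_deltaIter hf h m) k h m hP

end Stmt15
end MeasureAux
section TransCont
open MeasureTheory Filter Topology Finset
open scoped ENNReal
variable {N : ℕ}
local notation "E" => EuclideanSpace ℝ (Fin N)

namespace Stmt15

lemma tendsto_eLpNorm_shift_sub {Q : ℝ≥0∞} [Fact (1 ≤ Q)] (hQtop : Q ≠ ∞)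
    {f : E → ℝ} (hf : MemLp f Q (volume : Measure E))
    {w : ℕ → E} {w₀ : E} (hw : Tendsto w atTop (𝓝 w₀)) :
    Tendsto (fun j => eLpNorm (fun x : E => f (x + w j) - f (x + w₀)) Q volume)
      atTop (𝓝 0) := by
  set Φ : C(E × E, E) := ⟨fun vx => vx.2 + vx.1, by fun_prop⟩ with hΦ
  set H : C(E, C(E, E)) := Φ.curry with hH
  have hpres : ∀ a : E, MeasurePreserving (H a) (volume : Measure E) volume := fun a =>
    measurePreserving_add_right volume a
  set f' : Lp ℝ Q (volume : Measure E) := hf.toLp f with hf'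
  have hT : Tendsto (fun j => Lp.compMeasurePreserving (H (w j)) (hpres (w j)) f') atTop
      (𝓝 (Lp.compMeasurePreserving (H w₀) (hpres w₀) f')) :=
    Filter.Tendsto.compMeasurePreservingLp tendsto_const_nhds
      ((H.continuous.tendsto w₀).comp hw) _ _ hQtop
  have h2 := (Lp.tendsto_Lp_iff_tendsto_eLpNorm' _ _).mp hT
  refine h2.congr fun j => ?_
  refine eLpNorm_congr_ae ?_
  have e1 : ∀ a : E, ⇑(Lp.compMeasurePreserving (H a) (hpres a) f')
      =ᵐ[volume] fun x : E => f (x + a) := by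
    intro a
    refine (Lp.coeFn_compMeasurePreserving f' (hpres a)).trans ?_
    exact (hpres a).quasiMeasurePreserving.ae_eq_comp (hf.coeFn_toLp)
  filter_upwards [e1 (w j), e1 w₀] with x h1 h2
  simp only [Pi.sub_apply, h1, h2]

end Stmt15
end TransCont
section ConvAux
open MeasureTheory Filter Topology Finset
open scoped ENNReal
variable {N : ℕ}
local notation "E" => EuclideanSpace ℝ (Fin N)

namespace Stmt15

lemma tendsto_eLpNorm_deltaIter_sub {Q : ℝ≥0∞} [Fact (1 ≤ Q)] (hQtop : Q ≠ ∞)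
    {f : E → ℝ} (hf : MemLp f Q (volume : Measure E)) (m : ℕ)
    {v : ℕ → E} {v₀ : E} (hv : Tendsto v atTop (𝓝 v₀)) :
    Tendsto (fun j => eLpNorm (deltaIter (v j) m f - deltaIter v₀ m f) Q volume)
      atTop (𝓝 0) := by
  have hQ1 : (1:ℝ≥0∞) ≤ Q := Fact.out
  set c : ℕ → ℝ := fun k => (-1:ℝ)^(m-k) * (m.choose k : ℝ) with hc
  have hrep : ∀ j, deltaIter (v j) m f - deltaIter v₀ m f
      = ∑ k ∈ Finset.range (m+1),
          (c k) • (fun x : E => f (x + k • v j) - f (x + k • v₀)) := by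
    intro j
    funext x
    simp only [Pi.sub_apply, Finset.sum_apply, Pi.smul_apply, smul_eq_mul,
      deltaIter_eq_sum, mul_sub]
    rw [← Finset.sum_sub_distrib]
  -- each summand's norm tends to zero
  have hterm : ∀ k : ℕ, Tendsto
      (fun j => eLpNorm (fun x : E => f (x + k • v j) - f (x + k • v₀)) Q volume)
      atTop (𝓝 0) := by
    intro k
    have hsm : ∀ u : EuclideanSpace ℝ (Fin N), (k • u : EuclideanSpace ℝ (Fin N)) = (k : ℝ) • u :=
      fun u => (Nat.cast_smul_eq_nsmul ℝ k u).symm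
    have hw : Tendsto (fun j => (k • v j : EuclideanSpace ℝ (Fin N))) atTop (𝓝 (k • v₀)) := by
      simp only [hsm]
      exact Tendsto.const_smul hv ((k : ℝ))
    exact tendsto_eLpNorm_shift_sub hQtop hf hw
  -- squeeze
  have hsum : Tendsto (fun j => ∑ k ∈ Finset.range (m+1),
      (‖c k‖₊ : ℝ≥0∞) * eLpNorm (fun x : E => f (x + k • v j) - f (x + k • v₀)) Q volume)
      atTop (𝓝 0) := by
    have h1 : ∀ k : ℕ, Tendsto (fun j => (‖c k‖₊ : ℝ≥0∞)
        * eLpNorm (fun x : E => f (x + k • v j) - f (x + k • v₀)) Q volume) atTop (𝓝 0) := by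
      intro k
      have := ENNReal.Tendsto.const_mul (a := (‖c k‖₊ : ℝ≥0∞)) (hterm k)
        (Or.inr ENNReal.coe_ne_top)
      simpa using this
    have := tendsto_finset_sum (Finset.range (m+1)) (fun k _ => h1 k)
    simpa using this
  refine tendsto_of_tendsto_of_tendsto_of_le_of_le tendsto_const_nhds hsum
    (fun j => zero_le) (fun j => ?_)
  rw [hrep j]
  refine (eLpNorm_sum_le (fun k _ => ?_) hQ1).trans ?_
  · exact (((aesm_shift hf.1 _).sub (aesm_shift hf.1 _)).const_smul _)
  · refine Finset.sum_le_sum fun k _ => ?_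
    rw [eLpNorm_const_smul]
    exact le_rfl

lemma ae_zero_of_tendsto {P Q : ℝ≥0∞} (hP0 : P ≠ 0) (hPtop : P ≠ ∞) (hQ0 : Q ≠ 0)
    (hQtop : Q ≠ ∞) {u : ℕ → E → ℝ} {g : E → ℝ}
    (hu : ∀ j, AEStronglyMeasurable (u j) (volume : Measure E))
    (hg : AEStronglyMeasurable g (volume : Measure E))
    (h1 : Tendsto (fun j => eLpNorm (u j - g) Q volume) atTop (𝓝 0))
    (h2 : Tendsto (fun j => eLpNorm (u j) P volume) atTop (𝓝 0)) :
    g =ᵐ[volume] 0 := by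
  have m1 : TendstoInMeasure volume u atTop g :=
    tendstoInMeasure_of_tendsto_eLpNorm_of_ne_top hQ0 hQtop hu hg h1
  have m2 : TendstoInMeasure volume u atTop (0 : E → ℝ) :=
    tendstoInMeasure_of_tendsto_eLpNorm_of_ne_top hP0 hPtop hu aestronglyMeasurable_zero
      (by simpa using h2)
  obtain ⟨ns, hns_mono, hns⟩ := m1.exists_seq_tendsto_ae
  have m2' : TendstoInMeasure volume (fun i => u (ns i)) atTop (0 : E → ℝ) := by
    intro ε hε
    exact (m2 ε hε).comp hns_mono.tendsto_atTop
  obtain ⟨ms, hms_mono, hms⟩ := m2'.exists_seq_tendsto_ae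
  filter_upwards [hns, hms] with x hx1 hx2
  have hx1' : Tendsto (fun i => u (ns (ms i)) x) atTop (𝓝 (g x)) :=
    hx1.comp hms_mono.tendsto_atTop
  have := tendsto_nhds_unique hx1' hx2
  simpa using this

lemma tendsto_eLpNorm_restrict_far {Q : ℝ≥0∞} (hQ0 : Q ≠ 0) (hQtop : Q ≠ ∞)
    {f : E → ℝ} (hf : MemLp f Q (volume : Measure E)) (R : ℝ) :
    Tendsto (fun n : ℕ => eLpNorm f Q (volume.restrict {x : E | (n:ℝ) - R ≤ ‖x‖}))
      atTop (𝓝 0) := by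
  set S : ℕ → Set (EuclideanSpace ℝ (Fin N)) := fun n => {x | (n:ℝ) - R ≤ ‖x‖} with hS
  set G : E → ℝ≥0∞ := fun x => (‖f x‖₊ : ℝ≥0∞) ^ Q.toReal with hG
  set ν : Measure (EuclideanSpace ℝ (Fin N)) := volume.withDensity G with hν
  have hQR : 0 < Q.toReal := ENNReal.toReal_pos hQ0 hQtop
  have hSmeas : ∀ n : ℕ, MeasurableSet (S n) := fun n =>
    (isClosed_le continuous_const continuous_norm).measurableSet
  have hν_apply : ∀ n, ν (S n) = ∫⁻ x in S n, G x ∂volume := fun n =>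
    withDensity_apply G (hSmeas n)
  have hfin : ν Set.univ ≠ ∞ := by
    rw [hν, withDensity_apply G MeasurableSet.univ, Measure.restrict_univ]
    intro htop
    have h2 := hf.2
    rw [eLpNorm_eq_lintegral_rpow_enorm_toReal hQ0 hQtop] at h2
    simp only [enorm_eq_nnnorm] at h2
    rw [hG] at htop
    rw [htop, ENNReal.top_rpow_of_pos (by positivity)] at h2
    exact (lt_irrefl _ h2)
  have hmono : Antitone S := by
    intro a b hab x hx
    have : (a:ℝ) ≤ (b:ℝ) := by exact_mod_cast hab
    simp only [hS, Set.mem_setOf_eq] at hx ⊢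
    linarith
  have hiInter : ⋂ n : ℕ, S n = ∅ := by
    ext x
    simp only [Set.mem_iInter, Set.mem_empty_iff_false, iff_false, not_forall, hS,
      Set.mem_setOf_eq, not_le]
    obtain ⟨n, hn⟩ := exists_nat_gt (‖x‖ + R)
    exact ⟨n, by linarith⟩
  have hν_tendsto : Tendsto (fun n => ν (S n)) atTop (𝓝 0) := by
    have h := tendsto_measure_iInter_atTop (μ := ν)
      (fun n => (hSmeas n).nullMeasurableSet) hmono
      ⟨0, ne_top_of_le_ne_top hfin (measure_mono (Set.subset_univ _))⟩
    rw [hiInter] at h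
    simpa [Function.comp_def] using h
  have hrw : ∀ n, eLpNorm f Q (volume.restrict (S n)) = (ν (S n)) ^ (1/Q.toReal) := by
    intro n
    rw [eLpNorm_eq_lintegral_rpow_enorm_toReal hQ0 hQtop, hν_apply]
    simp only [enorm_eq_nnnorm, hG]
  refine Tendsto.congr (fun n => (hrw n).symm) ?_
  have hcont : Tendsto (fun z : ℝ≥0∞ => z ^ (1/Q.toReal)) (𝓝 0) (𝓝 0) := by
    have h := (ENNReal.continuous_rpow_const (y := 1/Q.toReal)).tendsto 0
    rwa [ENNReal.zero_rpow_of_pos (by positivity)] at h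
  exact hcont.comp hν_tendsto

end Stmt15
end ConvAux
section StepD
open MeasureTheory Filter Topology Finset
open scoped ENNReal
variable {N : ℕ}
local notation "E" => EuclideanSpace ℝ (Fin N)

namespace Stmt15

lemma ae_zero_of_deltaIter_zero {Q : ℝ≥0∞} (hQ1 : 1 ≤ Q) (hQtop : Q ≠ ∞)
    {f : E → ℝ} (hf : MemLp f Q (volume : Measure E)) {m : ℕ}
    {ξ : EuclideanSpace ℝ (Fin N)} (hξ : ‖ξ‖ = 1)
    (hz : ∀ n : ℕ, deltaIter (((n:ℝ)+1) • ξ) m f =ᵐ[volume] 0) :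
    f =ᵐ[volume] 0 := by
  have hQ0 : Q ≠ 0 := (lt_of_lt_of_le zero_lt_one hQ1).ne'
  set c : ℕ → ℝ := fun k => (-1:ℝ)^(m-k) * (m.choose k : ℝ) with hc
  set d : ℕ → ℝ := fun i => -(-1:ℝ)^m * c (i+1) with hd
  -- Step 1 : the a.e. identity expressing f via far translates
  have hstep1 : ∀ n : ℕ, ∀ᵐ x ∂(volume : Measure E),
      f x = ∑ i ∈ Finset.range m, d i * f (x + (i+1) • (((n:ℝ)+1) • ξ)) := by
    intro n
    filter_upwards [hz n] with x hx
    have hexp := deltaIter_eq_sum (((n:ℝ)+1) • ξ) m f x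
    rw [hx] at hexp
    rw [Finset.sum_range_succ'] at hexp
    simp only [Pi.zero_apply] at hexp
    have h0 : (-1:ℝ)^(m-0) * (m.choose 0 : ℝ) * f (x + 0 • (((n:ℝ)+1) • ξ))
        = (-1:ℝ)^m * f x := by simp
    rw [h0] at hexp
    have hsum : ∑ i ∈ Finset.range m, d i * f (x + (i+1) • (((n:ℝ)+1) • ξ))
        = (-(-1:ℝ)^m) * ∑ i ∈ Finset.range m,
            c (i+1) * f (x + (i+1) • (((n:ℝ)+1) • ξ)) := by
      rw [Finset.mul_sum]
      refine Finset.sum_congr rfl fun i _ => ?_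
      rw [hd]
      ring
    have h2 : ∑ i ∈ Finset.range m, c (i+1) * f (x + (i+1) • (((n:ℝ)+1) • ξ))
        = -((-1:ℝ)^m * f x) := by linarith [hexp]
    rw [hsum, h2, mul_neg, ← neg_mul, neg_neg, ← mul_assoc, ← mul_pow]
    norm_num
  -- Step 2 : eLpNorm of f on a ball is controlled by far tails
  have hstep2 : ∀ R : ℝ, 0 ≤ R →
      f =ᵐ[volume.restrict (Metric.closedBall (0 : EuclideanSpace ℝ (Fin N)) R)] 0 := by
    intro R hR
    set B : Set (EuclideanSpace ℝ (Fin N)) := Metric.closedBall 0 R with hB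
    set D : ℝ≥0∞ := ∑ i ∈ Finset.range m, (‖d i‖₊ : ℝ≥0∞) with hD
    have hDne : D ≠ ∞ := by
      rw [hD]
      exact (ENNReal.sum_lt_top.2 fun i _ => ENNReal.coe_lt_top).ne
    have hSmeas : ∀ n : ℕ, MeasurableSet {x : EuclideanSpace ℝ (Fin N) | (n:ℝ) - R ≤ ‖x‖} :=
      fun n => (isClosed_le continuous_const continuous_norm).measurableSet
    have hbound : ∀ n : ℕ, eLpNorm f Q (volume.restrict B)
        ≤ D * eLpNorm f Q (volume.restrict {x : EuclideanSpace ℝ (Fin N) | (n:ℝ) - R ≤ ‖x‖}) := by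
      intro n
      set S : Set (EuclideanSpace ℝ (Fin N)) := {x | (n:ℝ) - R ≤ ‖x‖} with hS
      have heq1 : eLpNorm f Q (volume.restrict B)
          = eLpNorm (fun x : EuclideanSpace ℝ (Fin N) => ∑ i ∈ Finset.range m,
              d i * f (x + (i+1) • (((n:ℝ)+1) • ξ))) Q (volume.restrict B) :=
        eLpNorm_congr_ae (ae_restrict_of_ae (hstep1 n))
      rw [heq1]
      have hrep : (fun x : EuclideanSpace ℝ (Fin N) => ∑ i ∈ Finset.range m,
            d i * f (x + (i+1) • (((n:ℝ)+1) • ξ)))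
          = ∑ i ∈ Finset.range m,
              (d i • fun x : EuclideanSpace ℝ (Fin N) => f (x + (i+1) • (((n:ℝ)+1) • ξ))) := by
        funext x
        simp [Finset.sum_apply]
      rw [hrep]
      refine (eLpNorm_sum_le (fun i _ => ((aesm_shift hf.1 _).restrict).const_smul _) hQ1).trans ?_
      rw [hD, Finset.sum_mul]
      refine Finset.sum_le_sum fun i _ => ?_
      rw [eLpNorm_const_smul]
      refine mul_le_mul_right ?_ _
      -- translate estimate
      set w : EuclideanSpace ℝ (Fin N) := (i+1) • (((n:ℝ)+1) • ξ) with hw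
      have hwnorm : ‖w‖ = ((i:ℝ)+1) * ((n:ℝ)+1) := by
        rw [hw]
        have : ((i+1 : ℕ) • (((n:ℝ)+1) • ξ) : EuclideanSpace ℝ (Fin N))
            = (((i:ℝ)+1) * ((n:ℝ)+1)) • ξ := by
          rw [← Nat.cast_smul_eq_nsmul ℝ (i+1), smul_smul]
          push_cast
          ring_nf
        have h1 : (0:ℝ) ≤ ((i:ℝ)+1) * ((n:ℝ)+1) := by positivity
        rw [this, norm_smul, hξ, mul_one, Real.norm_eq_abs, abs_of_nonneg h1]
      have hsubset : B ⊆ (fun x : EuclideanSpace ℝ (Fin N) => x + w) ⁻¹' S := by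
        intro x hx
        have hxB : ‖x‖ ≤ R := by
          simpa [hB, Metric.mem_closedBall, dist_zero_right] using hx
        have h1 : ‖w‖ ≤ ‖x + w‖ + ‖x‖ := by
          calc ‖w‖ = ‖(x + w) - x‖ := by rw [add_sub_cancel_left]
            _ ≤ ‖x + w‖ + ‖x‖ := norm_sub_le _ _
        have h2 : ((n:ℝ)+1) ≤ ‖w‖ := by
          rw [hwnorm]
          nlinarith [show (0:ℝ) ≤ (i:ℝ) from Nat.cast_nonneg i, show (0:ℝ) ≤ (n:ℝ) from Nat.cast_nonneg n]
        simp only [hS, Set.mem_preimage, Set.mem_setOf_eq]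
        linarith
      calc eLpNorm (fun x : EuclideanSpace ℝ (Fin N) => f (x + w)) Q (volume.restrict B)
          ≤ eLpNorm (fun x : EuclideanSpace ℝ (Fin N) => f (x + w)) Q
              (volume.restrict ((fun x : EuclideanSpace ℝ (Fin N) => x + w) ⁻¹' S)) :=
            eLpNorm_mono_measure _ (Measure.restrict_mono hsubset le_rfl)
        _ = eLpNorm f Q (volume.restrict S) :=
            eLpNorm_comp_measurePreserving (hf.1.restrict)
              ((measurePreserving_add_right volume w).restrict_preimage (hSmeas n))
    -- let n → ∞
    have htends : Tendsto (fun n : ℕ => D * eLpNorm f Q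
        (volume.restrict {x : EuclideanSpace ℝ (Fin N) | (n:ℝ) - R ≤ ‖x‖})) atTop (𝓝 0) := by
      have h := tendsto_eLpNorm_restrict_far hQ0 hQtop hf R
      have h2 := ENNReal.Tendsto.const_mul (a := D) h (Or.inr hDne)
      simpa using h2
    have hzero : eLpNorm f Q (volume.restrict B) ≤ 0 :=
      ge_of_tendsto htends (Filter.Eventually.of_forall hbound)
    have : eLpNorm f Q (volume.restrict B) = 0 := le_antisymm hzero (zero_le)
    exact (eLpNorm_eq_zero_iff (hf.1.restrict) hQ0).mp this
  -- Step 3 : glue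
  have hnull : ∀ r : ℕ, volume ({x : EuclideanSpace ℝ (Fin N) | f x ≠ 0}
      ∩ Metric.closedBall (0 : EuclideanSpace ℝ (Fin N)) r) = 0 := by
    intro r
    have h := hstep2 r (Nat.cast_nonneg r)
    rw [EventuallyEq, ae_iff] at h
    simp only [Pi.zero_apply] at h
    rwa [Measure.restrict_apply' measurableSet_closedBall] at h
  have hsub : {x : EuclideanSpace ℝ (Fin N) | f x ≠ 0}
      ⊆ ⋃ r : ℕ, ({x : EuclideanSpace ℝ (Fin N) | f x ≠ 0}
          ∩ Metric.closedBall (0 : EuclideanSpace ℝ (Fin N)) r) := by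
    intro x hx
    obtain ⟨r, hr⟩ := exists_nat_ge ‖x‖
    exact Set.mem_iUnion.2 ⟨r, hx, by simpa [Metric.mem_closedBall, dist_zero_right] using hr⟩
  have hmain : volume {x : EuclideanSpace ℝ (Fin N) | f x ≠ 0} = 0 := by
    refine le_antisymm ?_ (zero_le)
    refine le_trans (measure_mono hsub) ?_
    refine le_trans (measure_iUnion_le _) ?_
    simp [hnull]
  rw [EventuallyEq, ae_iff]
  simpa using hmain

end Stmt15
end StepD

open Stmt15


/-- A nonzero `L^q` function has `m`-th differences uniformly bounded below by `C t^m`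
in all directions, for small steps `t`. -/
theorem stmt15 {N : ℕ} (m : ℕ) (hm : 1 ≤ m) (p q : ℝ) (hp : 1 ≤ p) (hq : 1 ≤ q)
    (f : EuclideanSpace ℝ (Fin N) → ℝ)
    (hf : MemLp f (ENNReal.ofReal q) volume) (hne : ¬ f =ᵐ[volume] 0) :
    ∃ δ > (0 : ℝ), ∃ C > (0 : ℝ), ∀ t : ℝ, 0 < t → t < δ →
      ∀ ξ : EuclideanSpace ℝ (Fin N), ‖ξ‖ = 1 →
        ENNReal.ofReal (C * t ^ m) ≤
          eLpNorm (deltaIter (t • ξ) m f) (ENNReal.ofReal p) volume := by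
  classical
  set P : ℝ≥0∞ := ENNReal.ofReal p with hPdef
  set Q : ℝ≥0∞ := ENNReal.ofReal q with hQdef
  have hP1 : 1 ≤ P := ENNReal.one_le_ofReal.2 hp
  have hQ1 : 1 ≤ Q := ENNReal.one_le_ofReal.2 hq
  haveI : Fact (1 ≤ Q) := ⟨hQ1⟩
  have hP0 : P ≠ 0 := (lt_of_lt_of_le zero_lt_one hP1).ne'
  have hQ0 : Q ≠ 0 := (lt_of_lt_of_le zero_lt_one hQ1).ne'
  have hPtop : P ≠ ∞ := ENNReal.ofReal_ne_top
  have hQtop : Q ≠ ∞ := ENNReal.ofReal_ne_top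
  by_contra hcon
  push_neg at hcon
  have hex : ∀ n : ℕ, ∃ (t : ℝ) (ξ : EuclideanSpace ℝ (Fin N)), 0 < t ∧ t < 1/((n:ℝ)+1)
      ∧ ‖ξ‖ = 1 ∧ eLpNorm (deltaIter (t • ξ) m f) P volume
          < ENNReal.ofReal ((1/((n:ℝ)+1)) * t ^ m) := by
    intro n
    obtain ⟨t, ht0, htlt, ξ, hξ, hlt⟩ :=
      hcon (1/((n:ℝ)+1)) (by positivity) (1/((n:ℝ)+1)) (by positivity)
    exact ⟨t, ξ, ht0, htlt, hξ, hlt⟩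
  choose t ξ ht0 htlt hξnorm hlt using hex
  obtain ⟨ξ₀, hξ₀mem, φ, hφmono, hφtend⟩ :=
    (isCompact_sphere (0 : EuclideanSpace ℝ (Fin N)) 1).tendsto_subseq
      (fun n => mem_sphere_zero_iff_norm.mpr (hξnorm n))
  have hξ₀ : ‖ξ₀‖ = 1 := mem_sphere_zero_iff_norm.mp hξ₀mem
  have htphi0 : Tendsto (fun j => t (φ j)) atTop (𝓝 0) := by
    refine tendsto_of_tendsto_of_tendsto_of_le_of_le tendsto_const_nhds
      tendsto_one_div_add_atTop_nhds_zero_nat (fun j => (ht0 (φ j)).le) (fun j => ?_)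
    refine (htlt (φ j)).le.trans ?_
    have h1 : (j:ℝ) ≤ (φ j : ℝ) := by exact_mod_cast hφmono.le_apply
    exact one_div_le_one_div_of_le (by positivity) (by linarith)
  have hkey : ∀ n : ℕ, deltaIter (((n:ℝ)+1) • ξ₀) m f =ᵐ[volume] 0 := by
    intro n
    set s : ℝ := (n:ℝ) + 1 with hs_def
    have hs : 0 < s := by positivity
    set k : ℕ → ℕ := fun j => ⌈s / t (φ j)⌉₊ with hk
    set v : ℕ → EuclideanSpace ℝ (Fin N) := fun j => (k j) • (t (φ j) • ξ (φ j)) with hv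
    have hkt_lb : ∀ j, s ≤ (k j : ℝ) * t (φ j) := by
      intro j
      have h1 := Nat.le_ceil (s / t (φ j))
      have h2 : s / t (φ j) * t (φ j) = s := div_mul_cancel₀ s (ht0 (φ j)).ne'
      calc s = s / t (φ j) * t (φ j) := h2.symm
        _ ≤ (k j : ℝ) * t (φ j) := mul_le_mul_of_nonneg_right h1 (ht0 (φ j)).le
    have hkt_ub : ∀ j, (k j : ℝ) * t (φ j) < s + t (φ j) := by
      intro j
      have h1 : ((k j : ℕ) : ℝ) < s / t (φ j) + 1 :=
        Nat.ceil_lt_add_one (div_nonneg hs.le (ht0 (φ j)).le)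
      have h2 : (k j : ℝ) * t (φ j) < (s / t (φ j) + 1) * t (φ j) :=
        mul_lt_mul_of_pos_right h1 (ht0 (φ j))
      have h3 : (s / t (φ j) + 1) * t (φ j) = s + t (φ j) := by
        rw [add_mul, div_mul_cancel₀ s (ht0 (φ j)).ne', one_mul]
      linarith
    have hkt_tend : Tendsto (fun j => (k j : ℝ) * t (φ j)) atTop (𝓝 s) := by
      have hupper : Tendsto (fun j => s + t (φ j)) atTop (𝓝 s) := by
        simpa using tendsto_const_nhds.add htphi0
      exact tendsto_of_tendsto_of_tendsto_of_le_of_le tendsto_const_nhds hupper hkt_lb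
        (fun j => (hkt_ub j).le)
    have hvtend : Tendsto v atTop (𝓝 (s • ξ₀)) := by
      have hrw : ∀ j, v j = ((k j : ℝ) * t (φ j)) • ξ (φ j) := by
        intro j
        show (k j) • (t (φ j) • ξ (φ j)) = _
        rw [← Nat.cast_smul_eq_nsmul ℝ (k j), smul_smul]
      exact (hkt_tend.smul hφtend).congr fun j => (hrw j).symm
    have hPb : ∀ j, eLpNorm (deltaIter (v j) m f) P volume
        ≤ ENNReal.ofReal ((s+1)^m * (1/((j:ℝ)+1))) := by
      intro j
      refine (eLpNorm_deltaIter_nsmul_le hf.1 (k j) _ m hP1).trans ?_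
      have step1 : (k j : ℝ≥0∞)^m * eLpNorm (deltaIter (t (φ j) • ξ (φ j)) m f) P volume
          ≤ (k j : ℝ≥0∞)^m * ENNReal.ofReal ((1/((φ j : ℝ)+1)) * t (φ j) ^ m) :=
        mul_le_mul_right (hlt (φ j)).le _
      refine step1.trans ?_
      have hk_en : ((k j : ℝ≥0∞))^m = ENNReal.ofReal ((k j : ℝ)^m) := by
        rw [← ENNReal.ofReal_natCast, ← ENNReal.ofReal_pow (Nat.cast_nonneg _)]
      rw [hk_en, ← ENNReal.ofReal_mul (by positivity)]
      refine ENNReal.ofReal_le_ofReal ?_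
      have hts : t (φ j) ≤ 1 := by
        refine (htlt (φ j)).le.trans ?_
        rw [div_le_one (by positivity)]
        nlinarith [show (0:ℝ) ≤ (φ j : ℝ) from Nat.cast_nonneg _]
      have hktle : (k j : ℝ) * t (φ j) ≤ s + 1 := by
        have := hkt_ub j
        linarith
      have hphi_ge : (j:ℝ) + 1 ≤ (φ j : ℝ) + 1 := by
        have h1 : (j:ℝ) ≤ (φ j : ℝ) := by exact_mod_cast hφmono.le_apply
        linarith
      have e1 : (k j:ℝ)^m * ((1/((φ j:ℝ)+1)) * t (φ j)^m)
          = ((k j:ℝ) * t (φ j))^m * (1/((φ j:ℝ)+1)) := by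
        rw [mul_pow]
        ring
      rw [e1]
      have hb1 : ((k j:ℝ) * t (φ j))^m ≤ (s+1)^m :=
        pow_le_pow_left₀ (mul_nonneg (Nat.cast_nonneg _) (ht0 (φ j)).le) hktle m
      have hb2 : (1:ℝ)/((φ j:ℝ)+1) ≤ 1/((j:ℝ)+1) :=
        one_div_le_one_div_of_le (by positivity) hphi_ge
      exact mul_le_mul hb1 hb2 (by positivity) (by positivity)
    have hPtend : Tendsto (fun j => eLpNorm (deltaIter (v j) m f) P volume) atTop (𝓝 0) := by
      refine tendsto_of_tendsto_of_tendsto_of_le_of_le tendsto_const_nhds ?_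
        (fun j => zero_le) hPb
      have hreal : Tendsto (fun j : ℕ => (s+1)^m * (1/((j:ℝ)+1))) atTop (𝓝 0) := by
        have h := tendsto_one_div_add_atTop_nhds_zero_nat.const_mul ((s+1)^m)
        simpa [mul_comm] using h
      have h2 := ENNReal.tendsto_ofReal hreal
      simpa using h2
    have hQtend := tendsto_eLpNorm_deltaIter_sub (Q := Q) hQtop hf m hvtend
    exact ae_zero_of_tendsto hP0 hPtop hQ0 hQtop (fun j => aesm_deltaIter hf.1 _ m)
      (aesm_deltaIter hf.1 _ m) hQtend hPtend
  exact hne (ae_zero_of_deltaIter_zero hQ1 hQtop hf hξ₀ hkey)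
end

section
/- Let 1 ≤ p < ∞ and q > p. There is no finite constant K such that ‖f‖_{L^q(ℝ^N)} ≤ K Σ_{i=2}^N ‖∂_i f‖_{L^p(ℝ^N)} for all f ∈ W^{1,p}(ℝ^N) supported in the unit ball B(0,1) (N ≥ 2). -/
open MeasureTheory
open scoped ENNReal

noncomputable section Stmt18Aux

/-- Linear map on Euclidean space scaling coordinate `0` by `c`. -/
def Tmap (n : ℕ) (c : ℝ) :
    EuclideanSpace ℝ (Fin (n + 2)) →ₗ[ℝ] EuclideanSpace ℝ (Fin (n + 2)) where
  toFun x := WithLp.toLp 2 (fun i => if i = 0 then c * x i else x i)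
  map_add' x y := by
    ext i
    by_cases h : i = 0 <;> simp [h, mul_add]
  map_smul' r x := by
    ext i
    by_cases h : i = 0 <;> simp [h, smul_eq_mul] <;> ring

theorem Tmap_apply {n : ℕ} (c : ℝ) (x : EuclideanSpace ℝ (Fin (n + 2))) (i : Fin (n + 2)) :
    Tmap n c x i = if i = 0 then c * x i else x i := rfl

theorem Tmap_det {n : ℕ} (c : ℝ) : LinearMap.det (Tmap n c) = c := by
  classical
  rw [← LinearMap.det_toMatrix (EuclideanSpace.basisFun (Fin (n + 2)) ℝ).toBasis]
  have h : LinearMap.toMatrix (EuclideanSpace.basisFun (Fin (n + 2)) ℝ).toBasis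
      (EuclideanSpace.basisFun (Fin (n + 2)) ℝ).toBasis (Tmap n c)
      = Matrix.diagonal (fun i => if i = 0 then c else 1) := by
    ext i j
    rw [LinearMap.toMatrix_apply]
    simp only [OrthonormalBasis.coe_toBasis, OrthonormalBasis.coe_toBasis_repr_apply,
      EuclideanSpace.basisFun_apply, EuclideanSpace.basisFun_repr, Tmap_apply,
      EuclideanSpace.single_apply, Matrix.diagonal_apply]
    split_ifs <;> simp_all
  rw [h, Matrix.det_diagonal]
  simpa using Finset.prod_ite_eq' Finset.univ (0 : Fin (n + 2)) (fun _ => c)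

theorem Tmap_single {n : ℕ} (c : ℝ) {i : Fin (n + 2)} (hi : i ≠ 0) :
    Tmap n c (EuclideanSpace.single i 1) = EuclideanSpace.single i 1 := by
  ext j
  rw [Tmap_apply]
  split_ifs with h
  · subst h
    simp [EuclideanSpace.single_apply, Ne.symm hi]
  · rfl

theorem norm_le_norm_Tmap {n : ℕ} (c : ℝ) (hc : 1 ≤ |c|)
    (x : EuclideanSpace ℝ (Fin (n + 2))) : ‖x‖ ≤ ‖Tmap n c x‖ := by
  rw [EuclideanSpace.norm_eq, EuclideanSpace.norm_eq]
  apply Real.sqrt_le_sqrt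
  apply Finset.sum_le_sum
  intro i _
  rw [Tmap_apply]
  split_ifs with h
  · have h1 : ‖x i‖ ≤ ‖c * x i‖ := by
      rw [norm_mul, Real.norm_eq_abs c]
      nlinarith [norm_nonneg (x i)]
    exact pow_le_pow_left₀ (norm_nonneg _) h1 2
  · exact le_rfl

end Stmt18Aux

/-- There is no constant `K` such that `‖f‖_{L^q} ≤ K ∑_{i=2}^N ‖∂_i f‖_{L^p}` for all
`f ∈ W^{1,p}(ℝ^N)` supported in the unit ball, when `q > p ≥ 1` and `N ≥ 2`. -/
theorem stmt18 {n : ℕ} (p q : ℝ) (hp : 1 ≤ p) (hq : p < q) :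
    ¬ ∃ K : ℝ,
      ∀ f : EuclideanSpace ℝ (Fin (n + 2)) → ℝ, ContDiff ℝ 1 f →
        Function.support f ⊆ Metric.ball 0 1 →
        eLpNorm f (ENNReal.ofReal q) volume ≤
          ENNReal.ofReal K *
            ∑ i ∈ Finset.univ.erase (0 : Fin (n + 2)),
              eLpNorm (fun x => fderiv ℝ f x (EuclideanSpace.single i 1))
                (ENNReal.ofReal p) volume := by
  rintro ⟨K, hK⟩
  classical
  have hp0 : (0 : ℝ) < p := lt_of_lt_of_le one_pos hp
  have hq0 : (0 : ℝ) < q := hp0.trans hq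
  set q' := ENNReal.ofReal q with hq'
  set p' := ENNReal.ofReal p with hp'
  -- the bump function
  set φ : ContDiffBump (0 : EuclideanSpace ℝ (Fin (n + 2))) :=
    ⟨1/2, 1, by norm_num, by norm_num⟩ with hφ
  set Φ : EuclideanSpace ℝ (Fin (n + 2)) → ℝ := ⇑φ with hΦdef
  have hΦc : Continuous Φ := φ.continuous
  have hΦcd : ContDiff ℝ 1 Φ := φ.contDiff
  have hΦcs : HasCompactSupport Φ := by
    rw [HasCompactSupport, hΦdef, φ.tsupport_eq]
    exact isCompact_closedBall 0 1
  set A := eLpNorm Φ q' volume with hA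
  have hA0 : A ≠ 0 := by
    rw [hA, ne_eq, eLpNorm_eq_zero_iff hΦc.aestronglyMeasurable
      (by simp [hq', ENNReal.ofReal_eq_zero]; linarith)]
    intro h
    have heq : Φ = 0 := (hΦc.ae_eq_iff_eq volume continuous_const).mp h
    have h0 : Φ 0 = 1 := φ.one_of_mem_closedBall (by
      simp only [Metric.mem_closedBall, dist_self]
      exact φ.rIn_pos.le)
    rw [heq] at h0
    simpa using h0
  have hAtop : A ≠ ⊤ := (hΦc.memLp_of_hasCompactSupport hΦcs).eLpNorm_ne_top
  -- the partial derivatives of the bump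
  set D : Fin (n + 2) → EuclideanSpace ℝ (Fin (n + 2)) → ℝ :=
    fun i => fun y => fderiv ℝ Φ y (EuclideanSpace.single i 1) with hD
  have hDc : ∀ i, Continuous (D i) := fun i =>
    (hΦcd.continuous_fderiv one_ne_zero).clm_apply continuous_const
  have hDcs : ∀ i, HasCompactSupport (D i) := fun i => hΦcs.fderiv_apply ℝ _
  set S := ∑ i ∈ Finset.univ.erase (0 : Fin (n + 2)), eLpNorm (D i) p' volume with hS
  have hStop : S ≠ ⊤ := by
    rw [hS]
    refine (ENNReal.sum_lt_top.2 fun i _ => ?_).ne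
    exact ((hDc i).memLp_of_hasCompactSupport (hDcs i)).eLpNorm_lt_top
  set a := A.toReal with ha'
  have ha : 0 < a := ENNReal.toReal_pos hA0 hAtop
  set s := S.toReal with hs'
  set K₀ := (ENNReal.ofReal K).toReal with hK₀
  set d := p⁻¹ - q⁻¹ with hd'
  have hd0 : 0 < d := by
    rw [hd']
    have : q⁻¹ < p⁻¹ := by
      have := one_div_lt_one_div_of_lt hp0 hq
      simpa [one_div] using this
    linarith
  -- key scaling estimate
  have key : ∀ R : ℝ, 0 < R → R ≤ 1 → a ≤ K₀ * s * R ^ d := by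
    intro R hR0 hR1
    set c := R⁻¹ with hcdef
    have hc0 : c ≠ 0 := inv_ne_zero hR0.ne'
    set T := LinearMap.toContinuousLinearMap (Tmap n c) with hT
    have hTcoe : ⇑T = ⇑(Tmap n c) := rfl
    have hmap : Measure.map (⇑(Tmap n c)) volume
        = (ENNReal.ofReal R) • (volume : Measure (EuclideanSpace ℝ (Fin (n + 2)))) := by
      rw [Measure.map_linearMap_addHaar_eq_smul_addHaar volume (by rw [Tmap_det]; exact hc0)]
      rw [Tmap_det, hcdef, inv_inv, abs_of_pos hR0]
    have hTmeas : AEMeasurable (⇑(Tmap n c)) volume := by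
      rw [← hTcoe]; exact T.continuous.aemeasurable
    have comp_eLp : ∀ (g : EuclideanSpace ℝ (Fin (n + 2)) → ℝ), Continuous g → ∀ r : ℝ≥0∞,
        eLpNorm (g ∘ ⇑(Tmap n c)) r volume
          = (ENNReal.ofReal R) ^ (1 / r).toReal * eLpNorm g r volume := by
      intro g hg r
      have hgm : AEStronglyMeasurable g (Measure.map (⇑(Tmap n c)) volume) := by
        rw [hmap]
        exact hg.aestronglyMeasurable.mono_ac Measure.smul_absolutelyContinuous
      rw [← eLpNorm_map_measure hgm hTmeas, hmap,
        eLpNorm_smul_measure_of_ne_zero (by simpa using hR0) g r volume, smul_eq_mul]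
    -- the rescaled function
    set f : EuclideanSpace ℝ (Fin (n + 2)) → ℝ := Φ ∘ ⇑T with hf
    have hfc : ContDiff ℝ 1 f := hΦcd.comp T.contDiff
    have hsupp : Function.support f ⊆ Metric.ball 0 1 := by
      intro x hx
      have hTx : T x ∈ Function.support Φ := hx
      rw [hΦdef, φ.support_eq] at hTx
      rw [mem_ball_zero_iff] at hTx ⊢
      calc ‖x‖ ≤ ‖Tmap n c x‖ := by
            apply norm_le_norm_Tmap
            rw [hcdef, abs_of_pos (by positivity)]
            exact (one_le_inv₀ hR0).2 hR1
        _ < 1 := by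
            have : ‖T x‖ < φ.rOut := hTx
            simpa [hTcoe] using this
    have hineq := hK f hfc hsupp
    have hexp : ∀ r : ℝ, 0 < r → (1 / ENNReal.ofReal r).toReal = r⁻¹ := by
      intro r hr
      rw [one_div, ENNReal.toReal_inv, ENNReal.toReal_ofReal hr.le]
    have hLHS : eLpNorm f q' volume = (ENNReal.ofReal R) ^ q⁻¹ * A := by
      rw [hf, hTcoe, comp_eLp Φ hΦc q', hA, hq', hexp q hq0]
    have hder : ∀ i : Fin (n + 2), i ≠ 0 →
        (fun x => fderiv ℝ f x (EuclideanSpace.single i 1)) = (D i) ∘ ⇑(Tmap n c) := by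
      intro i hi
      funext x
      have h1 : fderiv ℝ f x = (fderiv ℝ Φ (T x)).comp (T : _ →L[ℝ] _) := by
        rw [hf, fderiv_comp x ((hΦcd.differentiable one_ne_zero).differentiableAt)
          T.differentiableAt, T.fderiv]
      rw [h1]
      simp only [ContinuousLinearMap.coe_comp', Function.comp_apply]
      have h2 : T (EuclideanSpace.single i 1) = EuclideanSpace.single i 1 := by
        show Tmap n c (EuclideanSpace.single i 1) = EuclideanSpace.single i 1
        exact Tmap_single c hi
      rw [h2]
      rfl
    have hRHS : ∀ i ∈ Finset.univ.erase (0 : Fin (n + 2)),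
        eLpNorm (fun x => fderiv ℝ f x (EuclideanSpace.single i 1)) p' volume
          = (ENNReal.ofReal R) ^ p⁻¹ * eLpNorm (D i) p' volume := by
      intro i hi
      rw [hder i (Finset.ne_of_mem_erase hi), hp', comp_eLp (D i) (hDc i) _, hexp p hp0]
    rw [hLHS, Finset.sum_congr rfl hRHS, ← Finset.mul_sum, ← hS] at hineq
    -- pass to real numbers
    have hRfin : (ENNReal.ofReal R) ^ p⁻¹ ≠ ⊤ :=
      ENNReal.rpow_ne_top_of_nonneg (by positivity) ENNReal.ofReal_ne_top
    have hfin : ENNReal.ofReal K * ((ENNReal.ofReal R) ^ p⁻¹ * S) ≠ ⊤ :=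
      ENNReal.mul_ne_top ENNReal.ofReal_ne_top (ENNReal.mul_ne_top hRfin hStop)
    have hre := ENNReal.toReal_mono hfin hineq
    rw [ENNReal.toReal_mul, ENNReal.toReal_mul, ENNReal.toReal_mul,
      ← ENNReal.toReal_rpow, ← ENNReal.toReal_rpow,
      ENNReal.toReal_ofReal hR0.le] at hre
    -- hre : R ^ q⁻¹ * a ≤ K₀ * (R ^ p⁻¹ * s)
    have hsplit : R ^ p⁻¹ = R ^ q⁻¹ * R ^ d := by
      rw [← Real.rpow_add hR0]
      congr 1
      rw [hd']
      ring
    rw [hsplit] at hre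
    have hpos : 0 < R ^ q⁻¹ := Real.rpow_pos_of_pos hR0 _
    have : R ^ q⁻¹ * a ≤ R ^ q⁻¹ * (K₀ * s * R ^ d) := by nlinarith [hre]
    exact le_of_mul_le_mul_left this hpos
  -- conclude by letting R → 0⁺
  have htend : Filter.Tendsto (fun R : ℝ => K₀ * s * R ^ d)
      (nhdsWithin 0 (Set.Ioi 0)) (nhds 0) := by
    have h1 : Filter.Tendsto (fun R : ℝ => R ^ d) (nhds 0) (nhds 0) := by
      have h2 := (Real.continuousAt_rpow_const 0 d (Or.inr hd0.le)).tendsto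
      simpa [Real.zero_rpow hd0.ne'] using h2
    have h3 := h1.const_mul (K₀ * s)
    simpa using h3.mono_left nhdsWithin_le_nhds
  have hev : ∀ᶠ R in nhdsWithin 0 (Set.Ioi 0), K₀ * s * R ^ d < a :=
    htend.eventually_lt_const ha
  have hmem : Set.Ioc (0 : ℝ) 1 ∈ nhdsWithin 0 (Set.Ioi 0) :=
    Ioc_mem_nhdsGT_of_mem (by constructor <;> norm_num)
  obtain ⟨R, hR1, hR2⟩ := (hev.and (Filter.eventually_of_mem hmem (fun x hx => hx))).exists
  exact absurd (key R hR2.1 hR2.2) (not_le.mpr hR1)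
end

section
/- Let f : ℝ^N → ℝ be a C^∞ function, m ≥ 1 an integer, and let χ_m := χ_1 ∗ ⋯ ∗ χ_1 (m-fold convolution of the indicator of [0,1]). Then for each h ∈ ℝ^N and x ∈ ℝ^N, Δ^m_h f(x) = ∫_0^m χ_m(t) D^m f(x + t h)(h,…,h) dt. -/
open MeasureTheory
open scoped ENNReal

/-- `chi m` is the `(m+1)`-fold convolution `χ_1 ∗ ⋯ ∗ χ_1` of the indicator of `[0,1]`
(the B-spline kernel `χ_{m+1}`). -/
noncomputable def chi : ℕ → ℝ → ℝ
  | 0 => Set.indicator (Set.Icc 0 1) 1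
  | m + 1 => fun x => ∫ t, chi m t * Set.indicator (Set.Icc (0 : ℝ) 1) 1 (x - t)

-- basic chi lemmas
lemma ind_eq (x t : ℝ) : Set.indicator (Set.Icc (0 : ℝ) 1) 1 (x - t)
    = Set.indicator (Set.Icc (x - 1) x) (fun _ => (1:ℝ)) t := by
  by_cases h : t ∈ Set.Icc (x-1) x
  · rw [Set.indicator_of_mem h]
    rw [Set.indicator_of_mem]
    · rfl
    · obtain ⟨h1, h2⟩ := h
      constructor <;> [linarith; linarith]
  · rw [Set.indicator_of_notMem h, Set.indicator_of_notMem]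
    intro ⟨h1, h2⟩
    exact h ⟨by linarith, by linarith⟩

lemma chi_succ (m : ℕ) (x : ℝ) :
    chi (m+1) x = ∫ u in (x-1)..x, chi m u := by
  have : ∀ t, chi m t * Set.indicator (Set.Icc (0 : ℝ) 1) 1 (x - t)
      = Set.indicator (Set.Icc (x-1) x) (chi m) t := by
    intro t
    rw [ind_eq]
    by_cases h : t ∈ Set.Icc (x-1) x
    · rw [Set.indicator_of_mem h, Set.indicator_of_mem h, mul_one]
    · rw [Set.indicator_of_notMem h, Set.indicator_of_notMem h, mul_zero]
  rw [show chi (m+1) x = ∫ t, chi m t * Set.indicator (Set.Icc (0 : ℝ) 1) 1 (x - t) from rfl]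
  simp_rw [this]
  rw [MeasureTheory.integral_indicator measurableSet_Icc,
    intervalIntegral.integral_of_le (by linarith : x - 1 ≤ x),
    ← MeasureTheory.integral_Icc_eq_integral_Ioc]

lemma chi_basic (m : ℕ) : Measurable (chi m) ∧ (∀ x, 0 ≤ chi m x) ∧ (∀ x, chi m x ≤ 1) := by
  induction m with
  | zero =>
    refine ⟨(measurable_const.indicator measurableSet_Icc), fun x => ?_, fun x => ?_⟩
    · exact Set.indicator_nonneg (fun _ _ => zero_le_one) x
    · by_cases h : x ∈ Set.Icc (0:ℝ) 1
      · rw [show chi 0 = Set.indicator (Set.Icc (0:ℝ) 1) 1 from rfl, Set.indicator_of_mem h]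
        exact le_refl _
      · rw [show chi 0 = Set.indicator (Set.Icc (0:ℝ) 1) 1 from rfl, Set.indicator_of_notMem h]
        exact zero_le_one
  | succ m ih =>
    obtain ⟨hmeas, hnn, hle⟩ := ih
    have hint : ∀ a b : ℝ, IntervalIntegrable (chi m) volume a b := by
      intro a b
      constructor <;>
      · apply Measure.integrableOn_of_bounded (M := 1) (by simp) hmeas.aestronglyMeasurable
        filter_upwards with x
        rw [Real.norm_eq_abs, abs_le]
        exact ⟨by linarith [hnn x], hle x⟩
    have hcont : Continuous (chi (m+1)) := by
      have h1 := intervalIntegral.continuous_primitive hint 0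
      have : chi (m+1) = fun x => (∫ u in (0:ℝ)..x, chi m u) - ∫ u in (0:ℝ)..(x-1), chi m u := by
        funext x
        rw [chi_succ]
        rw [← intervalIntegral.integral_add_adjacent_intervals (hint 0 (x-1)) (hint (x-1) x)]
        ring
      rw [this]
      exact (h1.sub (h1.comp (continuous_id.sub continuous_const)))
    refine ⟨hcont.measurable, fun x => ?_, fun x => ?_⟩
    · rw [chi_succ]
      apply intervalIntegral.integral_nonneg (by linarith)
      intro u _
      exact hnn u
    · rw [chi_succ]
      calc (∫ u in (x-1)..x, chi m u) ≤ ∫ _u in (x-1)..x, (1:ℝ) := by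
            apply intervalIntegral.integral_mono_on (by linarith) (hint _ _)
              intervalIntegrable_const
            intro u _
            exact hle u
        _ = 1 := by simp

lemma chi_supp (m : ℕ) : ∀ x : ℝ, x ∉ Set.Icc (0:ℝ) (m+1) → chi m x = 0 := by
  induction m with
  | zero =>
    intro x hx
    rw [show chi 0 = Set.indicator (Set.Icc (0:ℝ) 1) 1 from rfl, Set.indicator_of_notMem]
    simpa using hx
  | succ m ih =>
    intro x hx
    rw [Set.mem_Icc, not_and_or, not_le, not_le] at hx
    rw [chi_succ]
    rw [show (0:ℝ) = ∫ u in (x-1)..x, (0:ℝ) by simp]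
    apply intervalIntegral.integral_congr
    intro u hu
    rw [Set.uIcc_of_le (by linarith : x - 1 ≤ x), Set.mem_Icc] at hu
    apply ih
    rw [Set.mem_Icc, not_and_or, not_le, not_le]
    push_cast at hx ⊢
    rcases hx with hx | hx
    · left; linarith [hu.2]
    · right; linarith [hu.1]

/-- An integral over ℝ of a function supported in `[0, M]` equals the interval integral. -/
lemma integral_eq_intervalIntegral_of_supp {f : ℝ → ℝ} {M : ℝ} (hM : 0 ≤ M)
    (hsupp : ∀ x, x ∉ Set.Icc (0:ℝ) M → f x = 0) :
    (∫ x, f x) = ∫ x in (0:ℝ)..M, f x := by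
  rw [intervalIntegral.integral_of_le hM, ← MeasureTheory.integral_indicator measurableSet_Ioc]
  apply MeasureTheory.integral_congr_ae
  rw [Filter.eventuallyEq_iff_exists_mem]
  refine ⟨{(0:ℝ)}ᶜ, ?_, ?_⟩
  · rw [mem_ae_iff, compl_compl]
    exact measure_singleton 0
  · intro x hx
    by_cases h : x ∈ Set.Ioc (0:ℝ) M
    · rw [Set.indicator_of_mem h]
    · rw [Set.indicator_of_notMem h]
      apply hsupp
      rw [Set.mem_Ioc, not_and_or, not_lt, not_le] at h
      rw [Set.mem_Icc, not_and_or, not_le, not_le]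
      rcases h with h | h
      · left
        rcases lt_or_eq_of_le h with h' | h'
        · exact h'
        · exact absurd h' (by simpa using hx)
      · right; exact h

lemma deltaIter_succ' {E : Type*} [AddCommGroup E] (h : E) (m : ℕ) (f : E → ℝ) (x : E) :
    deltaIter h (m+1) f x = deltaIter h m (fun y => f (y + h) - f y) x := by
  induction m generalizing x with
  | zero => rfl
  | succ m ih =>
    show deltaIter h (m+1) f (x + h) - deltaIter h (m+1) f x = _
    rw [ih, ih]
    rfl

lemma deltaIter_line {N : ℕ} (f : EuclideanSpace ℝ (Fin N) → ℝ)
    (h x : EuclideanSpace ℝ (Fin N)) (m : ℕ) (t : ℝ) :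
    deltaIter (1:ℝ) m (fun s => f (x + s • h)) t = deltaIter h m f (x + t • h) := by
  induction m generalizing t with
  | zero => rfl
  | succ m ih =>
    show deltaIter (1:ℝ) m _ (t + 1) - deltaIter (1:ℝ) m _ t = _
    rw [ih, ih]
    show _ = deltaIter h m f (x + t • h + h) - deltaIter h m f (x + t • h)
    congr 2
    rw [add_smul, one_smul, add_assoc]

lemma hasDerivAt_line {N : ℕ} (f : EuclideanSpace ℝ (Fin N) → ℝ) (hf : ContDiff ℝ (⊤ : ℕ∞) f)
    (h x : EuclideanSpace ℝ (Fin N)) (n : ℕ) (t : ℝ) :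
    HasDerivAt (fun s : ℝ => iteratedFDeriv ℝ n f (x + s • h) (fun _ => h))
      (iteratedFDeriv ℝ (n+1) f (x + t • h) (fun _ => h)) t := by
  set y := x + t • h with hy
  have hc : HasDerivAt (fun s : ℝ => x + s • h) h t := by
    simpa using ((hasDerivAt_id t).smul_const h).const_add x
  have hdiff : Differentiable ℝ (iteratedFDeriv ℝ n f) :=
    hf.differentiable_iteratedFDeriv (WithTop.coe_lt_coe.2 (ENat.coe_lt_top n))
  have hd : HasFDerivAt (iteratedFDeriv ℝ n f) (fderiv ℝ (iteratedFDeriv ℝ n f) y) y :=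
    (hdiff y).hasFDerivAt
  have hcomp := hd.comp_hasDerivAt t hc
  have := ((ContinuousMultilinearMap.apply ℝ (fun _ : Fin n => EuclideanSpace ℝ (Fin N)) ℝ
    (fun _ => h)).hasFDerivAt.comp_hasDerivAt t hcomp)
  have heq : iteratedFDeriv ℝ (n+1) f y (fun _ => h)
      = (ContinuousMultilinearMap.apply ℝ (fun _ : Fin n => EuclideanSpace ℝ (Fin N)) ℝ
        (fun _ => h)) (fderiv ℝ (iteratedFDeriv ℝ n f) y h) := by
    rw [iteratedFDeriv_succ_apply_left]
    rfl
  rw [heq]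
  exact this

lemma iteratedDeriv_line {N : ℕ} (f : EuclideanSpace ℝ (Fin N) → ℝ) (hf : ContDiff ℝ (⊤ : ℕ∞) f)
    (h x : EuclideanSpace ℝ (Fin N)) (n : ℕ) (t : ℝ) :
    iteratedDeriv n (fun s : ℝ => f (x + s • h)) t
      = iteratedFDeriv ℝ n f (x + t • h) (fun _ => h) := by
  induction n generalizing t with
  | zero => simp [iteratedDeriv_zero]
  | succ n ih =>
    rw [iteratedDeriv_succ]
    have : iteratedDeriv n (fun s : ℝ => f (x + s • h))
        = fun t => iteratedFDeriv ℝ n f (x + t • h) (fun _ => h) := funext ih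
    rw [this]
    exact (hasDerivAt_line f hf h x n t).deriv

lemma ind_eq' (x s : ℝ) : Set.indicator (Set.Icc (0 : ℝ) 1) 1 (x - s)
    = Set.indicator (Set.Icc s (s+1)) (fun _ => (1:ℝ)) x := by
  by_cases h : x ∈ Set.Icc s (s+1)
  · rw [Set.indicator_of_mem h, Set.indicator_of_mem]
    · rfl
    · obtain ⟨h1, h2⟩ := h
      exact ⟨by linarith, by linarith⟩
  · rw [Set.indicator_of_notMem h, Set.indicator_of_notMem]
    intro ⟨h1, h2⟩
    exact h ⟨by linarith, by linarith⟩

lemma fubini_step (m : ℕ) (G G' : ℝ → ℝ) (hG : ∀ y, HasDerivAt G (G' y) y)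
    (hG' : Continuous G') :
    (∫ t in (0:ℝ)..((m:ℝ)+2), chi (m+1) t * G' t)
      = ∫ s in (0:ℝ)..((m:ℝ)+1), chi m s * (G (s+1) - G s) := by
  obtain ⟨hmeas, hnn, hle⟩ := chi_basic m
  -- bound for G' on [0, m+2]
  obtain ⟨C, hC⟩ := (isCompact_Icc (a := (0:ℝ)) (b := (m:ℝ)+2)).exists_bound_of_continuousOn
    hG'.continuousOn
  set C' : ℝ := max C 0 with hC'
  have hC'0 : 0 ≤ C' := le_max_right _ _
  have hCb : ∀ x ∈ Set.Icc (0:ℝ) ((m:ℝ)+2), ‖G' x‖ ≤ C' := fun x hx =>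
    (hC x hx).trans (le_max_left _ _)
  set ind : ℝ → ℝ := Set.indicator (Set.Icc (0 : ℝ) 1) 1 with hind
  have hind_meas : Measurable ind := measurable_const.indicator measurableSet_Icc
  have hind_nn : ∀ x, 0 ≤ ind x := fun x => Set.indicator_nonneg (fun _ _ => zero_le_one) x
  have hind_le : ∀ x, ind x ≤ 1 := by
    intro x
    by_cases h : x ∈ Set.Icc (0:ℝ) 1
    · rw [hind, Set.indicator_of_mem h]; exact le_refl _
    · rw [hind, Set.indicator_of_notMem h]; exact zero_le_one
  -- the 2-variable function
  set F : ℝ × ℝ → ℝ := fun p => chi m p.2 * ind (p.1 - p.2) * G' p.1 with hF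
  have hFmeas : Measurable F :=
    ((hmeas.comp measurable_snd).mul
      (hind_meas.comp (measurable_fst.sub measurable_snd))).mul
      (hG'.measurable.comp measurable_fst)
  have hbox : MeasurableSet (Set.Icc (0:ℝ) ((m:ℝ)+2) ×ˢ Set.Icc (0:ℝ) ((m:ℝ)+1)) :=
    measurableSet_Icc.prod measurableSet_Icc
  have hdom : Integrable
      ((Set.Icc (0:ℝ) ((m:ℝ)+2) ×ˢ Set.Icc (0:ℝ) ((m:ℝ)+1)).indicator (fun _ => C'))
      (volume.prod volume) := by
    rw [integrable_indicator_iff hbox]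
    refine integrableOn_const ?_ (by simp)
    rw [Measure.prod_prod]
    exact (ENNReal.mul_lt_top (by simp) (by simp)).ne
  have hFbound : ∀ p : ℝ × ℝ, ‖F p‖ ≤
      (Set.Icc (0:ℝ) ((m:ℝ)+2) ×ˢ Set.Icc (0:ℝ) ((m:ℝ)+1)).indicator (fun _ => C') p := by
    rintro ⟨x, s⟩
    by_cases hp : (x, s) ∈ Set.Icc (0:ℝ) ((m:ℝ)+2) ×ˢ Set.Icc (0:ℝ) ((m:ℝ)+1)
    · rw [Set.indicator_of_mem hp]
      obtain ⟨hx, hs⟩ := hp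
      calc ‖F (x, s)‖ = |chi m s| * |ind (x - s)| * |G' x| := by
            rw [hF]; simp [Real.norm_eq_abs, abs_mul]
        _ ≤ 1 * 1 * C' := by
            apply mul_le_mul (mul_le_mul ?_ ?_ (abs_nonneg _) zero_le_one) ?_ (abs_nonneg _)
              (by norm_num)
            · rw [abs_of_nonneg (hnn s)]; exact hle s
            · rw [abs_of_nonneg (hind_nn _)]; exact hind_le _
            · rw [← Real.norm_eq_abs]; exact hCb x hx
        _ = C' := by ring
    · rw [Set.indicator_of_notMem hp]
      rw [Set.mem_prod, not_and_or] at hp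
      have : F (x, s) = 0 := by
        rcases hp with hp | hp
        · -- x ∉ [0, m+2]; if chi m s ≠ 0 then s ∈ [0,m+1]; and ind (x-s) = 0
          by_cases hs : s ∈ Set.Icc (0:ℝ) ((m:ℝ)+1)
          · have : ind (x - s) = 0 := by
              rw [hind, Set.indicator_of_notMem]
              intro ⟨h1, h2⟩
              rw [Set.mem_Icc, not_and_or, not_le, not_le] at hp
              obtain ⟨hs1, hs2⟩ := hs
              rcases hp with hp | hp <;> [linarith; linarith]
            rw [hF]; simp [this]
          · have : chi m s = 0 := chi_supp m s (by push_cast; exact hs)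
            rw [hF]; simp [this]
        · have : chi m s = 0 := chi_supp m s (by push_cast; exact hp)
          rw [hF]; simp [this]
      rw [this, norm_zero]
  have hFint : Integrable F (volume.prod volume) :=
    Integrable.mono' hdom hFmeas.aestronglyMeasurable (Filter.Eventually.of_forall hFbound)
  -- Step 1: LHS as integral over ℝ
  have supp1 : ∀ x : ℝ, x ∉ Set.Icc (0:ℝ) ((m:ℝ)+2) → chi (m+1) x * G' x = 0 := by
    intro x hx
    have : chi (m+1) x = 0 := chi_supp (m+1) x
      (by push_cast; rw [show (m:ℝ)+1+1 = (m:ℝ)+2 by ring]; exact hx)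
    rw [this, zero_mul]
  rw [← integral_eq_intervalIntegral_of_supp (by positivity) supp1]
  -- Step 2: unfold chi (m+1) and push the multiplication inside
  have step2 : ∀ x : ℝ, chi (m+1) x * G' x = ∫ s, F (x, s) := by
    intro x
    rw [show chi (m+1) x = ∫ s, chi m s * ind (x - s) from rfl, ← integral_mul_const]
  simp_rw [step2]
  rw [MeasureTheory.integral_integral_swap (by exact hFint)]
  -- Step 3: inner integral
  have step3 : ∀ s : ℝ, (∫ x, F (x, s)) = chi m s * (G (s+1) - G s) := by
    intro s
    have : ∀ x : ℝ, F (x, s) = chi m s * (Set.indicator (Set.Icc s (s+1))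
        (fun _ => (1:ℝ)) x * G' x) := by
      intro x
      rw [hF, hind]
      simp only [ind_eq', mul_assoc]
    simp_rw [this]
    rw [MeasureTheory.integral_const_mul]
    congr 1
    have : ∀ x : ℝ, Set.indicator (Set.Icc s (s+1)) (fun _ => (1:ℝ)) x * G' x
        = Set.indicator (Set.Icc s (s+1)) G' x := by
      intro x
      by_cases h : x ∈ Set.Icc s (s+1)
      · rw [Set.indicator_of_mem h, Set.indicator_of_mem h, one_mul]
      · rw [Set.indicator_of_notMem h, Set.indicator_of_notMem h, zero_mul]
    simp_rw [this]
    rw [MeasureTheory.integral_indicator measurableSet_Icc,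
      MeasureTheory.integral_Icc_eq_integral_Ioc,
      ← intervalIntegral.integral_of_le (by linarith : s ≤ s + 1)]
    exact intervalIntegral.integral_eq_sub_of_hasDerivAt (fun y _ => hG y)
      (hG'.intervalIntegrable s (s+1))
  simp_rw [step3]
  have hsupp2 : ∀ s : ℝ, s ∉ Set.Icc (0:ℝ) ((m:ℝ)+1) → chi m s * (G (s+1) - G s) = 0 := by
    intro s hs
    rw [chi_supp m s (by push_cast; exact hs), zero_mul]
  exact integral_eq_intervalIntegral_of_supp (M := (m:ℝ)+1) (by positivity) hsupp2


lemma iteratedDeriv_sub' {n : ℕ} {A B : ℝ → ℝ} (hA : ContDiff ℝ (n : ℕ∞) A)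
    (hB : ContDiff ℝ (n : ℕ∞) B) (y : ℝ) :
    iteratedDeriv n (fun z => A z - B z) y = iteratedDeriv n A y - iteratedDeriv n B y := by
  simp only [iteratedDeriv_eq_iteratedFDeriv]
  have h1 : (fun z => A z - B z) = A + (-B) := by
    funext z; simp [sub_eq_add_neg]
  rw [h1, iteratedFDeriv_add_apply (by exact_mod_cast hA.contDiffAt) (by exact_mod_cast hB.neg.contDiffAt)]
  simp [iteratedFDeriv_neg_apply, sub_eq_add_neg]

lemma key1d (m : ℕ) : ∀ (g : ℝ → ℝ), ContDiff ℝ (⊤ : ℕ∞) g → ∀ a : ℝ,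
    deltaIter (1:ℝ) (m+1) g a
      = ∫ t in (0:ℝ)..((m:ℝ)+1), chi m t * iteratedDeriv (m+1) g (a + t) := by
  induction m with
  | zero =>
    intro g hg a
    have hcongr : ∀ t ∈ Set.uIcc (0:ℝ) 1,
        chi 0 t * iteratedDeriv 1 g (a + t) = iteratedDeriv 1 g (a + t) := by
      intro t ht
      rw [Set.uIcc_of_le (by norm_num : (0:ℝ) ≤ 1)] at ht
      rw [show chi 0 t = Set.indicator (Set.Icc (0:ℝ) 1) 1 t from rfl,
        Set.indicator_of_mem ht, Pi.one_apply, one_mul]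
    rw [show ((0:ℕ):ℝ) + 1 = 1 by norm_num]
    rw [intervalIntegral.integral_congr hcongr]
    rw [intervalIntegral.integral_comp_add_left (fun u => iteratedDeriv 1 g u) a]
    rw [iteratedDeriv_one]
    rw [intervalIntegral.integral_deriv_eq_sub
      (fun y _ => (hg.differentiable (by simp)).differentiableAt)
      ((hg.continuous_iteratedDeriv 1 (by simp)).intervalIntegrable _ _ |>.congr ?_)]
    · show deltaIter (1:ℝ) 1 g a = g (a + 1) - g (a + 0)
      rw [add_zero]
      rfl
    · intro y _
      rw [iteratedDeriv_one]
  | succ m ih =>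
    intro g hg a
    rw [deltaIter_succ']
    have hΔ : ContDiff ℝ (⊤ : ℕ∞) (fun y : ℝ => g (y + 1) - g y) :=
      (hg.comp (contDiff_id.add contDiff_const)).sub hg
    rw [ih _ hΔ a]
    have hdiffeq : ∀ t : ℝ, iteratedDeriv (m+1) (fun y : ℝ => g (y + 1) - g y) (a + t)
        = iteratedDeriv (m+1) g (a + t + 1) - iteratedDeriv (m+1) g (a + t) := by
      intro t
      have hA : ContDiff ℝ ((m+1 : ℕ) : ℕ∞) (fun y : ℝ => g (y + 1)) :=
        (hg.comp (contDiff_id.add contDiff_const)).of_le (by exact_mod_cast le_top)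
      rw [iteratedDeriv_sub' hA (hg.of_le (by exact_mod_cast le_top))]
      congr 1
      exact congrFun (iteratedDeriv_comp_add_const (m+1) g 1) (a + t)
    have hG : ∀ y : ℝ, HasDerivAt (fun z : ℝ => iteratedDeriv (m+1) g (a + z))
        (iteratedDeriv (m+2) g (a + y)) y := by
      intro y
      have hdiff : DifferentiableAt ℝ (iteratedDeriv (m+1) g) (a + y) :=
        hg.differentiable_iteratedDeriv (m+1)
          (WithTop.coe_lt_coe.2 (ENat.coe_lt_top _)) (a + y)
      have h1 : HasDerivAt (iteratedDeriv (m+1) g)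
          (iteratedDeriv (m+2) g (a + y)) (a + y) := by
        rw [show iteratedDeriv (m+2) g = deriv (iteratedDeriv (m+1) g) from iteratedDeriv_succ]
        exact hdiff.hasDerivAt
      exact h1.comp_const_add a y
    have hG' : Continuous (fun z : ℝ => iteratedDeriv (m+2) g (a + z)) :=
      (hg.continuous_iteratedDeriv (m+2) (WithTop.coe_le_coe.2 le_top)).comp (continuous_const.add continuous_id)
    have hfub := fubini_step m (fun z => iteratedDeriv (m+1) g (a + z))
      (fun z => iteratedDeriv (m+2) g (a + z)) hG hG'
    push_cast
    rw [show (m:ℝ) + 1 + 1 = (m:ℝ) + 2 by ring]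
    rw [show (m + 1 + 1) = m + 2 from rfl, hfub]
    congr 1
    funext s
    rw [hdiffeq s]
    congr 2
    ring


/-- For smooth `f`, `Δ^m_h f(x) = ∫_0^m χ_m(t) D^m f(x + t h)(h,…,h) dt`. -/
theorem stmt19 {N : ℕ} (f : EuclideanSpace ℝ (Fin N) → ℝ) (hf : ContDiff ℝ (⊤ : ℕ∞) f)
    (m : ℕ) (hm : 1 ≤ m) (h x : EuclideanSpace ℝ (Fin N)) :
    deltaIter h m f x =
      ∫ t in (0 : ℝ)..(m : ℝ),
        chi (m - 1) t * iteratedFDeriv ℝ m f (x + t • h) (fun _ => h) := by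
  obtain ⟨k, rfl⟩ : ∃ k, m = k + 1 := ⟨m - 1, (Nat.succ_pred_eq_of_pos hm).symm⟩
  set g : ℝ → ℝ := fun t => f (x + t • h) with hgdef
  have hg : ContDiff ℝ (⊤ : ℕ∞) g :=
    hf.comp (contDiff_const.add (contDiff_id.smul contDiff_const))
  have h1 : deltaIter h (k+1) f x = deltaIter (1:ℝ) (k+1) g 0 := by
    rw [deltaIter_line f h x (k+1) 0]
    congr 1
    simp
  rw [h1, key1d k g hg 0]
  rw [show (k + 1 - 1) = k from rfl]
  rw [show ((k+1:ℕ):ℝ) = (k:ℝ) + 1 by push_cast; ring]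
  congr 1
  funext t
  congr 1
  rw [zero_add]
  exact iteratedDeriv_line f hf h x (k+1) t
end
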